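/- arXiv:0704.1217 — 6 statements merged into one kernel-verified Lean document; each statement's English description precedes it below -/
import Mathlib

section
/- Let P ≥ 1, let a ∈ ℤ^n, and let r ∈ ℕ with r ≤ P. Let F be a real-valued function on ℝ^n all of whose first order partial derivatives exist and are continuous on the box R := [−P,P]^n, and set M_F := sup_{x ∈ R} max_{1≤i≤n} |∂F/∂x_i (x)|. Then Σ_{x ∈ ℤ^n ∩ R, x ≡ a (mod r)} e(F(x)) = r^{−n} ∫_R e(F(t)) dt + O_n( P^{n−1}(1 + P·M_F) / r^{n−1} ), where the implied constant depends only on n. -/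
open MeasureTheory Real

set_option maxHeartbeats 1000000
open MeasureTheory Real

noncomputable section ExpSumAux

def resSet (P : ℝ) (a : ℤ) (r : ℕ) : Finset ℤ :=
  (Finset.Icc ⌈-P⌉ ⌊P⌋).filter fun k => (r:ℤ) ∣ k - a

def uSet1 (P : ℝ) (a : ℤ) (r : ℕ) : Set ℝ :=
  ⋃ k ∈ resSet P a r, Set.Ico (k:ℝ) ((k:ℝ) + r)

lemma mem_resSet {P : ℝ} {a k : ℤ} {r : ℕ} :
    k ∈ resSet P a r ↔ ((-P ≤ (k:ℝ) ∧ (k:ℝ) ≤ P) ∧ (r:ℤ) ∣ k - a) := by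
  simp [resSet, Int.ceil_le, Int.le_floor, and_assoc]

lemma measurableSet_uSet1 {P : ℝ} {a : ℤ} {r : ℕ} : MeasurableSet (uSet1 P a r) :=
  (resSet P a r).measurableSet_biUnion fun _ _ => measurableSet_Ico

lemma uSet1_subset {P : ℝ} {a : ℤ} {r : ℕ} : uSet1 P a r ⊆ Set.Ico (-P) (P + r) := by
  intro t ht
  rw [uSet1, Set.mem_iUnion₂] at ht
  obtain ⟨k, hk, htk⟩ := ht
  obtain ⟨⟨h1, h2⟩, _⟩ := mem_resSet.mp hk
  exact ⟨le_trans h1 htk.1, lt_of_lt_of_le htk.2 (by linarith)⟩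

lemma mem_uSet1 {P : ℝ} {a : ℤ} {r : ℕ} (hr : 1 ≤ r) {t : ℝ}
    (h1 : -P + r ≤ t) (h2 : t ≤ P) : t ∈ uSet1 P a r := by
  have hr0 : (0:ℝ) < r := by exact_mod_cast hr
  set k : ℤ := a + r * ⌊(t - a) / r⌋ with hk
  have hk1 : (k:ℝ) ≤ t := by
    have := Int.floor_le ((t - a) / r)
    have h := mul_le_mul_of_nonneg_left this (le_of_lt hr0)
    rw [mul_div_cancel₀ _ (ne_of_gt hr0)] at h
    push_cast [hk]; linarith
  have hk2 : t < (k:ℝ) + r := by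
    have := Int.lt_floor_add_one ((t - a) / r)
    have h := mul_lt_mul_of_pos_left this hr0
    rw [mul_div_cancel₀ _ (ne_of_gt hr0)] at h
    push_cast [hk]; linarith
  have hkmem : k ∈ resSet P (a) r := by
    rw [mem_resSet]
    refine ⟨⟨by linarith, by linarith⟩, ⟨⌊(t - a) / r⌋, by rw [hk]; ring⟩⟩
  rw [uSet1, Set.mem_iUnion₂]
  exact ⟨k, hkmem, hk1, hk2⟩

lemma icc_diff_uSet1 {P : ℝ} {a : ℤ} {r : ℕ} (hr : 1 ≤ r) :
    Set.Icc (-P) P \ uSet1 P a r ⊆ Set.Ico (-P) (-P + r) := by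
  intro t ⟨⟨ht1, ht2⟩, ht3⟩
  refine ⟨ht1, ?_⟩
  by_contra h
  push_neg at h
  exact ht3 (mem_uSet1 hr h ht2)

lemma pairwise_resSet {P : ℝ} {a : ℤ} {r : ℕ} (hr : 1 ≤ r) :
    (↑(resSet P a r) : Set ℤ).PairwiseDisjoint (fun k => Set.Ico (k:ℝ) ((k:ℝ) + r)) := by
  intro x hx y hy hxy
  simp only [Finset.mem_coe, mem_resSet] at hx hy
  have hd : (r:ℤ) ∣ x - y := by
    have := dvd_sub hx.2 hy.2
    simpa using this
  have habs : (r:ℤ) ≤ |x - y| :=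
    Int.le_of_dvd (abs_pos.mpr (sub_ne_zero.mpr hxy)) ((dvd_abs _ _).mpr hd)
  have habs' : (r:ℝ) ≤ |(x:ℝ) - y| := by exact_mod_cast habs
  rw [Function.onFun, Set.Ico_disjoint_Ico]
  rcases abs_cases ((x:ℝ) - y) with ⟨h1, _⟩ | ⟨h1, _⟩
  · have : (y:ℝ) + r ≤ x := by rw [h1] at habs'; linarith
    exact le_trans (inf_le_right) (le_trans this le_sup_left)
  · have : (x:ℝ) + r ≤ y := by rw [h1] at habs'; linarith
    exact le_trans (inf_le_left) (le_trans this le_sup_right)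

lemma volume_uSet1 {P : ℝ} {a : ℤ} {r : ℕ} (hr : 1 ≤ r) :
    volume (uSet1 P a r) = (resSet P a r).card * ENNReal.ofReal r := by
  rw [uSet1, measure_biUnion_finset (pairwise_resSet hr) (fun _ _ => measurableSet_Ico)]
  simp [Real.volume_Ico]


variable {n : ℕ} (P : ℝ) (a : Fin n → ℤ) (r : ℕ)

def boxSet : Set (Fin n → ℝ) := Set.pi Set.univ fun _ : Fin n => Set.Icc (-P) P
def gridF : Finset (Fin n → ℤ) := Fintype.piFinset fun i => resSet P (a i) r
def cubeSet (x : Fin n → ℤ) : Set (Fin n → ℝ) :=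
  Set.pi Set.univ fun i => Set.Ico (x i : ℝ) ((x i : ℝ) + r)
def uSet : Set (Fin n → ℝ) := Set.pi Set.univ fun i => uSet1 P (a i) r

lemma measurableSet_boxSet : MeasurableSet (boxSet P (n := n)) :=
  MeasurableSet.univ_pi fun _ => measurableSet_Icc

lemma measurableSet_cubeSet (x : Fin n → ℤ) : MeasurableSet (cubeSet r x) :=
  MeasurableSet.univ_pi fun _ => measurableSet_Ico

lemma measurableSet_uSet : MeasurableSet (uSet P a r) :=
  MeasurableSet.univ_pi fun i => (resSet P (a i) r).measurableSet_biUnion fun _ _ => measurableSet_Ico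

lemma volume_cubeSet (x : Fin n → ℤ) : volume (cubeSet r x) = ENNReal.ofReal ((r:ℝ) ^ n) := by
  rw [cubeSet, volume_pi_pi]
  simp only [Real.volume_Ico, add_sub_cancel_left]
  rw [Finset.prod_const, ← ENNReal.ofReal_pow (by positivity)]
  simp

lemma biUnion_cubeSet : (⋃ x ∈ gridF P a r, cubeSet r x) = uSet P a r := by
  ext t
  simp only [Set.mem_iUnion₂, uSet, Set.mem_pi, Set.mem_univ, forall_true_left, uSet1,
    Set.mem_iUnion₂, cubeSet, gridF, Fintype.mem_piFinset]
  constructor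
  · rintro ⟨x, hx, ht⟩ i
    exact ⟨x i, hx i, ht i⟩
  · intro h
    choose x hx ht using h
    exact ⟨x, hx, ht⟩


lemma pairwise_cubeSet (hr : 1 ≤ r) :
    (↑(gridF P a r) : Set (Fin n → ℤ)).PairwiseDisjoint (cubeSet r) := by
  intro x hx y hy hxy
  simp only [Finset.mem_coe, gridF, Fintype.mem_piFinset] at hx hy
  obtain ⟨i, hi⟩ := Function.ne_iff.mp hxy
  have hdisj := pairwise_resSet (P := P) (a := a i) hr
    (Finset.mem_coe.mpr (hx i)) (Finset.mem_coe.mpr (hy i)) hi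
  rw [Function.onFun] at hdisj ⊢
  rw [Set.disjoint_left]
  intro t htx hty
  rw [cubeSet, Set.mem_pi] at htx hty
  exact Set.disjoint_left.mp hdisj (htx i (Set.mem_univ i)) (hty i (Set.mem_univ i))

lemma volume_uSet (hr : 1 ≤ r) :
    volume (uSet P a r) = (gridF P a r).card * ENNReal.ofReal ((r:ℝ) ^ n) := by
  rw [← biUnion_cubeSet, measure_biUnion_finset (pairwise_cubeSet P a r hr)
    (fun x _ => measurableSet_cubeSet r x)]
  simp [volume_cubeSet]

lemma uSet_subset : uSet P a r ⊆ Set.pi Set.univ fun _ : Fin n => Set.Ico (-P) (P + r) := by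
  refine Set.pi_mono fun i _ => uSet1_subset

lemma volume_uSet_le (hP : 1 ≤ P) (hrP : (r:ℝ) ≤ P) :
    volume (uSet P a r) ≤ ENNReal.ofReal ((3*P) ^ n) := by
  refine le_trans (measure_mono (uSet_subset P a r)) ?_
  rw [volume_pi_pi]
  simp only [Real.volume_Ico]
  rw [Finset.prod_const, ← ENNReal.ofReal_pow (by linarith)]
  simp only [Finset.card_univ, Fintype.card_fin]
  exact ENNReal.ofReal_le_ofReal (pow_le_pow_left₀ (by linarith) (by linarith) n)

lemma card_gridF_le (hP : 1 ≤ P) (hr : 1 ≤ r) (hrP : (r:ℝ) ≤ P) :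
    ((gridF P a r).card : ℝ) * (r:ℝ) ^ n ≤ (3*P) ^ n := by
  have h := le_trans (le_of_eq (volume_uSet P a r hr).symm) (volume_uSet_le P a r hP hrP)
  have hr0 : (0:ℝ) < (r:ℝ)^n := by positivity
  have := ENNReal.toReal_mono (by simp) h
  rw [ENNReal.toReal_mul, ENNReal.toReal_ofReal (le_of_lt hr0),
    ENNReal.toReal_ofReal (by positivity)] at this
  simpa using this

lemma pi_diff_subset (A B : Fin n → Set ℝ) :
    Set.pi Set.univ A \ Set.pi Set.univ B ⊆
      ⋃ i, Set.pi Set.univ (fun j => if j = i then A j \ B j else A j) := by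
  rintro t ⟨htA, htB⟩
  rw [Set.mem_pi] at htA
  have : ∃ i, t i ∉ B i := by
    by_contra h
    push_neg at h
    exact htB (Set.mem_pi.mpr fun i _ => h i)
  obtain ⟨i, hi⟩ := this
  refine Set.mem_iUnion.mpr ⟨i, Set.mem_pi.mpr fun j _ => ?_⟩
  by_cases hji : j = i
  · subst hji; simp only [if_pos rfl]; exact ⟨htA j (Set.mem_univ j), hi⟩
  · simp only [if_neg hji]; exact htA j (Set.mem_univ j)

lemma volume_pi_le (g : Fin n → Set ℝ) (c d : ℝ) (hc : 0 ≤ c) (hd : 0 ≤ d) (i : Fin n)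
    (hgi : volume (g i) ≤ ENNReal.ofReal d) (hgj : ∀ j, j ≠ i → volume (g j) ≤ ENNReal.ofReal c) :
    volume (Set.pi Set.univ g) ≤ ENNReal.ofReal (d * c ^ (n-1)) := by
  rw [volume_pi_pi, ← Finset.mul_prod_erase Finset.univ _ (Finset.mem_univ i)]
  have h2 : ∏ j ∈ Finset.univ.erase i, volume (g j) ≤ ENNReal.ofReal c ^ (n-1) := by
    calc ∏ j ∈ Finset.univ.erase i, volume (g j)
        ≤ ∏ _j ∈ Finset.univ.erase i, ENNReal.ofReal c :=
          Finset.prod_le_prod' fun j hj => hgj j (Finset.mem_erase.mp hj).1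
      _ = ENNReal.ofReal c ^ (n-1) := by
          rw [Finset.prod_const, Finset.card_erase_of_mem (Finset.mem_univ i)]
          simp
  calc volume (g i) * ∏ j ∈ Finset.univ.erase i, volume (g j)
      ≤ ENNReal.ofReal d * ENNReal.ofReal c ^ (n-1) := mul_le_mul' hgi h2
    _ = ENNReal.ofReal (d * c ^ (n-1)) := by
        rw [← ENNReal.ofReal_pow hc, ← ENNReal.ofReal_mul hd]

lemma volume_uSet_diff_box (hP : 1 ≤ P) (hr : 1 ≤ r) (hrP : (r:ℝ) ≤ P) :
    volume (uSet P a r \ boxSet P) ≤ ENNReal.ofReal (n * r * (3*P) ^ (n-1)) := by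
  refine le_trans (measure_mono (pi_diff_subset _ _)) ?_
  refine le_trans (measure_iUnion_le _) ?_
  have hbound : ∀ i : Fin n,
      volume (Set.pi Set.univ (fun j => if j = i then uSet1 P (a j) r \ Set.Icc (-P) P
        else uSet1 P (a j) r)) ≤ ENNReal.ofReal ((r:ℝ) * (3*P) ^ (n-1)) := by
    intro i
    refine volume_pi_le _ (3*P) (r:ℝ) (by linarith) (by positivity) i ?_ ?_
    · rw [if_pos rfl]
      have hsub : uSet1 P (a i) r \ Set.Icc (-P) P ⊆ Set.Ioc P (P + r) := by
        rintro t ⟨ht1, ht2⟩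
        have h1 := uSet1_subset ht1
        simp only [Set.mem_Icc, not_and, not_le] at ht2
        exact ⟨ht2 h1.1, le_of_lt h1.2⟩
      refine le_trans (measure_mono hsub) ?_
      rw [Real.volume_Ioc]
      simp
    · intro j _
      rw [if_neg ‹j ≠ i›]
      refine le_trans (measure_mono uSet1_subset) ?_
      rw [Real.volume_Ico]
      exact ENNReal.ofReal_le_ofReal (by linarith)
  calc ∑' i : Fin n, volume _ ≤ ∑' _i : Fin n, ENNReal.ofReal ((r:ℝ) * (3*P) ^ (n-1)) :=
        ENNReal.tsum_le_tsum hbound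
    _ = n * ENNReal.ofReal ((r:ℝ) * (3*P) ^ (n-1)) := by
        rw [tsum_fintype, Finset.sum_const, Finset.card_univ, Fintype.card_fin, nsmul_eq_mul]
    _ ≤ ENNReal.ofReal (n * r * (3*P) ^ (n-1)) := by
        rw [show (n:ℝ) * r * (3*P)^(n-1) = n * ((r:ℝ) * (3*P)^(n-1)) by ring]
        conv_rhs => rw [ENNReal.ofReal_mul (by positivity : (0:ℝ) ≤ (n:ℝ)), ENNReal.ofReal_natCast]

lemma volume_box_diff_uSet (hP : 1 ≤ P) (hr : 1 ≤ r) (hrP : (r:ℝ) ≤ P) :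
    volume (boxSet P \ uSet P a r) ≤ ENNReal.ofReal (n * r * (2*P) ^ (n-1)) := by
  refine le_trans (measure_mono (pi_diff_subset _ _)) ?_
  refine le_trans (measure_iUnion_le _) ?_
  have hbound : ∀ i : Fin n,
      volume (Set.pi Set.univ (fun j => if j = i then Set.Icc (-P) P \ uSet1 P (a j) r
        else Set.Icc (-P) P)) ≤ ENNReal.ofReal ((r:ℝ) * (2*P) ^ (n-1)) := by
    intro i
    refine volume_pi_le _ (2*P) (r:ℝ) (by linarith) (by positivity) i ?_ ?_
    · rw [if_pos rfl]
      refine le_trans (measure_mono (icc_diff_uSet1 hr)) ?_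
      rw [Real.volume_Ico]
      simp
    · intro j hj
      rw [if_neg hj]
      rw [Real.volume_Icc]
      exact ENNReal.ofReal_le_ofReal (by linarith)
  calc ∑' i : Fin n, volume _ ≤ ∑' _i : Fin n, ENNReal.ofReal ((r:ℝ) * (2*P) ^ (n-1)) :=
        ENNReal.tsum_le_tsum hbound
    _ = n * ENNReal.ofReal ((r:ℝ) * (2*P) ^ (n-1)) := by
        rw [tsum_fintype, Finset.sum_const, Finset.card_univ, Fintype.card_fin, nsmul_eq_mul]
    _ ≤ ENNReal.ofReal (n * r * (2*P) ^ (n-1)) := by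
        rw [show (n:ℝ) * r * (2*P)^(n-1) = n * ((r:ℝ) * (2*P)^(n-1)) by ring]
        conv_rhs => rw [ENNReal.ofReal_mul (by positivity : (0:ℝ) ≤ (n:ℝ)), ENNReal.ofReal_natCast]

lemma chord_bound (u v : ℝ) :
    ‖Complex.exp (2*π*Complex.I*u) - Complex.exp (2*π*Complex.I*v)‖ ≤ 2*π*|u - v| := by
  have key : ∀ s : ℝ, HasDerivAt (fun y : ℝ => Complex.exp (2*π*Complex.I*y))
      (Complex.exp (2*π*Complex.I*s) * (2*π*Complex.I)) s := by
    intro s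
    have h : HasDerivAt (fun z : ℂ => Complex.exp (2*π*Complex.I*z))
        (Complex.exp (2*π*Complex.I*(s:ℂ)) * (2*π*Complex.I)) (s:ℂ) := by
      simpa [mul_comm] using ((hasDerivAt_id (s:ℂ)).const_mul (2*π*Complex.I : ℂ)).cexp
    exact h.comp_ofReal
  have hb : ∀ s : ℝ, ‖Complex.exp (2*π*Complex.I*s) * (2*π*Complex.I)‖ ≤ 2*π := by
    intro s
    rw [norm_mul]
    have h1 : ‖Complex.exp (2*π*Complex.I*(s:ℂ))‖ = 1 := by
      rw [Complex.norm_exp]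
      have : (2*(π:ℂ)*Complex.I*(s:ℂ)).re = 0 := by simp [Complex.mul_re, Complex.mul_im]
      rw [this, Real.exp_zero]
    have h2 : ‖(2*(π:ℂ)*Complex.I)‖ = 2*π := by
      simp [norm_mul, abs_of_nonneg Real.pi_pos.le]
    rw [h1, h2, one_mul]
  have := Convex.norm_image_sub_le_of_norm_hasDerivWithin_le
    (f := fun y : ℝ => Complex.exp (2*π*Complex.I*y))
    (f' := fun s : ℝ => Complex.exp (2*π*Complex.I*s) * (2*π*Complex.I))
    (s := Set.univ) (C := 2*π)
    (fun s _ => (key s).hasDerivWithinAt) (fun s _ => hb s) convex_univ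
    (Set.mem_univ v) (Set.mem_univ u)
  simpa [Real.norm_eq_abs] using this

lemma opnorm_bound {n : ℕ} (M : ℝ) (hM0 : 0 ≤ M) (L : (Fin n → ℝ) →L[ℝ] ℝ)
    (h : ∀ i, |L (Pi.single i 1)| ≤ M) : ‖L‖ ≤ n * M := by
  refine ContinuousLinearMap.opNorm_le_bound _ (by positivity) fun v => ?_
  have hv : v = ∑ i, v i • (Pi.single i (1:ℝ) : Fin n → ℝ) := by
    ext j
    rw [Finset.sum_apply]
    simp [Pi.single_apply]
  calc ‖L v‖ = ‖∑ i, v i • L (Pi.single i (1:ℝ) : Fin n → ℝ)‖ := by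
        conv_lhs => rw [hv]
        rw [map_sum]
        congr 1
        refine Finset.sum_congr rfl fun i _ => ?_
        rw [L.map_smul]
    _ ≤ ∑ i : Fin n, ‖v i • L (Pi.single i (1:ℝ) : Fin n → ℝ)‖ := norm_sum_le _ _
    _ ≤ ∑ _i : Fin n, M * ‖v‖ := by
        refine Finset.sum_le_sum fun i _ => ?_
        rw [norm_smul]
        have h1 : ‖v i‖ ≤ ‖v‖ := norm_le_pi_norm v i
        have h2 : ‖L (Pi.single i (1:ℝ) : Fin n → ℝ)‖ ≤ M := by
          simpa [Real.norm_eq_abs] using h i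
        calc ‖v i‖ * ‖L (Pi.single i (1:ℝ) : Fin n → ℝ)‖ ≤ ‖v‖ * M :=
              mul_le_mul h1 h2 (norm_nonneg _) (norm_nonneg _)
          _ = M * ‖v‖ := mul_comm _ _
    _ = n * M * ‖v‖ := by
        rw [Finset.sum_const, Finset.card_univ, Fintype.card_fin, nsmul_eq_mul]; ring

lemma tsum_eq_gridsum (g : (Fin n → ℤ) → ℂ) :
    (∑' x : {x : Fin n → ℤ // (∀ i, |(x i : ℝ)| ≤ P) ∧ ∀ i, (r : ℤ) ∣ (x i - a i)}, g x.1)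
      = ∑ x ∈ gridF P a r, g x := by
  have hpred : (fun x : Fin n → ℤ => (∀ i, |(x i : ℝ)| ≤ P) ∧ ∀ i, (r : ℤ) ∣ (x i - a i))
      = fun x => x ∈ gridF P a r := by
    funext x
    apply propext
    rw [gridF, Fintype.mem_piFinset]
    constructor
    · rintro ⟨h1, h2⟩ i
      exact mem_resSet.mpr ⟨⟨(abs_le.mp (h1 i)).1, (abs_le.mp (h1 i)).2⟩, h2 i⟩
    · intro h
      exact ⟨fun i => abs_le.mpr ⟨(mem_resSet.mp (h i)).1.1, (mem_resSet.mp (h i)).1.2⟩,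
        fun i => (mem_resSet.mp (h i)).2⟩
  rw [hpred]
  exact Finset.tsum_subtype (gridF P a r) g

lemma main_estimate (hn : 0 < n) (hP : 1 ≤ P) (hr : 1 ≤ r) (hrP : (r:ℝ) ≤ P)
    (F : (Fin n → ℝ) → ℝ) (F' : (Fin n → ℝ) → ((Fin n → ℝ) →L[ℝ] ℝ)) (M : ℝ)
    (hF : ∀ x ∈ boxSet P (n := n), HasFDerivWithinAt F (F' x) (boxSet P) x)
    (hM : ∀ x ∈ boxSet P (n := n), ∀ i, |F' x (Pi.single i 1)| ≤ M) :
    ‖(∑ x ∈ gridF P a r, Complex.exp (2 * π * Complex.I * F (fun i => ((x i : ℝ)))))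
        - ((r : ℂ) ^ n)⁻¹ * ∫ t in boxSet P, Complex.exp (2 * π * Complex.I * F t)‖
      ≤ ((2*π+2)*n*3^n) * P ^ (n - 1) * (1 + P * M) / (r:ℝ) ^ (n - 1) := by
  classical
  set f : (Fin n → ℝ) → ℂ := fun t => Complex.exp (2 * π * Complex.I * F t) with hf_def
  -- basic positivity facts
  have hrR : (1:ℝ) ≤ (r:ℝ) := by exact_mod_cast hr
  have hr0 : (0:ℝ) < (r:ℝ) := lt_of_lt_of_le zero_lt_one hrR
  have hP0 : (0:ℝ) < P := lt_of_lt_of_le zero_lt_one hP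
  have hrn : (0:ℝ) < (r:ℝ)^n := by positivity
  have hq : (0:ℝ) < (r:ℝ)^(n-1) := by positivity
  have hrnC : ((r:ℂ)^n) ≠ 0 := pow_ne_zero _ (Nat.cast_ne_zero.mpr (by omega))
  have hnorm_inv : ‖((r:ℂ)^n)⁻¹‖ = ((r:ℝ)^n)⁻¹ := by
    rw [norm_inv, norm_pow, Complex.norm_natCast]
  have hM0 : 0 ≤ M := by
    have h0 : (fun _ : Fin n => (0:ℝ)) ∈ boxSet P := by
      rw [boxSet]
      exact Set.mem_pi.mpr fun i _ => Set.mem_Icc.mpr ⟨by linarith, by linarith⟩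
    exact le_trans (abs_nonneg _) (hM _ h0 ⟨0, hn⟩)
  -- continuity and integrability
  have hBoxCompact : IsCompact (boxSet P (n := n)) := isCompact_univ_pi fun _ => isCompact_Icc
  have hContF : ContinuousOn F (boxSet P) := fun z hz => (hF z hz).continuousWithinAt
  have hf_cont : ContinuousOn f (boxSet P) := by
    apply Complex.continuous_exp.comp_continuousOn
    exact continuousOn_const.mul (Complex.continuous_ofReal.comp_continuousOn hContF)
  have hfint : IntegrableOn f (boxSet P) := hf_cont.integrableOn_compact hBoxCompact
  have hf1 : ∀ t, ‖f t‖ = 1 := by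
    intro t
    rw [hf_def]
    simp only
    rw [Complex.norm_exp]
    have : (2 * (π:ℂ) * Complex.I * ((F t : ℝ) : ℂ)).re = 0 := by
      simp [Complex.mul_re, Complex.mul_im]
    rw [this, Real.exp_zero]
  -- the grid points are in the box
  have hxbar : ∀ x ∈ gridF P a r, (fun i => ((x i : ℝ))) ∈ boxSet P := by
    intro x hx
    rw [gridF, Fintype.mem_piFinset] at hx
    rw [boxSet]
    refine Set.mem_pi.mpr fun i _ => Set.mem_Icc.mpr ?_
    have h := (mem_resSet.mp (hx i)).1
    exact ⟨h.1, h.2⟩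
  -- pointwise oscillation bound on each cube
  have hFdiff : ∀ x ∈ gridF P a r, ∀ t ∈ cubeSet r x ∩ boxSet P,
      ‖f (fun i => ((x i : ℝ))) - f t‖ ≤ 2*π*((n:ℝ)*M*r) := by
    intro x hx t ht
    have h1 : ‖f (fun i => ((x i : ℝ))) - f t‖ ≤ 2*π*|F (fun i => ((x i : ℝ))) - F t| :=
      chord_bound _ _
    refine le_trans h1 ?_
    have h2 : |F (fun i => ((x i : ℝ))) - F t| ≤ ((n:ℝ)*M) * ‖(fun i => ((x i : ℝ))) - t‖ := by
      have := Convex.norm_image_sub_le_of_norm_hasFDerivWithin_le hF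
        (fun z hz => opnorm_bound M hM0 (F' z) (hM z hz))
        (convex_pi fun i _ => convex_Icc (-P) P) ht.2 (hxbar x hx)
      simpa [Real.norm_eq_abs] using this
    have h3 : ‖(fun i => ((x i : ℝ))) - t‖ ≤ (r:ℝ) := by
      rw [pi_norm_le_iff_of_nonneg (le_of_lt hr0)]
      intro i
      have hti : t i ∈ Set.Ico ((x i : ℝ)) ((x i : ℝ) + r) := by
        have := ht.1
        rw [cubeSet, Set.mem_pi] at this
        exact this i (Set.mem_univ i)
      rw [Pi.sub_apply, Real.norm_eq_abs]
      rw [abs_le]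
      constructor <;> [linarith [hti.2]; linarith [hti.1]]
    calc 2*π*|F (fun i => ((x i : ℝ))) - F t| ≤ 2*π*(((n:ℝ)*M) * ‖(fun i => ((x i : ℝ))) - t‖) := by
          have h2pi : (0:ℝ) ≤ 2*π := by positivity
          exact mul_le_mul_of_nonneg_left h2 h2pi
      _ ≤ 2*π*((n:ℝ)*M*r) := by
          have h2pi : (0:ℝ) ≤ 2*π := by positivity
          have : ((n:ℝ)*M) * ‖(fun i => ((x i : ℝ))) - t‖ ≤ (n:ℝ)*M*r :=
            mul_le_mul_of_nonneg_left h3 (by positivity)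
          exact mul_le_mul_of_nonneg_left this h2pi
  -- per-cube estimate
  have hterm : ∀ x ∈ gridF P a r,
      ‖f (fun i => ((x i : ℝ))) - ((r:ℂ)^n)⁻¹ * ∫ t in cubeSet r x ∩ boxSet P, f t‖
        ≤ 2*π*((n:ℝ)*M*r) + ((r:ℝ)^n)⁻¹ * (volume (cubeSet r x \ boxSet P)).toReal := by
    intro x hx
    have hQmeas := measurableSet_cubeSet (n := n) r x
    have hQvol : volume (cubeSet r x) = ENNReal.ofReal ((r:ℝ)^n) := volume_cubeSet r x
    have hQfin : volume (cubeSet r x) ≠ ⊤ := by rw [hQvol]; exact ENNReal.ofReal_ne_top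
    have hVfin : volume (cubeSet r x ∩ boxSet P) ≠ ⊤ :=
      ne_top_of_le_ne_top hQfin (measure_mono Set.inter_subset_left)
    have hDfin : volume (cubeSet r x \ boxSet P) ≠ ⊤ :=
      ne_top_of_le_ne_top hQfin (measure_mono Set.diff_subset)
    set V := (volume (cubeSet r x ∩ boxSet P)).toReal with hV_def
    set D := (volume (cubeSet r x \ boxSet P)).toReal with hD_def
    have hVD : V + D = (r:ℝ)^n := by
      have h := measure_inter_add_diff (μ := volume) (cubeSet r x) (measurableSet_boxSet P)
      rw [hQvol] at h
      have h2 := congrArg ENNReal.toReal h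
      rw [ENNReal.toReal_add hVfin hDfin, ENNReal.toReal_ofReal (le_of_lt hrn)] at h2
      exact h2
    have hV0 : 0 ≤ V := ENNReal.toReal_nonneg
    have hD0 : 0 ≤ D := ENNReal.toReal_nonneg
    have hint1 : IntegrableOn f (cubeSet r x ∩ boxSet P) := hfint.mono_set Set.inter_subset_right
    have hIdiff : ∫ t in cubeSet r x ∩ boxSet P, (f (fun i => ((x i : ℝ))) - f t)
        = V • f (fun i => ((x i : ℝ))) - ∫ t in cubeSet r x ∩ boxSet P, f t := by
      rw [integral_sub (integrableOn_const (C := f (fun i => ((x i : ℝ)))) hVfin) hint1,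
        setIntegral_const, measureReal_def]
    have hIbound : ‖∫ t in cubeSet r x ∩ boxSet P, (f (fun i => ((x i : ℝ))) - f t)‖
        ≤ (2*π*((n:ℝ)*M*r)) * V :=
      norm_setIntegral_le_of_norm_le_const (lt_top_iff_ne_top.mpr hVfin)
        (fun t ht => hFdiff x hx t ht)
    have hcast : ((r:ℂ)^n) = ((V:ℂ) + (D:ℂ)) := by
      have : (((r:ℝ)^n : ℝ) : ℂ) = ((V:ℂ) + (D:ℂ)) := by rw [← hVD]; push_cast; ring
      rw [← this]; push_cast; ring
    have halg : f (fun i => ((x i : ℝ))) - ((r:ℂ)^n)⁻¹ * ∫ t in cubeSet r x ∩ boxSet P, f t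
        = ((r:ℂ)^n)⁻¹ * ((D:ℂ) * f (fun i => ((x i : ℝ)))
            + (V • f (fun i => ((x i : ℝ))) - ∫ t in cubeSet r x ∩ boxSet P, f t)) := by
      have h1 : f (fun i => ((x i : ℝ)))
          = ((r:ℂ)^n)⁻¹ * ((r:ℂ)^n * f (fun i => ((x i : ℝ)))) := by
        rw [← mul_assoc, inv_mul_cancel₀ hrnC, one_mul]
      conv_lhs => rw [h1]
      rw [← mul_sub]
      congr 1
      rw [hcast, Complex.real_smul]
      ring
    rw [halg, norm_mul, hnorm_inv]
    have hnorm_sum : ‖(D:ℂ) * f (fun i => ((x i : ℝ)))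
        + (V • f (fun i => ((x i : ℝ))) - ∫ t in cubeSet r x ∩ boxSet P, f t)‖
        ≤ D + (2*π*((n:ℝ)*M*r)) * V := by
      refine le_trans (norm_add_le _ _) (add_le_add ?_ ?_)
      · rw [norm_mul, hf1, mul_one, Complex.norm_real, Real.norm_eq_abs, abs_of_nonneg hD0]
      · rw [← hIdiff]; exact hIbound
    have hVle : V ≤ (r:ℝ)^n := by linarith
    have hc0 : (0:ℝ) ≤ 2*π*((n:ℝ)*M*r) := by positivity
    calc ((r:ℝ)^n)⁻¹ * ‖(D:ℂ) * f (fun i => ((x i : ℝ)))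
          + (V • f (fun i => ((x i : ℝ))) - ∫ t in cubeSet r x ∩ boxSet P, f t)‖
        ≤ ((r:ℝ)^n)⁻¹ * (D + (2*π*((n:ℝ)*M*r)) * ((r:ℝ)^n)) := by
          refine mul_le_mul_of_nonneg_left (le_trans hnorm_sum ?_) (by positivity)
          have := mul_le_mul_of_nonneg_left hVle hc0
          linarith
      _ = 2*π*((n:ℝ)*M*r) + ((r:ℝ)^n)⁻¹ * D := by
          field_simp
          ring
  -- decomposition of the integral
  have hUmeas := measurableSet_uSet P a r
  have hpairwise : (↑(gridF P a r) : Set (Fin n → ℤ)).Pairwise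
      (Function.onFun Disjoint fun x => cubeSet r x ∩ boxSet P) := by
    intro x hx y hy hxy
    exact ((pairwise_cubeSet P a r hr) hx hy hxy).mono Set.inter_subset_left Set.inter_subset_left
  have hsplit : ∫ t in boxSet P, f t
      = (∑ x ∈ gridF P a r, ∫ t in cubeSet r x ∩ boxSet P, f t)
        + ∫ t in boxSet P \ uSet P a r, f t := by
    have h1 := integral_inter_add_diff (μ := volume) (s := boxSet P) (t := uSet P a r)
      hUmeas hfint
    have h2 : boxSet P ∩ uSet P a r = ⋃ x ∈ gridF P a r, (cubeSet r x ∩ boxSet P) := by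
      rw [Set.inter_comm, ← biUnion_cubeSet P a r]
      ext t
      simp only [Set.mem_inter_iff, Set.mem_iUnion]
      tauto
    have h3 : ∫ t in ⋃ x ∈ gridF P a r, (cubeSet r x ∩ boxSet P), f t
        = ∑ x ∈ gridF P a r, ∫ t in cubeSet r x ∩ boxSet P, f t :=
      integral_biUnion_finset _
        (fun x _ => (measurableSet_cubeSet r x).inter (measurableSet_boxSet P))
        hpairwise (fun x _ => hfint.mono_set Set.inter_subset_right)
    rw [← h1, h2, h3]
  have hkey : (∑ x ∈ gridF P a r, f (fun i => ((x i : ℝ))))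
      - ((r:ℂ)^n)⁻¹ * ∫ t in boxSet P, f t
      = (∑ x ∈ gridF P a r, (f (fun i => ((x i : ℝ)))
          - ((r:ℂ)^n)⁻¹ * ∫ t in cubeSet r x ∩ boxSet P, f t))
        - ((r:ℂ)^n)⁻¹ * ∫ t in boxSet P \ uSet P a r, f t := by
    rw [hsplit, Finset.sum_sub_distrib, mul_add, Finset.mul_sum]
    ring
  -- bound the complement integral
  have hBoxFin : volume (boxSet P (n := n)) ≠ ⊤ := hBoxCompact.measure_lt_top.ne
  have hlast : ‖∫ t in boxSet P \ uSet P a r, f t‖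
      ≤ (volume (boxSet P \ uSet P a r)).toReal := by
    have hfin : volume (boxSet P \ uSet P a r) < ⊤ :=
      lt_of_le_of_lt (measure_mono Set.diff_subset) (lt_top_iff_ne_top.mpr hBoxFin)
    have := norm_setIntegral_le_of_norm_le_const (C := 1) hfin
      (fun t _ => le_of_eq (hf1 t))
    simpa [measureReal_def] using this
  have hWle : (volume (boxSet P \ uSet P a r)).toReal ≤ (n:ℝ)*r*(2*P)^(n-1) :=
    ENNReal.toReal_le_of_le_ofReal (by positivity) (volume_box_diff_uSet P a r hP hr hrP)
  -- sum of the outside-volumes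
  have hDsum : ∑ x ∈ gridF P a r, (volume (cubeSet r x \ boxSet P)).toReal
      = (volume (uSet P a r \ boxSet P)).toReal := by
    have hfin : ∀ x ∈ gridF P a r, volume (cubeSet r x \ boxSet P) ≠ ⊤ := by
      intro x _
      refine ne_top_of_le_ne_top ?_ (measure_mono Set.diff_subset)
      rw [volume_cubeSet]
      exact ENNReal.ofReal_ne_top
    rw [← ENNReal.toReal_sum hfin]
    congr 1
    rw [← measure_biUnion_finset
      (fun x hx y hy hxy => ((pairwise_cubeSet P a r hr) hx hy hxy).mono
        Set.diff_subset Set.diff_subset)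
      (fun x _ => (measurableSet_cubeSet r x).diff (measurableSet_boxSet P))]
    congr 1
    rw [← biUnion_cubeSet P a r]
    ext t
    simp only [Set.mem_iUnion, Set.mem_diff]
    tauto
  have hDle : (volume (uSet P a r \ boxSet P)).toReal ≤ (n:ℝ)*r*(3*P)^(n-1) :=
    ENNReal.toReal_le_of_le_ofReal (by positivity) (volume_uSet_diff_box P a r hP hr hrP)
  -- put everything together
  have hcard : ((gridF P a r).card : ℝ) * (r:ℝ)^n ≤ (3*P)^n := card_gridF_le P a r hP hr hrP
  have step1 : ‖(∑ x ∈ gridF P a r, f (fun i => ((x i : ℝ))))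
      - ((r:ℂ)^n)⁻¹ * ∫ t in boxSet P, f t‖
      ≤ ((gridF P a r).card : ℝ) * (2*π*((n:ℝ)*M*r))
        + ((r:ℝ)^n)⁻¹ * ((n:ℝ)*r*(3*P)^(n-1))
        + ((r:ℝ)^n)⁻¹ * ((n:ℝ)*r*(2*P)^(n-1)) := by
    rw [hkey]
    refine le_trans (norm_sub_le _ _) ?_
    have hA : ‖∑ x ∈ gridF P a r, (f (fun i => ((x i : ℝ)))
        - ((r:ℂ)^n)⁻¹ * ∫ t in cubeSet r x ∩ boxSet P, f t)‖
        ≤ ((gridF P a r).card : ℝ) * (2*π*((n:ℝ)*M*r))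
          + ((r:ℝ)^n)⁻¹ * ((n:ℝ)*r*(3*P)^(n-1)) := by
      refine le_trans (norm_sum_le _ _) ?_
      refine le_trans (Finset.sum_le_sum hterm) ?_
      rw [Finset.sum_add_distrib, Finset.sum_const, nsmul_eq_mul, ← Finset.mul_sum, hDsum]
      refine add_le_add (le_refl _) ?_
      exact mul_le_mul_of_nonneg_left hDle (by positivity)
    have hB : ‖((r:ℂ)^n)⁻¹ * ∫ t in boxSet P \ uSet P a r, f t‖
        ≤ ((r:ℝ)^n)⁻¹ * ((n:ℝ)*r*(2*P)^(n-1)) := by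
      rw [norm_mul, hnorm_inv]
      exact mul_le_mul_of_nonneg_left (le_trans hlast hWle) (by positivity)
    linarith
  refine le_trans step1 ?_
  -- final numerical computation
  have hpow_r : (r:ℝ)^n = (r:ℝ)^(n-1) * r := by
    rw [← pow_succ]; congr 1; omega
  have hpow_P : P^n = P^(n-1) * P := by
    rw [← pow_succ]; congr 1; omega
  have hPn1 : (0:ℝ) < P^(n-1) := by positivity
  have hc1 : ((gridF P a r).card : ℝ) ≤ 3^n*P^n/(r:ℝ)^n := by
    rw [le_div_iff₀ hrn]
    calc ((gridF P a r).card : ℝ) * (r:ℝ)^n ≤ (3*P)^n := hcard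
      _ = 3^n*P^n := mul_pow 3 P n
  have t1 : ((gridF P a r).card : ℝ) * (2*π*((n:ℝ)*M*r))
      ≤ 2*π*(n:ℝ)*3^n*(P^(n-1)*(P*M))/(r:ℝ)^(n-1) := by
    calc ((gridF P a r).card : ℝ) * (2*π*((n:ℝ)*M*r))
        ≤ (3^n*P^n/(r:ℝ)^n) * (2*π*((n:ℝ)*M*r)) :=
          mul_le_mul_of_nonneg_right hc1 (by positivity)
      _ = 2*π*(n:ℝ)*3^n*(P^(n-1)*(P*M))/(r:ℝ)^(n-1) := by
          rw [hpow_r, hpow_P]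
          field_simp
  have t2 : ((r:ℝ)^n)⁻¹ * ((n:ℝ)*r*(3*P)^(n-1))
      = (n:ℝ)*3^(n-1)*P^(n-1)/(r:ℝ)^(n-1) := by
    rw [hpow_r, mul_pow]
    field_simp
  have t3 : ((r:ℝ)^n)⁻¹ * ((n:ℝ)*r*(2*P)^(n-1))
      = (n:ℝ)*2^(n-1)*P^(n-1)/(r:ℝ)^(n-1) := by
    rw [hpow_r, mul_pow]
    field_simp
  rw [t2, t3]
  have hnum : 2*π*(n:ℝ)*3^n*(P^(n-1)*(P*M)) + (n:ℝ)*3^(n-1)*P^(n-1) + (n:ℝ)*2^(n-1)*P^(n-1)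
      ≤ ((2*π+2)*(n:ℝ)*3^n) * P^(n-1) * (1 + P*M) := by
    have h23 : (2:ℝ)^(n-1) ≤ 3^(n-1) := pow_le_pow_left₀ (by norm_num) (by norm_num) _
    have h33 : (3:ℝ)^(n-1) ≤ 3^n := pow_le_pow_right₀ (by norm_num) (Nat.sub_le n 1)
    have hPM : (0:ℝ) ≤ P*M := mul_nonneg (le_of_lt hP0) hM0
    have hpi : (0:ℝ) < π := pi_pos
    have h3n : (0:ℝ) < 3^n := by positivity
    have hnP : (0:ℝ) ≤ (n:ℝ)*P^(n-1) := by positivity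
    nlinarith [mul_le_mul_of_nonneg_left (add_le_add h33 (le_trans h23 h33)) hnP,
      mul_nonneg (mul_nonneg hnP (le_of_lt h3n)) hPM,
      mul_nonneg (mul_nonneg (le_of_lt hpi) hnP) (le_of_lt h3n),
      mul_nonneg (mul_nonneg (mul_nonneg (le_of_lt hpi) hnP) (le_of_lt h3n)) hPM]
  calc ((gridF P a r).card : ℝ) * (2*π*((n:ℝ)*M*r)) + (n:ℝ)*3^(n-1)*P^(n-1)/(r:ℝ)^(n-1)
        + (n:ℝ)*2^(n-1)*P^(n-1)/(r:ℝ)^(n-1)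
      ≤ 2*π*(n:ℝ)*3^n*(P^(n-1)*(P*M))/(r:ℝ)^(n-1) + (n:ℝ)*3^(n-1)*P^(n-1)/(r:ℝ)^(n-1)
        + (n:ℝ)*2^(n-1)*P^(n-1)/(r:ℝ)^(n-1) := by linarith
    _ = (2*π*(n:ℝ)*3^n*(P^(n-1)*(P*M)) + (n:ℝ)*3^(n-1)*P^(n-1) + (n:ℝ)*2^(n-1)*P^(n-1))
        /(r:ℝ)^(n-1) := by rw [← add_div, ← add_div]
    _ ≤ (((2*π+2)*(n:ℝ)*3^n) * P^(n-1) * (1 + P*M))/(r:ℝ)^(n-1) :=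
        (div_le_div_iff_of_pos_right hq).mpr hnum

end ExpSumAux

theorem stmt_3 (n : ℕ) :
    ∃ C : ℝ, ∀ (P : ℝ), 1 ≤ P → ∀ (a : Fin n → ℤ) (r : ℕ), 1 ≤ r → (r : ℝ) ≤ P →
      ∀ (F : (Fin n → ℝ) → ℝ) (F' : (Fin n → ℝ) → ((Fin n → ℝ) →L[ℝ] ℝ)) (M : ℝ),
        (∀ x ∈ Set.pi Set.univ (fun _ : Fin n => Set.Icc (-P) P),
            HasFDerivWithinAt F (F' x) (Set.pi Set.univ fun _ => Set.Icc (-P) P) x) →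
        ContinuousOn F' (Set.pi Set.univ fun _ => Set.Icc (-P) P) →
        (∀ x ∈ Set.pi Set.univ (fun _ : Fin n => Set.Icc (-P) P),
            ∀ i, |F' x (Pi.single i 1)| ≤ M) →
        ‖(∑' x : {x : Fin n → ℤ // (∀ i, |(x i : ℝ)| ≤ P) ∧ ∀ i, (r : ℤ) ∣ (x i - a i)},
              Complex.exp (2 * π * Complex.I * F (fun i => ((x.1 i : ℝ)))))
            - ((r : ℂ) ^ n)⁻¹ *
              ∫ t in Set.pi Set.univ (fun _ : Fin n => Set.Icc (-P) P),
                Complex.exp (2 * π * Complex.I * F t)‖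
          ≤ C * P ^ (n - 1) * (1 + P * M) / r ^ (n - 1) := by
  
  rcases Nat.eq_zero_or_pos n with hn | hn
  · subst hn
    refine ⟨0, ?_⟩
    intro P hP a r hr hrP F F' M hF hF'c hM
    have hbox : Set.pi Set.univ (fun _ : Fin 0 => Set.Icc (-P) P) = Set.univ := by
      ext t; simp
    haveI : Unique {x : Fin 0 → ℤ // (∀ i, |(x i : ℝ)| ≤ P) ∧ ∀ i, (r : ℤ) ∣ (x i - a i)} :=
      ⟨⟨⟨default, ⟨fun i => i.elim0, fun i => i.elim0⟩⟩⟩,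
        fun x => Subtype.ext (Subsingleton.elim _ _)⟩
    rw [tsum_eq_single (default) (fun b hb => absurd (Subsingleton.elim b default) hb)]
    rw [hbox, Measure.restrict_univ, integral_unique]
    have hvol : (volume (Set.univ : Set (Fin 0 → ℝ))) = 1 := by
      rw [show (volume : Measure (Fin 0 → ℝ)) = Measure.pi (fun _ => volume) from rfl,
        Measure.pi_univ]
      simp
    rw [measureReal_def, hvol]
    have hF : ∀ u v : Fin 0 → ℝ, F u = F v := fun u v => congrArg F (Subsingleton.elim u v)
    simp only [pow_zero, inv_one, one_mul, ENNReal.toReal_one, one_smul]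
    have hzero : ∀ u v : Fin 0 → ℝ,
        Complex.exp (2*(π:ℂ)*Complex.I*(F u : ℝ)) - Complex.exp (2*(π:ℂ)*Complex.I*(F v : ℝ)) = 0 :=
      fun u v => by rw [hF u v, sub_self]
    rw [hzero, norm_zero, zero_mul, zero_mul, zero_div]
  · refine ⟨(2*π+2)*n*3^n, ?_⟩
    intro P hP a r hr hrP F F' M hF hF'c hM
    have h := main_estimate (P := P) (a := a) (r := r) hn hP hr hrP F F' M hF hM
    rw [tsum_eq_gridsum P a r
      (fun y => Complex.exp (2 * π * Complex.I * F (fun i => ((y i : ℝ)))))]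
    exact h
end

section
/- Let a = (a_1,a_2,a_3,a_4) ∈ ℤ^4 and let p be a prime not dividing 3a_1a_2a_3a_4. Let N*(p) := #{x ∈ (ℤ/pℤ)^4 : a_1x_1^3 + a_2x_2^3 + a_3x_3^3 + a_4x_4^3 ≡ 0 (mod p) and x ≠ 0}. Then N*(p) = p^3 − 1 + p(p−1)·δ_p(a), where δ_p(a) := Σ χ_1(a_1)^{−1} χ_2(a_2)^{−1} χ_3(a_3)^{−1} χ_4(a_4)^{−1}, the sum being over all quadruples (χ_1,χ_2,χ_3,χ_4) of nontrivial characters of order 3 on 𝔽_p^* whose product χ_1χ_2χ_3χ_4 is the trivial character. (In particular δ_p(a) = 0 and N*(p) = p^3 − 1 when p ≡ 2 mod 3.) -/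
open Finset AddChar MulChar

open scoped Classical

section aux

variable {p : ℕ} [Fact p.Prime]

noncomputable instance : Fintype (MulChar (ZMod p) ℂ) := Fintype.ofFinite _

lemma card_p_sub_one : ((Fintype.card (ZMod p)ˣ : ℕ) : ℂ) = (p : ℂ) - 1 := by
  rw [ZMod.card_units_eq_totient, Nat.totient_prime Fact.out,
    Nat.cast_sub (Nat.Prime.one_lt (Fact.out : p.Prime)).le, Nat.cast_one]

lemma p_sub_one_ne_zero : (p : ℂ) - 1 ≠ 0 := by
  have h2 : (2 : ℕ) ≤ p := (Nat.Prime.two_le (Fact.out : p.Prime))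
  intro h
  rw [sub_eq_zero] at h
  have : ((p : ℕ) : ℂ) = ((1 : ℕ) : ℂ) := by simpa using h
  have := Nat.cast_injective (R := ℂ) this
  omega

lemma p_ne_zero_C : (p : ℂ) ≠ 0 := by
  have := (Fact.out : p.Prime).pos
  exact_mod_cast Nat.cast_ne_zero.mpr this.ne'

/-- Orthogonality: sum of a multiplicative character over all of `ZMod p`. -/
lemma sum_mulChar (φ : MulChar (ZMod p) ℂ) :
    ∑ t : ZMod p, φ t = if φ = 1 then (p : ℂ) - 1 else 0 := by
  split_ifs with h
  · rw [h, ← card_p_sub_one]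
    classical
    rw [MulChar.sum_one_eq_card_units]
  · exact MulChar.sum_eq_zero_of_ne_one h

/-- Orthogonality in the other direction: sum over all characters. -/
lemma sum_over_chars (v : ZMod p) :
    ∑ χ : MulChar (ZMod p) ℂ, χ v = if v = 1 then (p : ℂ) - 1 else 0 := by
  have := DirichletCharacter.sum_characters_eq (R := ℂ) (n := p) v
  rw [this]
  rcases eq_or_ne v 1 with h | h
  · simp only [h, if_true]
    rw [Nat.totient_prime Fact.out,
      Nat.cast_sub (Nat.Prime.one_lt (Fact.out : p.Prime)).le, Nat.cast_one]
  · simp [h]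

/-- number of cube roots of a nonzero element, as a character sum -/
lemma cube_count (u : ZMod p) (hu : u ≠ 0) :
    ((univ.filter (fun x : ZMod p => x ^ 3 = u)).card : ℂ)
      = ∑ χ ∈ univ.filter (fun χ : MulChar (ZMod p) ℂ => χ ^ 3 = 1), χ u := by
  have key : ∀ x : ZMod p,
      ∑ χ : MulChar (ZMod p) ℂ, χ (x ^ 3 * u⁻¹)
        = if x ^ 3 = u then (p : ℂ) - 1 else 0 := by
    intro x
    rw [sum_over_chars]
    congr 1
    simp only [eq_iff_iff]
    constructor
    · intro h; field_simp at h; exact h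
    · intro h; rw [h]; field_simp
  have lhs_eq : ∑ x : ZMod p, ∑ χ : MulChar (ZMod p) ℂ, χ (x ^ 3 * u⁻¹)
      = ((p : ℂ) - 1) * ((univ.filter (fun x : ZMod p => x ^ 3 = u)).card : ℂ) := by
    rw [Finset.sum_congr rfl (fun x _ => key x), ← Finset.sum_filter, Finset.sum_const,
      nsmul_eq_mul, mul_comm]
  have rhs_eq : ∑ x : ZMod p, ∑ χ : MulChar (ZMod p) ℂ, χ (x ^ 3 * u⁻¹)
      = ((p : ℂ) - 1) * ∑ χ ∈ univ.filter (fun χ : MulChar (ZMod p) ℂ => χ ^ 3 = 1), χ u := by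
    rw [Finset.sum_comm]
    have step : ∀ χ : MulChar (ZMod p) ℂ, ∑ x : ZMod p, χ (x ^ 3 * u⁻¹)
        = if χ ^ 3 = 1 then χ u⁻¹ * ((p : ℂ) - 1) else 0 := by
      intro χ
      have : ∑ x : ZMod p, χ (x ^ 3 * u⁻¹) = χ u⁻¹ * ∑ x : ZMod p, (χ ^ 3) x := by
        rw [Finset.mul_sum]
        refine Finset.sum_congr rfl fun x _ => ?_
        rw [map_mul, map_pow, ← MulChar.pow_apply' χ (by norm_num) x, mul_comm]
      rw [this, sum_mulChar]
      split_ifs with h <;> simp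
    rw [Finset.sum_congr rfl (fun χ _ => step χ), ← Finset.sum_filter, ← Finset.sum_mul,
      mul_comm]
    congr 1
    -- reindex χ ↦ χ⁻¹
    refine Finset.sum_bij' (fun χ _ => χ⁻¹) (fun χ _ => χ⁻¹) ?_ ?_ ?_ ?_ ?_
    · intro χ hχ
      simp only [Finset.mem_filter, Finset.mem_univ, true_and] at hχ ⊢
      rw [inv_pow, hχ, inv_one]
    · intro χ hχ
      simp only [Finset.mem_filter, Finset.mem_univ, true_and] at hχ ⊢
      rw [inv_pow, hχ, inv_one]
    · intro χ _; simp
    · intro χ _; simp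
    · intro χ _
      rw [MulChar.inv_apply' χ u]
  have := lhs_eq.symm.trans rhs_eq
  exact mul_left_cancel₀ p_sub_one_ne_zero this

end aux

section withpsi

variable {p : ℕ} [Fact p.Prime] {ψ : AddChar (ZMod p) ℂ}

/-- twisted Gauss sum -/
lemma twisted_gauss (χ : MulChar (ZMod p) ℂ) {c : ZMod p} (hc : c ≠ 0) :
    ∑ u : ZMod p, χ u * ψ (c * u) = χ⁻¹ c * gaussSum χ ψ := by
  lift c to (ZMod p)ˣ using Ne.isUnit hc
  have h := gaussSum_mulShift χ ψ c
  have h2 : gaussSum χ (AddChar.mulShift ψ c) = ∑ u : ZMod p, χ u * ψ (c * u) := by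
    unfold gaussSum
    refine Finset.sum_congr rfl fun u _ => ?_
    rw [AddChar.mulShift_apply]
  rw [h2] at h
  have hinv : (χ⁻¹ (c : ZMod p)) * (χ (c : ZMod p)) = 1 := by
    rw [← MulChar.mul_apply, MulChar.inv_mul, MulChar.one_apply_coe]
  calc ∑ u : ZMod p, χ u * ψ (c * u)
      = (χ⁻¹ (c : ZMod p) * χ (c : ZMod p)) * ∑ u : ZMod p, χ u * ψ (c * u) := by
        rw [hinv, one_mul]
    _ = χ⁻¹ (c : ZMod p) * (χ (c : ZMod p) * ∑ u : ZMod p, χ u * ψ (c * u)) := by ring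
    _ = χ⁻¹ (c : ZMod p) * gaussSum χ ψ := by rw [h]

/-- For a nontrivial cubic character pair, the product of Gauss sums is `p`. -/
lemma gauss_pair (hψ : ψ.IsPrimitive) {χ : MulChar (ZMod p) ℂ} (h3 : χ ^ 3 = 1) (h1 : χ ≠ 1) :
    gaussSum χ ψ * gaussSum χ⁻¹ ψ = (p : ℂ) := by
  have hminus : χ⁻¹ (-1) = 1 := by
    refine MulChar.val_neg_one_eq_one_of_odd_order (n := 3) (by decide) ?_
    rw [inv_pow, h3, inv_one]
  have h := gaussSum_mul_gaussSum_eq_card h1 hψ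
  have h2 := mul_gaussSum_inv_eq_gaussSum χ⁻¹ ψ
  rw [hminus, one_mul] at h2
  rw [← h2, h, ZMod.card]


lemma cubic_cases {χ₁ χ₂ : MulChar (ZMod p) ℂ} (h₁3 : χ₁ ^ 3 = 1) (h₁1 : χ₁ ≠ 1)
    (h₂3 : χ₂ ^ 3 = 1) (h₂1 : χ₂ ≠ 1) : χ₁ = χ₂ ∨ χ₁ = χ₂⁻¹ := by
  obtain ⟨g, hg⟩ := IsCyclic.exists_generator (α := (ZMod p)ˣ)
  have val3 : ∀ {χ : MulChar (ZMod p) ℂ}, χ ^ 3 = 1 → (χ (g : ZMod p)) ^ 3 = 1 := by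
    intro χ h
    rw [← MulChar.pow_apply_coe, h, MulChar.one_apply_coe]
  have val1 : ∀ {χ : MulChar (ZMod p) ℂ}, χ ≠ 1 → χ (g : ZMod p) ≠ 1 := by
    intro χ h hval
    exact h ((MulChar.eq_iff hg χ 1).mpr (by rw [hval, MulChar.one_apply_coe]))
  set z₁ := χ₁ (g : ZMod p) with hz₁
  set z₂ := χ₂ (g : ZMod p) with hz₂
  have q : ∀ {z : ℂ}, z ^ 3 = 1 → z ≠ 1 → z ^ 2 + z + 1 = 0 := by
    intro z h3 h1
    have : (z - 1) * (z ^ 2 + z + 1) = 0 := by ring_nf; linear_combination h3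
    rcases mul_eq_zero.mp this with h | h
    · exact absurd (sub_eq_zero.mp h) h1
    · exact h
  have q₁ := q (val3 h₁3) (val1 h₁1)
  have q₂ := q (val3 h₂3) (val1 h₂1)
  have key : z₁ = z₂ ∨ z₁ = z₂ ^ 2 := by
    have : (z₁ - z₂) * (z₁ + z₂ + 1) = 0 := by linear_combination q₁ - q₂
    rcases mul_eq_zero.mp this with h | h
    · left; exact sub_eq_zero.mp h
    · right; linear_combination h - q₂
  rcases key with h | h
  · exact Or.inl ((MulChar.eq_iff hg χ₁ χ₂).mpr h)
  · right
    have hint : χ₂ ((g⁻¹ : (ZMod p)ˣ) : ZMod p) * z₂ = 1 := by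
      rw [hz₂, ← map_mul]
      norm_cast
      rw [inv_mul_cancel g, Units.val_one, map_one]
    have h3 : z₂ ^ 3 = 1 := val3 h₂3
    have hz2ne : z₂ ≠ 0 := by
      intro h0
      rw [h0] at h3
      norm_num at h3
    have hkey : χ₂⁻¹ (g : ZMod p) = z₂ ^ 2 := by
      rw [MulChar.inv_apply' χ₂, ← Units.val_inv_eq_inv_val]
      refine mul_right_cancel₀ hz2ne ?_
      rw [hint]
      linear_combination -h3
    refine (MulChar.eq_iff hg χ₁ χ₂⁻¹).mpr ?_
    rw [hkey]
    exact h
  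

end withpsi

section three
variable {p : ℕ} [Fact p.Prime] {ψ : AddChar (ZMod p) ℂ}

lemma four_gauss (hψ : ψ.IsPrimitive) {χ : Fin 4 → MulChar (ZMod p) ℂ}
    (h3 : ∀ i, (χ i) ^ 3 = 1) (h1 : ∀ i, χ i ≠ 1) (hprod : ∏ i, χ i = 1) :
    ∏ i, gaussSum (χ i) ψ = (p : ℂ) ^ 2 := by
  rw [Fin.prod_univ_four] at hprod ⊢
  have pair := fun (i : Fin 4) => gauss_pair hψ (h3 i) (h1 i)
  by_cases h01 : χ 1 = (χ 0)⁻¹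
  · have h23 : χ 3 = (χ 2)⁻¹ := by
      rw [h01] at hprod
      have : χ 2 * χ 3 = 1 := by
        have := hprod
        rwa [mul_inv_cancel, one_mul] at this
      exact eq_inv_of_mul_eq_one_left (by rw [mul_comm]; exact this)
    rw [h01, h23]
    have e : gaussSum (χ 0) ψ * gaussSum (χ 0)⁻¹ ψ * gaussSum (χ 2) ψ * gaussSum (χ 2)⁻¹ ψ
        = (gaussSum (χ 0) ψ * gaussSum (χ 0)⁻¹ ψ) * (gaussSum (χ 2) ψ * gaussSum (χ 2)⁻¹ ψ) := by
      ring
    rw [e, pair 0, pair 2, sq]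
  · have h10 : χ 1 = χ 0 := by
      rcases cubic_cases (h3 1) (h1 1) (h3 0) (h1 0) with h | h
      · exact h
      · exact absurd h h01
    by_cases h20 : χ 2 = (χ 0)⁻¹
    · have h30 : χ 3 = (χ 0)⁻¹ := by
        rw [h10, h20] at hprod
        have e : χ 0 * χ 0 * (χ 0)⁻¹ * χ 3 = χ 0 * χ 3 := by group
        rw [e] at hprod
        exact eq_inv_of_mul_eq_one_left (by rw [mul_comm]; exact hprod)
      rw [h10, h20, h30]
      have e : gaussSum (χ 0) ψ * gaussSum (χ 0) ψ * gaussSum (χ 0)⁻¹ ψ * gaussSum (χ 0)⁻¹ ψ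
          = (gaussSum (χ 0) ψ * gaussSum (χ 0)⁻¹ ψ) * (gaussSum (χ 0) ψ * gaussSum (χ 0)⁻¹ ψ) := by
        ring
      rw [e, pair 0, sq]
    · have h20' : χ 2 = χ 0 := by
        rcases cubic_cases (h3 2) (h1 2) (h3 0) (h1 0) with h | h
        · exact h
        · exact absurd h h20
      exfalso
      rw [h10, h20'] at hprod
      have e : χ 0 * χ 0 * χ 0 * χ 3 = χ 0 ^ 3 * χ 3 := by rw [pow_succ, pow_two]
      rw [e, h3 0, one_mul] at hprod
      exact h1 3 hprod

omit [Fact p.Prime] in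
lemma order_iff {χ : MulChar (ZMod p) ℂ} : orderOf χ = 3 ↔ (χ ^ 3 = 1 ∧ χ ≠ 1) := by
  constructor
  · intro h
    constructor
    · rw [← h]; exact pow_orderOf_eq_one χ
    · intro h1
      rw [h1, orderOf_one] at h
      norm_num at h
  · intro ⟨h3, h1⟩
    exact orderOf_eq_prime h3 h1

lemma prod_mulChar_apply {ι : Type*} (s : Finset ι) (χ : ι → MulChar (ZMod p) ℂ)
    {t : ZMod p} (ht : t ≠ 0) :
    (∏ i ∈ s, χ i) t = ∏ i ∈ s, χ i t := by
  induction s using Finset.induction_on with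
  | empty =>
    simp only [Finset.prod_empty]
    lift t to (ZMod p)ˣ using Ne.isUnit ht
    exact MulChar.one_apply_coe t
  | insert _ _ hx ih =>
    rw [Finset.prod_insert hx, Finset.prod_insert hx, MulChar.mul_apply, ih]

end three

section four
variable {p : ℕ} [Fact p.Prime] {ψ : AddChar (ZMod p) ℂ}

lemma S_eval (hψ : ψ.IsPrimitive) {c : ZMod p} (hc : c ≠ 0) :
    ∑ x : ZMod p, ψ (c * x ^ 3)
      = ∑ χ ∈ univ.filter (fun χ : MulChar (ZMod p) ℂ => χ ^ 3 = 1 ∧ χ ≠ 1),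
          χ⁻¹ c * gaussSum χ ψ := by
  have fib : ∑ x : ZMod p, ψ (c * x ^ 3)
      = ∑ u : ZMod p, ∑ x ∈ univ.filter (fun x : ZMod p => x ^ 3 = u), ψ (c * u) :=
    (Finset.sum_fiberwise' univ (fun x : ZMod p => x ^ 3) (fun u => ψ (c * u))).symm
  rw [fib]
  have step2 : ∀ u : ZMod p,
      ∑ x ∈ univ.filter (fun x : ZMod p => x ^ 3 = u), ψ (c * u)
        = ((univ.filter (fun x : ZMod p => x ^ 3 = u)).card : ℂ) * ψ (c * u) := by
    intro u; rw [Finset.sum_const, nsmul_eq_mul]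
  rw [Finset.sum_congr rfl fun u _ => step2 u]
  rw [Finset.sum_eq_sum_sdiff_singleton_add (Finset.mem_univ (0 : ZMod p))]
  -- the u = 0 term equals 1
  have fib0 : (univ.filter (fun x : ZMod p => x ^ 3 = (0 : ZMod p))) = {0} := by
    ext x
    simp [pow_eq_zero_iff]
  rw [fib0]
  have term0 : ((({0} : Finset (ZMod p)).card : ℂ)) * ψ (c * 0) = 1 := by
    simp
  rw [term0]
  -- main part
  have main : ∑ u ∈ univ \ {(0 : ZMod p)},
      ((univ.filter (fun x : ZMod p => x ^ 3 = u)).card : ℂ) * ψ (c * u)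
      = ∑ χ ∈ univ.filter (fun χ : MulChar (ZMod p) ℂ => χ ^ 3 = 1),
          ∑ u : ZMod p, χ u * ψ (c * u) := by
    have cc : ∀ u ∈ univ \ {(0 : ZMod p)},
        ((univ.filter (fun x : ZMod p => x ^ 3 = u)).card : ℂ) * ψ (c * u)
          = ∑ χ ∈ univ.filter (fun χ : MulChar (ZMod p) ℂ => χ ^ 3 = 1), χ u * ψ (c * u) := by
      intro u hu
      rw [Finset.mem_sdiff, Finset.mem_singleton] at hu
      rw [cube_count u hu.2, Finset.sum_mul]
    rw [Finset.sum_congr rfl cc, Finset.sum_comm]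
    refine Finset.sum_congr rfl fun χ _ => ?_
    rw [Finset.sum_eq_sum_sdiff_singleton_add (Finset.mem_univ (0 : ZMod p))
      (fun u => χ u * ψ (c * u))]
    rw [MulChar.map_zero, zero_mul, add_zero]
  rw [main]
  -- split off the trivial character
  have h1mem : (1 : MulChar (ZMod p) ℂ) ∈ univ.filter
      (fun χ : MulChar (ZMod p) ℂ => χ ^ 3 = 1) := by
    simp
  rw [Finset.sum_eq_sum_sdiff_singleton_add h1mem (fun χ => ∑ u : ZMod p, χ u * ψ (c * u))]
  -- the trivial character contributes -1
  have hsum0 : ∑ u : ZMod p, ψ (c * u) = 0 := by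
    have := AddChar.sum_mulShift (R := ZMod p) (R' := ℂ) c hψ
    rw [if_neg hc, Nat.cast_zero] at this
    rw [← this]
    exact Finset.sum_congr rfl fun u _ => by rw [mul_comm]
  have hu_ne : ∑ u ∈ univ \ {(0 : ZMod p)}, ψ (c * u) = -1 := by
    have := Finset.sum_eq_sum_sdiff_singleton_add (Finset.mem_univ (0 : ZMod p))
      (fun u => ψ (c * u))
    rw [hsum0] at this
    have h0 : ψ (c * 0) = 1 := by rw [mul_zero, AddChar.map_zero_eq_one]
    rw [h0] at this
    linear_combination -this
  have htriv : ∑ u : ZMod p, (1 : MulChar (ZMod p) ℂ) u * ψ (c * u) = -1 := by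
    rw [Finset.sum_eq_sum_sdiff_singleton_add (Finset.mem_univ (0 : ZMod p))]
    rw [MulChar.map_zero, zero_mul, add_zero, ← hu_ne]
    refine Finset.sum_congr rfl fun u hu => ?_
    rw [Finset.mem_sdiff, Finset.mem_singleton] at hu
    have : IsUnit u := isUnit_iff_ne_zero.mpr hu.2
    lift u to (ZMod p)ˣ using this
    rw [MulChar.one_apply_coe, one_mul]
  rw [htriv]
  have hset : (univ.filter (fun χ : MulChar (ZMod p) ℂ => χ ^ 3 = 1)) \ {1}
      = univ.filter (fun χ : MulChar (ZMod p) ℂ => χ ^ 3 = 1 ∧ χ ≠ 1) := by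
    ext χ
    simp only [Finset.mem_sdiff, Finset.mem_filter, Finset.mem_univ, true_and,
      Finset.mem_singleton]
  rw [hset, Finset.sum_congr rfl fun χ _ => twisted_gauss χ hc]
  ring


end four

lemma addChar_map_sum {R : Type*} [AddCommMonoid R] {R' : Type*} [CommMonoid R']
    (ψ : AddChar R R') {ι : Type*} (s : Finset ι) (g : ι → R) :
    ψ (∑ i ∈ s, g i) = ∏ i ∈ s, ψ (g i) := by
  induction s using Finset.induction_on with
  | empty => simp [AddChar.map_zero_eq_one]
  | insert _ _ hx ih =>
    rw [Finset.sum_insert hx, Finset.prod_insert hx, AddChar.map_add_eq_mul, ih]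

theorem stmt_6 (p : ℕ) [Fact p.Prime] (a : Fin 4 → ℤ)
    (hp : ¬ ((p : ℤ) ∣ 3 * a 0 * a 1 * a 2 * a 3)) :
    (Nat.card {x : Fin 4 → ZMod p //
        (∑ i, (a i : ZMod p) * x i ^ 3 = 0) ∧ x ≠ 0} : ℂ)
      = (p : ℂ) ^ 3 - 1 + (p : ℂ) * ((p : ℂ) - 1) *
          ∑ᶠ (χ : Fin 4 → MulChar (ZMod p) ℂ)
            (_ : (∀ i, orderOf (χ i) = 3) ∧ ∏ i, χ i = 1),
            ∏ i, (χ i ((a i : ZMod p)))⁻¹ := by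
  classical
  have hpp : p.Prime := Fact.out
  haveI : NeZero p := ⟨hpp.ne_zero⟩
  have ha : ∀ i, ((a i : ℤ) : ZMod p) ≠ 0 := by
    intro i h
    rw [ZMod.intCast_zmod_eq_zero_iff_dvd] at h
    apply hp
    fin_cases i
    · exact (((h.mul_left 3).mul_right (a 1)).mul_right (a 2)).mul_right (a 3)
    · exact ((h.mul_left (3 * a 0)).mul_right (a 2)).mul_right (a 3)
    · exact (h.mul_left (3 * a 0 * a 1)).mul_right (a 3)
    · exact h.mul_left (3 * a 0 * a 1 * a 2)
  set b : Fin 4 → ZMod p := fun i => ((a i : ℤ) : ZMod p) with hb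
  have hbne : ∀ i, b i ≠ 0 := ha
  set ζ : ℂ := Complex.exp (2 * Real.pi * Complex.I / p) with hζ
  have hζprim : IsPrimitiveRoot ζ p := Complex.isPrimitiveRoot_exp p hpp.ne_zero
  set ψ : AddChar (ZMod p) ℂ :=
    AddChar.zmodChar p ((IsPrimitiveRoot.iff_def ζ p).mp hζprim).left with hψdef
  have hψ : ψ.IsPrimitive := AddChar.zmodChar_primitive_of_primitive_root p hζprim
  set T : Finset (Fin 4 → ZMod p) :=
    univ.filter (fun x => ∑ i, b i * x i ^ 3 = 0) with hT
  set C : Finset (MulChar (ZMod p) ℂ) :=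
    univ.filter (fun χ : MulChar (ZMod p) ℂ => χ ^ 3 = 1 ∧ χ ≠ 1) with hC
  set R : Finset (Fin 4 → MulChar (ZMod p) ℂ) :=
    univ.filter (fun χ : Fin 4 → MulChar (ZMod p) ℂ =>
      (∀ i, orderOf (χ i) = 3) ∧ ∏ i, χ i = 1) with hR
  set Δ : ℂ := ∑ χ ∈ R, ∏ i, ((χ i) (b i))⁻¹ with hΔ
  have hzero_mem : (0 : Fin 4 → ZMod p) ∈ T := by
    simp [hT]
  -- Step 1: counting
  have cardA : (Nat.card {x : Fin 4 → ZMod p //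
      (∑ i, (a i : ZMod p) * x i ^ 3 = 0) ∧ x ≠ 0} : ℂ) = (T.card : ℂ) - 1 := by
    rw [Nat.card_eq_fintype_card, Fintype.card_subtype]
    have hsets : univ.filter (fun x : Fin 4 → ZMod p =>
        (∑ i, (a i : ZMod p) * x i ^ 3 = 0) ∧ x ≠ 0) = T.erase 0 := by
      ext x
      simp only [Finset.mem_filter, Finset.mem_univ, true_and, Finset.mem_erase, hT]
      tauto
    rw [hsets, Finset.card_erase_of_mem hzero_mem]
    have h1 : 1 ≤ T.card := Finset.card_pos.mpr ⟨0, hzero_mem⟩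
    rw [Nat.cast_sub h1, Nat.cast_one]
  rw [cardA]
  -- Step 2: the main character computation
  have inner_t : ∀ x : Fin 4 → ZMod p,
      ∑ t : ZMod p, ψ (t * ∑ i, b i * x i ^ 3)
        = if (∑ i, b i * x i ^ 3) = 0 then (p : ℂ) else 0 := by
    intro x
    have := AddChar.sum_mulShift (∑ i, b i * x i ^ 3) hψ
    rw [ZMod.card] at this
    rw [this]
    split_ifs <;> simp
  have lhs_eq : ∑ x : Fin 4 → ZMod p, ∑ t : ZMod p, ψ (t * ∑ i, b i * x i ^ 3)
      = (T.card : ℂ) * p := by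
    rw [Finset.sum_congr rfl fun x _ => inner_t x, ← Finset.sum_filter, ← hT,
      Finset.sum_const, nsmul_eq_mul]
  have factor : ∀ t : ZMod p,
      ∑ x : Fin 4 → ZMod p, ψ (t * ∑ i, b i * x i ^ 3)
        = ∏ i, ∑ y : ZMod p, ψ (t * b i * y ^ 3) := by
    intro t
    have e1 : ∀ x : Fin 4 → ZMod p,
        ψ (t * ∑ i, b i * x i ^ 3) = ∏ i, ψ (t * b i * x i ^ 3) := by
      intro x
      rw [Finset.mul_sum, addChar_map_sum]
      exact Finset.prod_congr rfl fun i _ => by rw [← mul_assoc]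
    rw [Finset.sum_congr rfl fun x _ => e1 x]
    calc ∑ x : Fin 4 → ZMod p, ∏ i, ψ (t * b i * x i ^ 3)
        = ∑ x ∈ Fintype.piFinset (fun _ : Fin 4 => (univ : Finset (ZMod p))),
            ∏ i, ψ (t * b i * x i ^ 3) := by rw [Fintype.piFinset_univ]
      _ = ∏ i, ∑ y : ZMod p, ψ (t * b i * y ^ 3) :=
          Finset.sum_prod_piFinset univ (fun i y => ψ (t * b i * y ^ 3))
  have zero_t : ∏ i : Fin 4, ∑ y : ZMod p, ψ ((0 : ZMod p) * b i * y ^ 3) = (p : ℂ) ^ 4 := by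
    have e : ∀ i : Fin 4, ∑ y : ZMod p, ψ ((0 : ZMod p) * b i * y ^ 3) = (p : ℂ) := by
      intro i
      have : ∀ y : ZMod p, ψ ((0 : ZMod p) * b i * y ^ 3) = 1 := by
        intro y
        rw [zero_mul, zero_mul, AddChar.map_zero_eq_one]
      rw [Finset.sum_congr rfl fun y _ => this y, Finset.sum_const, nsmul_eq_mul,
        mul_one, Finset.card_univ, ZMod.card]
    rw [Finset.prod_congr rfl fun i _ => e i, Finset.prod_const]
    norm_num
  -- the sum over nonzero t
  have nonzero_t : ∑ t ∈ univ \ {(0 : ZMod p)}, ∏ i, ∑ y : ZMod p, ψ (t * b i * y ^ 3)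
      = (p : ℂ) ^ 2 * ((p : ℂ) - 1) * Δ := by
    have step1 : ∀ t ∈ univ \ {(0 : ZMod p)},
        ∏ i, ∑ y : ZMod p, ψ (t * b i * y ^ 3)
          = ∑ η ∈ Fintype.piFinset (fun _ : Fin 4 => C),
              ∏ i, ((η i)⁻¹ (t * b i) * gaussSum (η i) ψ) := by
      intro t ht
      rw [Finset.mem_sdiff, Finset.mem_singleton] at ht
      have hti : ∀ i : Fin 4, t * b i ≠ 0 := fun i => mul_ne_zero ht.2 (hbne i)
      have e : ∀ i : Fin 4, ∑ y : ZMod p, ψ (t * b i * y ^ 3)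
          = ∑ χ ∈ C, χ⁻¹ (t * b i) * gaussSum χ ψ := fun i => S_eval hψ (hti i)
      rw [Finset.prod_congr rfl fun i _ => e i, Finset.prod_univ_sum]
    rw [Finset.sum_congr rfl step1, Finset.sum_comm]
    have step2 : ∀ η ∈ Fintype.piFinset (fun _ : Fin 4 => C),
        ∑ t ∈ univ \ {(0 : ZMod p)}, ∏ i, ((η i)⁻¹ (t * b i) * gaussSum (η i) ψ)
          = (if ∏ i, η i = 1 then ((p : ℂ) - 1) else 0)
              * ∏ i, ((η i)⁻¹ (b i) * gaussSum (η i) ψ) := by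
      intro η hη
      have hsplit : ∀ t ∈ univ \ {(0 : ZMod p)},
          ∏ i, ((η i)⁻¹ (t * b i) * gaussSum (η i) ψ)
            = ((∏ i, η i)⁻¹ t) * ∏ i, ((η i)⁻¹ (b i) * gaussSum (η i) ψ) := by
        intro t ht
        rw [Finset.mem_sdiff, Finset.mem_singleton] at ht
        have e : ∀ i : Fin 4, (η i)⁻¹ (t * b i) * gaussSum (η i) ψ
            = (η i)⁻¹ t * ((η i)⁻¹ (b i) * gaussSum (η i) ψ) := by
          intro i; rw [map_mul]; ring
        rw [Finset.prod_congr rfl fun i _ => e i, Finset.prod_mul_distrib]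
        congr 1
        rw [← prod_mulChar_apply univ _ ht.2, Finset.prod_inv_distrib]
      rw [Finset.sum_congr rfl hsplit, ← Finset.sum_mul]
      congr 1
      have e2 : ∑ t ∈ univ \ {(0 : ZMod p)}, (∏ i, η i)⁻¹ t
          = ∑ t : ZMod p, (∏ i, η i)⁻¹ t := by
        symm
        rw [Finset.sum_eq_sum_sdiff_singleton_add (Finset.mem_univ (0 : ZMod p)),
          MulChar.map_zero, add_zero]
      rw [e2, sum_mulChar]
      simp [inv_eq_one]
    rw [Finset.sum_congr rfl step2]
    have step3 : ∀ η ∈ Fintype.piFinset (fun _ : Fin 4 => C),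
        (if ∏ i, η i = 1 then ((p : ℂ) - 1) else 0)
            * ∏ i, ((η i)⁻¹ (b i) * gaussSum (η i) ψ)
          = if ∏ i, η i = 1 then
              (((p : ℂ) - 1) * ∏ i, ((η i)⁻¹ (b i) * gaussSum (η i) ψ)) else 0 := by
      intro η hη
      split_ifs <;> simp
    rw [Finset.sum_congr rfl step3, ← Finset.sum_filter]
    have setEq : (Fintype.piFinset (fun _ : Fin 4 => C)).filter
        (fun η => ∏ i, η i = 1) = R := by
      ext η
      simp only [Finset.mem_filter, Fintype.mem_piFinset, hC, hR, Finset.mem_univ,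
        true_and, order_iff]
    rw [setEq]
    have term_eq : ∀ η ∈ R,
        ((p : ℂ) - 1) * ∏ i, ((η i)⁻¹ (b i) * gaussSum (η i) ψ)
          = ((p : ℂ) - 1) * ((p : ℂ) ^ 2 * ∏ i, ((η i) (b i))⁻¹) := by
      intro η hη
      rw [hR, Finset.mem_filter] at hη
      have h3 : ∀ i, (η i) ^ 3 = 1 := fun i => (order_iff.mp (hη.2.1 i)).1
      have h1 : ∀ i, η i ≠ 1 := fun i => (order_iff.mp (hη.2.1 i)).2
      rw [Finset.prod_mul_distrib, four_gauss hψ h3 h1 hη.2.2]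
      have e : ∀ i : Fin 4, (η i)⁻¹ (b i) = ((η i) (b i))⁻¹ := fun i =>
        MulChar.inv_apply_eq_inv' (η i) (b i)
      rw [Finset.prod_congr rfl fun i _ => e i]
      ring
    rw [Finset.sum_congr rfl term_eq, ← Finset.mul_sum, ← Finset.mul_sum, ← hΔ]
    ring
  have key : (T.card : ℂ) * p = (p : ℂ) ^ 4 + (p : ℂ) ^ 2 * ((p : ℂ) - 1) * Δ := by
    rw [← lhs_eq, Finset.sum_comm, Finset.sum_congr rfl fun t _ => factor t,
      Finset.sum_eq_sum_sdiff_singleton_add (Finset.mem_univ (0 : ZMod p)), zero_t,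
      nonzero_t, add_comm]
  -- Step 3: the finsum is Δ
  have finsum_eq : ∑ᶠ (χ : Fin 4 → MulChar (ZMod p) ℂ)
      (_ : (∀ i, orderOf (χ i) = 3) ∧ ∏ i, χ i = 1),
      ∏ i, (χ i ((a i : ZMod p)))⁻¹ = Δ := by
    rw [hΔ]
    exact finsum_cond_eq_sum_of_cond_iff _ (fun {χ} _ => by simp [hR])
  rw [finsum_eq]
  have hTval : (T.card : ℂ) = (p : ℂ) ^ 3 + (p : ℂ) * ((p : ℂ) - 1) * Δ := by
    have hpne : (p : ℂ) ≠ 0 := p_ne_zero_C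
    apply mul_right_cancel₀ hpne
    rw [key]; ring
  rw [hTval]; ring
end

section
/- Let a = (a_1,a_2,a_3,a_4) ∈ ℤ^4, set C(x) := a_1x_1^3 + a_2x_2^3 + a_3x_3^3 + a_4x_4^3, and for q ∈ ℕ let N*(q) := #{x ∈ (ℤ/qℤ)^4 : C(x) ≡ 0 (mod q) and gcd(q, x_1, x_2, x_3, x_4) = 1}. Then for every integer e ≥ 1 and every prime p not dividing 3a_1a_2a_3a_4, one has N*(p^e) = p^{3e−3} · N*(p). -/
private lemma sum_split {p : ℕ} (i0 : Fin 4) (f : Fin 4 → ZMod p) :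
    ∑ i, f i = f i0 + ∑ j : {j : Fin 4 // j ≠ i0}, f j := by
  rw [Fintype.sum_eq_add_sum_compl i0 f,
    Finset.sum_subtype (p := fun j => j ≠ i0) _ (fun x => by simp) f]

private lemma affine_count (p : ℕ) [Fact p.Prime] (b : Fin 4 → ZMod p) (i0 : Fin 4)
    (hb : b i0 ≠ 0) (d : ZMod p) :
    Nat.card {t : Fin 4 → ZMod p // ∑ i, b i * t i = d} = p ^ 3 := by
  let E : {t : Fin 4 → ZMod p // ∑ i, b i * t i = d} ≃ ({j : Fin 4 // j ≠ i0} → ZMod p) :=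
  { toFun := fun t j => t.1 j
    invFun := fun r => ⟨fun i => if h : i = i0 then
        (b i0)⁻¹ * (d - ∑ j : {j : Fin 4 // j ≠ i0}, b j * r j) else r ⟨i, h⟩, by
      rw [sum_split i0]
      have : ∀ j : {j : Fin 4 // j ≠ i0}, b j * (if h : (j : Fin 4) = i0 then
          (b i0)⁻¹ * (d - ∑ j : {j : Fin 4 // j ≠ i0}, b j * r j) else r ⟨j, h⟩) = b j * r j := by
        intro j; rw [dif_neg j.2]
      rw [Finset.sum_congr rfl (fun j _ => this j)]
      beta_reduce
      rw [dif_pos rfl, ← mul_assoc, mul_inv_cancel₀ hb, one_mul]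
      ring⟩
    left_inv := fun t => by
      apply Subtype.ext
      funext i
      by_cases h : i = i0
      · subst h
        have ht := t.2
        rw [sum_split i] at ht
        show (if h : i = i then (b i)⁻¹ * (d - ∑ j : {j : Fin 4 // j ≠ i}, b j * t.1 j)
          else t.1 i) = t.1 i
        rw [dif_pos rfl, inv_mul_eq_iff_eq_mul₀ hb]
        linear_combination -ht
      · show (if hh : i = i0 then _ else t.1 i) = t.1 i
        rw [dif_neg h]
    right_inv := fun r => by
      funext j
      show (if hh : (j : Fin 4) = i0 then _ else r ⟨j, hh⟩) = r j
      rw [dif_neg j.2] }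
  rw [Nat.card_congr E, Nat.card_eq_fintype_card, Fintype.card_fun, ZMod.card]
  congr 1
  rw [Fintype.card_subtype_compl (p := fun j => j = i0)]
  simp [Fintype.card_subtype_eq]

private lemma dvd_val_iff {p m : ℕ} [NeZero m] (hpm : p ∣ m) (z : ZMod m) :
    p ∣ z.val ↔ ZMod.castHom hpm (ZMod p) z = 0 := by
  rw [ZMod.castHom_apply, ← ZMod.natCast_val, ZMod.natCast_eq_zero_iff]

private lemma prim_iff {p : ℕ} (hp : p.Prime) {k : ℕ} (hk : k ≠ 0) [NeZero (p ^ k)]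
    (x : Fin 4 → ZMod (p ^ k)) :
    Nat.gcd (p ^ k) (Finset.univ.gcd fun i => (x i).val) = 1 ↔ ∃ i, ¬ p ∣ (x i).val := by
  rw [show (Nat.gcd (p^k) (Finset.univ.gcd fun i => (x i).val) = 1) ↔
      Nat.Coprime (p^k) (Finset.univ.gcd fun i => (x i).val) from Iff.rfl,
    Nat.coprime_pow_left_iff (Nat.pos_of_ne_zero hk),
    Nat.Prime.coprime_iff_not_dvd hp, Finset.dvd_gcd_iff]
  push_neg
  simp

private lemma comp_cast {p m n : ℕ} (hmn : m ∣ n) (hpm : p ∣ m) (z : ZMod n) :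
    ZMod.castHom hpm (ZMod p) (ZMod.castHom hmn (ZMod m) z)
      = ZMod.castHom (hpm.trans hmn) (ZMod p) z := by
  rw [← RingHom.comp_apply, ZMod.castHom_comp]

private lemma pe_mul_dvd_iff {p : ℕ} (hp : p.Prime) (e : ℕ) (z : ℤ) :
    ((p ^ (e+1) : ℕ) : ℤ) ∣ (p:ℤ)^e * z ↔ ((p:ℕ) : ℤ) ∣ z := by
  have h0 : ((p:ℤ))^e ≠ 0 := pow_ne_zero e (Int.natCast_ne_zero.mpr hp.ne_zero)
  rw [show ((p^(e+1):ℕ):ℤ) = (p:ℤ)^e * (p:ℤ) by push_cast; ring, mul_dvd_mul_iff_left h0]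

private lemma step_up (a : Fin 4 → ℤ) (p : ℕ) (hp : p.Prime)
    (hpa : ¬ ((p : ℤ) ∣ 3 * a 0 * a 1 * a 2 * a 3)) (e : ℕ) (he : 1 ≤ e) :
    Nat.card {x : Fin 4 → ZMod (p ^ (e+1)) //
        (∑ i, (a i : ZMod (p ^ (e+1))) * x i ^ 3 = 0) ∧
        Nat.gcd (p ^ (e+1)) (Finset.univ.gcd fun i => (x i).val) = 1}
      = p ^ 3 * Nat.card {x : Fin 4 → ZMod (p ^ e) //
        (∑ i, (a i : ZMod (p ^ e)) * x i ^ 3 = 0) ∧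
        Nat.gcd (p ^ e) (Finset.univ.gcd fun i => (x i).val) = 1} := by
  haveI := Fact.mk hp
  haveI hM : NeZero (p ^ e) := ⟨pow_ne_zero e hp.ne_zero⟩
  haveI hN : NeZero (p ^ (e+1)) := ⟨pow_ne_zero (e+1) hp.ne_zero⟩
  have hMN : p ^ e ∣ p ^ (e+1) := pow_dvd_pow p (Nat.le_succ e)
  have hpM : p ∣ p ^ e := dvd_pow_self p (by omega)
  have hpN : p ∣ p ^ (e+1) := dvd_pow_self p (by omega)
  have hpint : Prime ((p:ℕ) : ℤ) := Nat.prime_iff_prime_int.mp hp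
  have hp3 : ¬ ((p:ℕ):ℤ) ∣ 3 := fun h => hpa (h.trans ⟨a 0 * a 1 * a 2 * a 3, by ring⟩)
  have hai : ∀ i, ¬ ((p:ℕ):ℤ) ∣ a i := by
    intro i h
    apply hpa
    fin_cases i
    · exact h.trans ⟨3 * a 1 * a 2 * a 3,
        show 3 * a 0 * a 1 * a 2 * a 3 = a 0 * (3 * a 1 * a 2 * a 3) by ring⟩
    · exact h.trans ⟨3 * a 0 * a 2 * a 3,
        show 3 * a 0 * a 1 * a 2 * a 3 = a 1 * (3 * a 0 * a 2 * a 3) by ring⟩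
    · exact h.trans ⟨3 * a 0 * a 1 * a 3,
        show 3 * a 0 * a 1 * a 2 * a 3 = a 2 * (3 * a 0 * a 1 * a 3) by ring⟩
    · exact h.trans ⟨3 * a 0 * a 1 * a 2,
        show 3 * a 0 * a 1 * a 2 * a 3 = a 3 * (3 * a 0 * a 1 * a 2) by ring⟩
  set π := ZMod.castHom hMN (ZMod (p ^ e)) with hπdef
  have hvalt : ∀ s : ZMod p, (((s.val : ℕ) : ℤ) : ZMod p) = s := fun s => by
    push_cast
    simp [ZMod.natCast_val, ZMod.cast_id]
  -- the reduction map between solution sets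
  have hcube : ∀ y : Fin 4 → ZMod (p ^ (e+1)),
      (∑ i, (a i : ZMod (p ^ (e+1))) * y i ^ 3 = 0) →
      ∑ i, (a i : ZMod (p ^ e)) * (π (y i)) ^ 3 = 0 := by
    intro y hy
    have h2 := congrArg π hy
    simpa [map_sum] using h2
  have hprim : ∀ y : Fin 4 → ZMod (p ^ (e+1)),
      ((Nat.gcd (p ^ (e+1)) (Finset.univ.gcd fun i => (y i).val) = 1) ↔
      (Nat.gcd (p ^ e) (Finset.univ.gcd fun i => (π (y i)).val) = 1)) := by
    intro y
    rw [prim_iff hp (by omega), prim_iff hp (by omega)]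
    apply exists_congr; intro i
    rw [dvd_val_iff hpN, dvd_val_iff hpM, hπdef, comp_cast hMN hpM]
  let F : {x : Fin 4 → ZMod (p ^ (e+1)) //
        (∑ i, (a i : ZMod (p ^ (e+1))) * x i ^ 3 = 0) ∧
        Nat.gcd (p ^ (e+1)) (Finset.univ.gcd fun i => (x i).val) = 1} →
      {x : Fin 4 → ZMod (p ^ e) //
        (∑ i, (a i : ZMod (p ^ e)) * x i ^ 3 = 0) ∧
        Nat.gcd (p ^ e) (Finset.univ.gcd fun i => (x i).val) = 1} :=
    fun y => ⟨fun i => π (y.1 i), hcube _ y.2.1, (hprim _).mp y.2.2⟩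
  have fiber_card : ∀ x, Nat.card {y // F y = x} = p ^ 3 := by
    intro x
    obtain ⟨i0, hi0⟩ := (prim_iff hp (by omega) x.1).mp x.2.2
    set X : Fin 4 → ℤ := fun i => ((x.1 i).val : ℤ) with hXdef
    have hXcast : ∀ i, ((X i : ℤ) : ZMod (p ^ e)) = x.1 i := fun i => by
      simp only [hXdef]
      push_cast
      simp [ZMod.natCast_val, ZMod.cast_id]
    have hS : ((p ^ e : ℕ) : ℤ) ∣ ∑ i, a i * X i ^ 3 := by
      rw [← ZMod.intCast_zmod_eq_zero_iff_dvd]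
      have h1 : ((∑ i, a i * X i ^ 3 : ℤ) : ZMod (p ^ e))
          = ∑ i, (a i : ZMod (p ^ e)) * (x.1 i) ^ 3 := by
        push_cast
        exact Finset.sum_congr rfl fun i _ => by rw [hXcast]
      rw [h1]; exact x.2.1
    obtain ⟨c, hc⟩ := hS
    set Y : (Fin 4 → ZMod p) → (Fin 4 → ZMod (p ^ (e+1))) :=
      fun t i => ((X i + (p:ℤ)^e * ((t i).val : ℤ) : ℤ) : ZMod (p ^ (e+1))) with hYdef
    have hpe0 : ((p : ZMod (p ^ e)))^e = 0 := by
      rw [← Nat.cast_pow, ZMod.natCast_self]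
    have hπY : ∀ t i, π (Y t i) = x.1 i := by
      intro t i
      simp only [hYdef, hπdef]
      rw [map_intCast]
      push_cast
      rw [hXcast i, hpe0]
      ring
    have hY_modp : ∀ t i, ZMod.castHom hpN (ZMod p) (Y t i) = ((X i : ℤ) : ZMod p) := by
      intro t i
      simp only [hYdef]
      rw [map_intCast]
      push_cast
      rw [ZMod.natCast_self, zero_pow (by omega : e ≠ 0)]
      ring
    have hprimY : ∀ t, Nat.gcd (p^(e+1)) (Finset.univ.gcd fun i => (Y t i).val) = 1 := by
      intro t
      rw [prim_iff hp (by omega)]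
      refine ⟨i0, ?_⟩
      rw [dvd_val_iff hpN, hY_modp t i0]
      intro h0
      rw [ZMod.intCast_zmod_eq_zero_iff_dvd] at h0
      simp only [hXdef] at h0
      exact hi0 (Int.natCast_dvd_natCast.mp h0)
    have hLHS : ∀ t, (∑ i, (a i : ZMod (p^(e+1))) * (Y t i) ^ 3)
        = ((∑ i, a i * (X i + (p:ℤ)^e * ((t i).val : ℤ)) ^ 3 : ℤ) : ZMod (p^(e+1))) := by
      intro t
      simp only [hYdef]
      push_cast
      ring
    have h2e0 : ((p : ZMod (p^(e+1))))^(2*e) = 0 := by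
      rw [← Nat.cast_pow, ZMod.natCast_eq_zero_iff]
      exact pow_dvd_pow p (by omega)
    have hkey : ∀ t, (∑ i, (a i : ZMod (p^(e+1))) * (Y t i) ^ 3 = 0) ↔
        ((c : ZMod p) + ∑ i, ((3 * a i * X i ^ 2 : ℤ) : ZMod p) * t i = 0) := by
      intro t
      rw [hLHS t]
      have hint : (∑ i, a i * (X i + (p:ℤ)^e * ((t i).val:ℤ)) ^ 3)
          = (p:ℤ)^e * (c + ∑ i, 3 * a i * X i^2 * ((t i).val:ℤ))
            + (p:ℤ)^(2*e) * ∑ i, a i * (3 * X i * ((t i).val:ℤ)^2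
              + (p:ℤ)^e * ((t i).val:ℤ)^3) := by
        have expand : ∀ i ∈ Finset.univ, a i * (X i + (p:ℤ)^e * ((t i).val:ℤ)) ^ 3
            = a i * X i ^ 3 + (p:ℤ)^e * (3 * a i * X i^2 * ((t i).val:ℤ))
              + (p:ℤ)^(2*e) * (a i * (3 * X i * ((t i).val:ℤ)^2
                + (p:ℤ)^e * ((t i).val:ℤ)^3)) := by
          intro i _; ring
        rw [Finset.sum_congr rfl expand, Finset.sum_add_distrib, Finset.sum_add_distrib,
          ← Finset.mul_sum, ← Finset.mul_sum]
        have hc' : (∑ i, a i * X i ^ 3) = (p:ℤ)^e * c := by push_cast at hc; exact hc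
        rw [hc']
        ring
      rw [hint, Int.cast_add, Int.cast_mul (α := ZMod (p^(e+1))) ((p:ℤ)^(2*e))]
      have hz : (((p:ℤ)^(2*e) : ℤ) : ZMod (p^(e+1))) = 0 := by push_cast; exact h2e0
      rw [hz, zero_mul, add_zero, ZMod.intCast_zmod_eq_zero_iff_dvd, pe_mul_dvd_iff hp,
        ← ZMod.intCast_zmod_eq_zero_iff_dvd]
      have hcast : ((c + ∑ i, 3 * a i * X i^2 * ((t i).val:ℤ) : ℤ) : ZMod p)
          = (c : ZMod p) + ∑ i, ((3 * a i * X i ^ 2 : ℤ) : ZMod p) * t i := by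
        push_cast [ZMod.natCast_val, ZMod.cast_id]
        ring
      rw [hcast]
    have hb0 : ((3 * a i0 * X i0 ^ 2 : ℤ) : ZMod p) ≠ 0 := by
      rw [Ne, ZMod.intCast_zmod_eq_zero_iff_dvd]
      intro hd
      rcases hpint.dvd_mul.mp hd with h | h
      · rcases hpint.dvd_mul.mp h with h' | h'
        · exact hp3 h'
        · exact hai i0 h'
      · have h2 := hpint.dvd_of_dvd_pow h
        simp only [hXdef] at h2
        exact hi0 (Int.natCast_dvd_natCast.mp h2)
    let G : {t : Fin 4 → ZMod p //
          (c : ZMod p) + ∑ i, ((3 * a i * X i ^ 2 : ℤ) : ZMod p) * t i = 0} → {y // F y = x} :=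
      fun t => ⟨⟨Y t.1, (hkey t.1).mpr t.2, hprimY t.1⟩,
        Subtype.ext (funext fun i => hπY t.1 i)⟩
    have hGinj : Function.Injective G := by
      intro t1 t2 h
      apply Subtype.ext; funext i
      have hYeq : Y t1.1 i = Y t2.1 i := congrFun (congrArg (fun y => y.1.1) h) i
      simp only [hYdef] at hYeq
      have hsub : (((X i + (p:ℤ)^e * ((t1.1 i).val:ℤ))
          - (X i + (p:ℤ)^e * ((t2.1 i).val:ℤ)) : ℤ) : ZMod (p^(e+1))) = 0 := by
        rw [Int.cast_sub, hYeq, sub_self]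
      rw [show (X i + (p:ℤ)^e * ((t1.1 i).val:ℤ)) - (X i + (p:ℤ)^e * ((t2.1 i).val:ℤ))
        = (p:ℤ)^e * (((t1.1 i).val:ℤ) - ((t2.1 i).val:ℤ)) from by ring] at hsub
      rw [ZMod.intCast_zmod_eq_zero_iff_dvd, pe_mul_dvd_iff hp] at hsub
      have h3 : ((((t1.1 i).val:ℤ) : ZMod p)) = ((((t2.1 i).val:ℤ)) : ZMod p) := by
        rw [← sub_eq_zero, ← Int.cast_sub, ZMod.intCast_zmod_eq_zero_iff_dvd]
        exact hsub
      rw [hvalt, hvalt] at h3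
      exact h3
    have hGsurj : Function.Surjective G := by
      rintro ⟨y, hy⟩
      have hyi : ∀ i, π (y.1 i) = x.1 i := fun i => congrFun (congrArg Subtype.val hy) i
      have hdvd : ∀ i, ((p ^ e : ℕ) : ℤ) ∣ (((y.1 i).val : ℤ) - X i) := by
        intro i
        rw [← ZMod.intCast_zmod_eq_zero_iff_dvd, Int.cast_sub]
        have h1 : ((((y.1 i).val : ℕ) : ℤ) : ZMod (p^e)) = π (y.1 i) := by
          push_cast
          rw [hπdef, ZMod.castHom_apply, ← ZMod.natCast_val]
        rw [h1, hyi i, hXcast i, sub_self]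
      choose k hk using hdvd
      have hk' : ∀ i, ((y.1 i).val : ℤ) - X i = (p:ℤ)^e * k i := by
        intro i; have := hk i; push_cast at this; exact this
      set tf : Fin 4 → ZMod p := fun i => ((k i : ℤ) : ZMod p) with htf
      have hYt : Y tf = y.1 := by
        funext i
        simp only [hYdef]
        have hyint : (((y.1 i).val : ℤ) : ZMod (p^(e+1))) = y.1 i := by
          push_cast
          simp [ZMod.natCast_val, ZMod.cast_id]
        rw [← hyint, ← sub_eq_zero, ← Int.cast_sub, ZMod.intCast_zmod_eq_zero_iff_dvd]
        have heq : (X i + (p:ℤ)^e * (((tf i)).val : ℤ)) - ((y.1 i).val : ℤ)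
            = (p:ℤ)^e * ((((tf i)).val : ℤ) - k i) := by
          have h5 := hk' i
          linear_combination -h5
        rw [heq, pe_mul_dvd_iff hp]
        rw [← ZMod.intCast_zmod_eq_zero_iff_dvd, Int.cast_sub, hvalt]
        simp only [htf]
        rw [sub_self]
      have hQ : (c : ZMod p) + ∑ i, ((3 * a i * X i ^ 2 : ℤ) : ZMod p) * tf i = 0 := by
        apply (hkey tf).mp
        simp only [hYt]
        exact y.2.1
      exact ⟨⟨tf, hQ⟩, Subtype.ext (Subtype.ext hYt)⟩
    rw [Nat.card_congr (Equiv.ofBijective G ⟨hGinj, hGsurj⟩).symm]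
    have hEQ : Nat.card {t : Fin 4 → ZMod p //
          (c : ZMod p) + ∑ i, ((3 * a i * X i ^ 2 : ℤ) : ZMod p) * t i = 0}
        = Nat.card {t : Fin 4 → ZMod p //
          ∑ i, ((3 * a i * X i ^ 2 : ℤ) : ZMod p) * t i = -(c : ZMod p)} := by
      apply Nat.card_congr
      apply Equiv.subtypeEquivRight
      intro t
      constructor <;> intro h <;> linear_combination h
    rw [hEQ, affine_count p _ i0 hb0]
  -- assemble
  haveI : ∀ x, Fintype {y // F y = x} := fun x => Fintype.ofFinite _
  rw [Nat.card_eq_fintype_card, ← Fintype.card_congr (Equiv.sigmaFiberEquiv F),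
    Fintype.card_sigma]
  rw [Nat.card_eq_fintype_card]
  have : ∀ x, Fintype.card {y // F y = x} = p ^ 3 := by
    intro x
    rw [← Nat.card_eq_fintype_card]
    exact fiber_card x
  rw [Finset.sum_congr rfl (fun x _ => this x), Finset.sum_const, Finset.card_univ, smul_eq_mul,
    mul_comm]

private lemma card_congr_pow (a : Fin 4 → ℤ) {m n : ℕ} (h : m = n) :
    Nat.card {x : Fin 4 → ZMod m //
        (∑ i, (a i : ZMod m) * x i ^ 3 = 0) ∧
        Nat.gcd m (Finset.univ.gcd fun i => (x i).val) = 1}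
      = Nat.card {x : Fin 4 → ZMod n //
        (∑ i, (a i : ZMod n) * x i ^ 3 = 0) ∧
        Nat.gcd n (Finset.univ.gcd fun i => (x i).val) = 1} := by
  subst h; rfl

theorem stmt_8 (a : Fin 4 → ℤ) (p : ℕ) (hp : p.Prime) (e : ℕ) (he : 1 ≤ e)
    (hpa : ¬ ((p : ℤ) ∣ 3 * a 0 * a 1 * a 2 * a 3)) :
    Nat.card {x : Fin 4 → ZMod (p ^ e) //
        (∑ i, (a i : ZMod (p ^ e)) * x i ^ 3 = 0) ∧
        Nat.gcd (p ^ e) (Finset.univ.gcd fun i => (x i).val) = 1}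
      = p ^ (3 * e - 3) *
        Nat.card {x : Fin 4 → ZMod p //
          (∑ i, (a i : ZMod p) * x i ^ 3 = 0) ∧
          Nat.gcd p (Finset.univ.gcd fun i => (x i).val) = 1} := by
  induction e, he using Nat.le_induction with
  | base =>
    rw [show 3 * 1 - 3 = 0 from rfl, pow_zero, one_mul]
    exact card_congr_pow a (pow_one p)
  | succ e he ih =>
    rw [step_up a p hp hpa e he]
    rw [ih, ← mul_assoc, ← pow_add]
    have h1 : 3 ≤ 3 * e := le_mul_of_one_le_right (by norm_num) he
    have h3 : 3 + (3 * e - 3) = 3 * (e + 1) - 3 := by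
      rw [add_comm, Nat.sub_add_cancel h1, Nat.mul_succ, Nat.add_sub_cancel]
    rw [h3]
end

section
/- Let I ⊂ ℝ be a bounded interval, let a ∈ ℕ, and let f: ℝ → ℝ_{≥0} be continuously differentiable on I. Then Σ_{n ∈ ℤ ∩ I, gcd(n,a)=1} f(n) = φ*(a) ∫_I f(t) dt + O( 2^{ω(a)} ( sup_{t ∈ I} |f(t)| + ∫_I |f'(t)| dt ) ), with an absolute implied constant. -/
open MeasureTheory Set Finset intervalIntegral

lemma ftc_bound (A B : ℝ) (f f' : ℝ → ℝ)
    (hd : ∀ t ∈ Icc A B, HasDerivWithinAt f (f' t) (Icc A B) t)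
    (hc : ContinuousOn f' (Icc A B)) {x y : ℝ}
    (hx : x ∈ Icc A B) (hy : y ∈ Icc A B) (hxy : x ≤ y) :
    |f y - f x| ≤ ∫ t in Ioc x y, |f' t| := by
  have hsub : Icc x y ⊆ Icc A B := Icc_subset_Icc hx.1 hy.2
  have hfc : ContinuousOn f (Icc A B) := fun t ht => (hd t ht).continuousWithinAt
  have hint : IntervalIntegrable f' volume x y := by
    apply ContinuousOn.intervalIntegrable
    rw [uIcc_of_le hxy]
    exact hc.mono hsub
  have heq : ∫ t in x..y, f' t = f y - f x := by
    apply integral_eq_sub_of_hasDeriv_right_of_le hxy (hfc.mono hsub) _ hint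
    intro t ht
    have htm : t ∈ Icc A B := ⟨hx.1.trans ht.1.le, ht.2.le.trans hy.2⟩
    have : Icc A B ∈ nhds t := by
      apply Icc_mem_nhds (lt_of_le_of_lt hx.1 ht.1) (lt_of_lt_of_le ht.2 hy.2)
    exact ((hd t htm).hasDerivAt this).hasDerivWithinAt
  rw [← heq]
  calc |∫ t in x..y, f' t| ≤ ∫ t in x..y, |f' t| :=
        intervalIntegral.abs_integral_le_integral_abs hxy
    _ = ∫ t in Ioc x y, |f' t| := integral_of_le hxy

lemma step_bound (A B : ℝ) (f f' : ℝ → ℝ)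
    (hd : ∀ t ∈ Icc A B, HasDerivWithinAt f (f' t) (Icc A B) t)
    (hc : ContinuousOn f' (Icc A B)) {x h : ℝ} (hh : 0 < h)
    (hx : x ∈ Icc A B) (hxh : x + h ∈ Icc A B) :
    |h * f x - ∫ t in Ioc x (x + h), f t| ≤ h * ∫ t in Ioc x (x + h), |f' t| := by
  have hfc : ContinuousOn f (Icc A B) := fun t ht => (hd t ht).continuousWithinAt
  have hsub : Icc x (x + h) ⊆ Icc A B := Icc_subset_Icc hx.1 hxh.2
  have hsub' : Ioc x (x + h) ⊆ Icc A B := fun t ht => hsub (Ioc_subset_Icc_self ht)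
  have hif : IntegrableOn f (Ioc x (x + h)) :=
    ((hfc.mono hsub).integrableOn_Icc).mono_set Ioc_subset_Icc_self
  have hif' : IntegrableOn (fun t => |f' t|) (Ioc x (x + h)) :=
    (((hc.mono hsub).abs).integrableOn_Icc).mono_set Ioc_subset_Icc_self
  set W := ∫ t in Ioc x (x + h), |f' t| with hW
  have hWnn : 0 ≤ W := setIntegral_nonneg measurableSet_Ioc (fun t _ => abs_nonneg _)
  have hconst : (h : ℝ) * f x = ∫ _ in Ioc x (x + h), f x := by
    rw [setIntegral_const, Real.volume_real_Ioc_of_le (by linarith)]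
    rw [smul_eq_mul]
    ring
  rw [hconst, ← integral_sub (integrableOn_const (by simp [Real.volume_Ioc]) : IntegrableOn (fun _ => f x) (Ioc x (x + h)) volume) hif]
  have hbd : ∀ t ∈ Ioc x (x + h), |f x - f t| ≤ W := by
    intro t ht
    have h1 : |f t - f x| ≤ ∫ s in Ioc x t, |f' s| :=
      ftc_bound A B f f' hd hc hx (hsub' ht) ht.1.le
    have h2 : (∫ s in Ioc x t, |f' s|) ≤ W := by
      apply setIntegral_mono_set hif'
      · exact Filter.Eventually.of_forall fun t => abs_nonneg _
      · exact HasSubset.Subset.eventuallyLE (Ioc_subset_Ioc_right ht.2)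
    rw [abs_sub_comm]
    exact h1.trans h2
  calc |∫ t in Ioc x (x + h), (f x - f t)| ≤ ∫ t in Ioc x (x + h), |f x - f t| :=
        by simpa using MeasureTheory.norm_integral_le_integral_norm (μ := volume.restrict (Ioc x (x+h))) (fun t => f x - f t)
    _ ≤ ∫ _ in Ioc x (x + h), W := by
        apply setIntegral_mono_on _ (integrableOn_const (by simp [Real.volume_Ioc]))
          measurableSet_Ioc hbd
        exact ((integrableOn_const (by simp [Real.volume_Ioc]) : IntegrableOn (fun _ => f x) (Ioc x (x + h))).sub hif).abs
    _ = h * W := by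
        rw [setIntegral_const, Real.volume_real_Ioc_of_le (by linarith), smul_eq_mul]
        ring

lemma sum_pieces (A B : ℝ) (g : ℝ → ℝ) (hg : ∀ t, 0 ≤ g t)
    (hint : IntegrableOn g (Icc A B)) (d' : ℝ) (hd' : 0 < d') (m0 m1 : ℤ)
    (hm : Ioc (d' * m0) (d' * m1) ⊆ Icc A B) :
    ∑ m ∈ Finset.Ico m0 m1, ∫ t in Ioc (d' * m) (d' * m + d'), g t
      ≤ ∫ t in Icc A B, g t := by
  have key : ∀ m : ℤ, d' * m + d' = d' * (m + 1) := fun m => by push_cast; ring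
  have hsub : ∀ m ∈ Finset.Ico m0 m1, Ioc (d' * m) (d' * m + d') ⊆ Icc A B := by
    intro m hm'
    rw [Finset.mem_Ico] at hm'
    refine fun t ht => hm ⟨lt_of_le_of_lt ?_ ht.1, le_trans ht.2 ?_⟩
    · exact mul_le_mul_of_nonneg_left (by exact_mod_cast hm'.1) hd'.le
    · rw [key]
      exact mul_le_mul_of_nonneg_left (by exact_mod_cast hm'.2) hd'.le
  have hdisj : (↑(Finset.Ico m0 m1) : Set ℤ).Pairwise
      (Function.onFun Disjoint fun m => Ioc (d' * m) (d' * m + d')) := by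
    intro i _ j _ hij
    have : ∀ x y : ℤ, x < y → Disjoint (Ioc (d' * x) (d' * x + d')) (Ioc (d' * y) (d' * y + d')) := by
      intro x y hxy
      rw [Set.Ioc_disjoint_Ioc, key]
      have : (x + 1 : ℤ) ≤ y := hxy
      have h1 : d' * (x+1:ℤ) ≤ d' * y := mul_le_mul_of_nonneg_left (by exact_mod_cast this) hd'.le
      calc min (d' * ((x:ℝ)+1)) (d' * y + d') ≤ d' * ((x:ℝ)+1) := min_le_left _ _
        _ ≤ max (d' * x) (d' * y) := by
            push_cast at h1 ⊢
            exact le_trans h1 (le_max_right _ _)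
    rcases lt_or_gt_of_ne hij with h | h
    · exact this i j h
    · exact (this j i h).symm
  have heq := integral_biUnion_finset (μ := volume) (Finset.Ico m0 m1)
      (f := g) (fun i _ => measurableSet_Ioc) hdisj
      (fun i hi => hint.mono_set (hsub i hi))
  rw [← heq]
  apply setIntegral_mono_set hint (Filter.Eventually.of_forall fun t => hg t)
  exact HasSubset.Subset.eventuallyLE (Set.iUnion₂_subset hsub)

lemma Ioc_biUnion_eq (d' : ℝ) (hd' : 0 < d') (m0 m1 : ℤ) :
    ⋃ m ∈ Finset.Ico m0 m1, Ioc (d' * m) (d' * m + d') = Ioc (d' * m0) (d' * m1) := by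
  apply Set.Subset.antisymm
  · apply Set.iUnion₂_subset
    intro m hm
    rw [Finset.mem_Ico] at hm
    intro t ht
    have key : d' * (m:ℝ) + d' = d' * ((m:ℝ) + 1) := by ring
    constructor
    · exact lt_of_le_of_lt (mul_le_mul_of_nonneg_left (by exact_mod_cast hm.1) hd'.le) ht.1
    · refine le_trans ht.2 ?_
      rw [key]
      have : ((m:ℝ) + 1) ≤ (m1 : ℝ) := by exact_mod_cast hm.2
      exact mul_le_mul_of_nonneg_left this hd'.le
  · intro t ht
    set m : ℤ := ⌈t / d'⌉ - 1 with hm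
    have hc1 : (⌈t / d'⌉ : ℝ) < t / d' + 1 := Int.ceil_lt_add_one _
    have hc2 : t / d' ≤ (⌈t / d'⌉ : ℝ) := Int.le_ceil _
    have hm0 : m0 ≤ m := by
      have : (m0 : ℝ) < t / d' := by
        rw [lt_div_iff₀ hd']
        linarith [ht.1, mul_comm d' (m0:ℝ)]
      have : m0 < ⌈t / d'⌉ := by
        by_contra hcon
        push_neg at hcon
        exact absurd (this.trans_le hc2) (by exact_mod_cast not_lt.2 (Int.cast_le.2 hcon) : ¬ (m0:ℝ) < ⌈t/d'⌉)
      omega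
    have hm1 : m < m1 := by
      have : t / d' ≤ (m1 : ℝ) := by
        rw [div_le_iff₀ hd']
        linarith [ht.2, mul_comm d' (m1:ℝ)]
      have : ⌈t / d'⌉ ≤ m1 := Int.ceil_le.2 this
      omega
    refine Set.mem_biUnion (Finset.mem_Ico.2 ⟨hm0, hm1⟩) ?_
    constructor
    · have : (m : ℝ) < t / d' := by
        rw [hm]; push_cast; linarith
      calc d' * (m:ℝ) < d' * (t / d') := by exact (mul_lt_mul_iff_right₀ hd').2 this
        _ = t := by field_simp
    · have : t / d' ≤ (m : ℝ) + 1 := by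
        rw [hm]; push_cast; linarith
      calc t = d' * (t / d') := by field_simp
        _ ≤ d' * ((m:ℝ) + 1) := (mul_le_mul_iff_right₀ hd').2 this
        _ = d' * m + d' := by ring

lemma core_bound (A B : ℝ) (hAB : A ≤ B) (f f' : ℝ → ℝ)
    (hf0 : ∀ t, 0 ≤ f t)
    (hd : ∀ t ∈ Icc A B, HasDerivWithinAt f (f' t) (Icc A B) t)
    (hc : ContinuousOn f' (Icc A B)) (M : ℝ)
    (hM : ∀ t ∈ Icc A B, |f t| ≤ M) (d : ℕ) (hd1 : 1 ≤ d) :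
    |(∑ n ∈ Finset.Icc ⌈A⌉ ⌊B⌋ with (d:ℤ) ∣ n, f (n:ℝ))
        - (1/(d:ℝ)) * ∫ t in Icc A B, f t|
      ≤ 3 * M + ∫ t in Icc A B, |f' t| := by
  have hfc : ContinuousOn f (Icc A B) := fun t ht => (hd t ht).continuousWithinAt
  have hfint : IntegrableOn f (Icc A B) := hfc.integrableOn_Icc
  have hgint : IntegrableOn (fun t => |f' t|) (Icc A B) := hc.abs.integrableOn_Icc
  set d' : ℝ := (d : ℝ) with hd'def
  have hd'1 : (1:ℝ) ≤ d' := by rw [hd'def]; exact_mod_cast hd1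
  have hd' : (0:ℝ) < d' := lt_of_lt_of_le zero_lt_one hd'1
  have hM0 : 0 ≤ M := (abs_nonneg _).trans (hM A ⟨le_refl A, hAB⟩)
  have hV0 : 0 ≤ ∫ t in Icc A B, |f' t| :=
    setIntegral_nonneg measurableSet_Icc (fun t _ => abs_nonneg _)
  set m0 : ℤ := ⌈A / d'⌉ with hm0def
  set m1 : ℤ := ⌊B / d'⌋ with hm1def
  -- reindex the sum
  have himg : (Finset.Icc ⌈A⌉ ⌊B⌋).filter (fun n => (d:ℤ) ∣ n)
      = (Finset.Icc m0 m1).image (fun m => (d:ℤ) * m) := by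
    ext n
    simp only [Finset.mem_filter, Finset.mem_Icc, Finset.mem_image, Int.ceil_le, Int.le_floor]
    constructor
    · rintro ⟨⟨hn1, hn2⟩, m, rfl⟩
      refine ⟨m, ⟨?_, ?_⟩, rfl⟩
      · rw [hm0def, Int.ceil_le, div_le_iff₀ hd']
        calc A ≤ (((d:ℤ) * m : ℤ) : ℝ) := hn1
          _ = (m:ℝ) * d' := by push_cast; ring
      · rw [hm1def, Int.le_floor, le_div_iff₀ hd']
        calc (m:ℝ) * d' = (((d:ℤ) * m : ℤ) : ℝ) := by push_cast; ring
          _ ≤ B := hn2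
    · rintro ⟨m, ⟨hm1', hm2'⟩, rfl⟩
      rw [hm0def, Int.ceil_le, div_le_iff₀ hd'] at hm1'
      rw [hm1def, Int.le_floor, le_div_iff₀ hd'] at hm2'
      refine ⟨⟨?_, ?_⟩, ⟨m, rfl⟩⟩
      · calc A ≤ (m:ℝ) * d' := hm1'
          _ = (((d:ℤ) * m : ℤ) : ℝ) := by push_cast; ring
      · calc (((d:ℤ) * m : ℤ) : ℝ) = (m:ℝ) * d' := by push_cast; ring
          _ ≤ B := hm2'
  have hinj : ∀ x ∈ Finset.Icc m0 m1, ∀ y ∈ Finset.Icc m0 m1,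
      (d:ℤ) * x = (d:ℤ) * y → x = y := by
    intro x _ y _ hxy
    exact mul_left_cancel₀ (by exact_mod_cast (by omega : d ≠ 0)) hxy
  have hS : (∑ n ∈ Finset.Icc ⌈A⌉ ⌊B⌋ with (d:ℤ) ∣ n, f (n:ℝ))
      = ∑ m ∈ Finset.Icc m0 m1, f (d' * m) := by
    rw [himg, Finset.sum_image hinj]
    exact Finset.sum_congr rfl fun m _ => congrArg f (by push_cast; ring)
  rw [hS]
  set J := ∫ t in Icc A B, f t with hJdef
  set V := ∫ t in Icc A B, |f' t| with hVdef
  have hJ0 : 0 ≤ J := setIntegral_nonneg measurableSet_Icc (fun t _ => hf0 t)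
  have hceil : (m0 : ℝ) < A / d' + 1 := Int.ceil_lt_add_one _
  have hceil' : A / d' ≤ (m0 : ℝ) := Int.le_ceil _
  have hfloor : B / d' - 1 < (m1 : ℝ) := Int.sub_one_lt_floor _
  have hfloor' : (m1 : ℝ) ≤ B / d' := Int.floor_le _
  by_cases hcase : m1 < m0
  · -- empty range
    rw [Finset.Icc_eq_empty (by exact_mod_cast not_le.2 hcase), Finset.sum_empty]
    have hBA : B - A ≤ d' := by
      have h1 : (m1 : ℝ) ≤ (m0 : ℝ) - 1 := by exact_mod_cast Int.le_sub_one_of_lt hcase |>.trans (le_refl _)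
      have : B / d' - 1 < A / d' := by linarith
      have h2 : (B/d' - 1) * d' < (A/d') * d' := mul_lt_mul_of_pos_right this hd'
      rw [sub_mul, div_mul_cancel₀ _ hd'.ne', one_mul, div_mul_cancel₀ _ hd'.ne'] at h2
      linarith
    have hJle : J ≤ M * (B - A) := by
      have : J ≤ ∫ _ in Icc A B, M := by
        apply setIntegral_mono_on hfint (integrableOn_const (by simp [Real.volume_Icc]))
          measurableSet_Icc
        exact fun t ht => (le_abs_self _).trans (hM t ht)
      rw [setIntegral_const, Real.volume_real_Icc_of_le hAB, smul_eq_mul] at this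
      linarith
    rw [zero_sub, abs_neg, abs_of_nonneg (mul_nonneg (by positivity) hJ0)]
    have h1 : (1/d') * J ≤ (1/d') * (M * d') := by
      apply mul_le_mul_of_nonneg_left _ (by positivity)
      exact hJle.trans (mul_le_mul_of_nonneg_left hBA hM0)
    have h2 : (1/d') * (M * d') = M := by field_simp
    linarith
  -- main case
  push_neg at hcase
  have hle : m0 ≤ m1 := hcase
  have hle' : (m0:ℝ) ≤ (m1:ℝ) := by exact_mod_cast hle
  have hA0 : A ≤ d' * m0 := by
    have := (div_le_iff₀ hd').1 hceil'
    linarith [mul_comm (m0:ℝ) d']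
  have h1B : d' * m1 ≤ B := by
    have := (le_div_iff₀ hd').1 hfloor'
    linarith [mul_comm (m1:ℝ) d']
  have hA0' : d' * m0 ≤ A + d' := by
    have h2 : (m0:ℝ) * d' < (A/d' + 1) * d' := mul_lt_mul_of_pos_right hceil hd'
    rw [add_mul, div_mul_cancel₀ _ hd'.ne', one_mul] at h2
    linarith [mul_comm (m0:ℝ) d']
  have h1B' : B ≤ d' * m1 + d' := by
    have h2 : (B/d' - 1) * d' < (m1:ℝ) * d' := mul_lt_mul_of_pos_right hfloor hd'
    rw [sub_mul, div_mul_cancel₀ _ hd'.ne', one_mul] at h2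
    linarith [mul_comm (m1:ℝ) d']
  have hmm : d' * m0 ≤ d' * m1 := mul_le_mul_of_nonneg_left hle' hd'.le
  have hIoc_sub : Ioc (d' * m0) (d' * m1) ⊆ Icc A B :=
    fun t ht => ⟨hA0.trans ht.1.le, ht.2.trans h1B⟩
  have hmemIcc : ∀ m : ℤ, m0 ≤ m → m ≤ m1 → d' * m ∈ Icc A B := by
    intro m h1 h2
    constructor
    · exact hA0.trans (mul_le_mul_of_nonneg_left (by exact_mod_cast h1) hd'.le)
    · exact (mul_le_mul_of_nonneg_left (by exact_mod_cast h2) hd'.le).trans h1B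
  set I : ℤ → ℝ := fun m => ∫ t in Ioc (d' * m) (d' * m + d'), f t with hIdef
  have hpieces_sub : ∀ m ∈ Finset.Ico m0 m1, Ioc (d' * m) (d' * m + d') ⊆ Icc A B := by
    intro m hm
    refine Set.Subset.trans ?_ hIoc_sub
    rw [← Ioc_biUnion_eq d' hd' m0 m1]
    exact Set.subset_iUnion₂ (s := fun (k : ℤ) (_ : k ∈ Finset.Ico m0 m1) => Ioc (d' * (k:ℝ)) (d' * k + d')) m hm
  have hdisj : (↑(Finset.Ico m0 m1) : Set ℤ).Pairwise
      (Function.onFun Disjoint fun m : ℤ => Ioc (d' * m) (d' * m + d')) := by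
    intro i _ j _ hij
    have key : ∀ x y : ℤ, x < y →
        Disjoint (Ioc (d' * x) (d' * x + d')) (Ioc (d' * y) (d' * y + d')) := by
      intro x y hxy
      rw [Set.Ioc_disjoint_Ioc]
      have hx1 : ((x:ℝ) + 1) ≤ (y:ℝ) := by exact_mod_cast hxy
      have h1 : d' * ((x:ℝ)+1) ≤ d' * y := mul_le_mul_of_nonneg_left hx1 hd'.le
      calc min (d' * x + d') (d' * y + d') ≤ d' * x + d' := min_le_left _ _
        _ ≤ max (d' * x) (d' * y) := le_trans (by linarith) (le_max_right _ _)
    rcases lt_or_gt_of_ne hij with h | h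
    · exact key i j h
    · exact (key j i h).symm
  have hpieces : ∑ m ∈ Finset.Ico m0 m1, I m = ∫ t in Ioc (d' * m0) (d' * m1), f t := by
    rw [← Ioc_biUnion_eq d' hd' m0 m1]
    exact (integral_biUnion_finset _ (fun i _ => measurableSet_Ioc) hdisj
      (fun i hi => hfint.mono_set (hpieces_sub i hi))).symm
  -- split off top term
  rw [← Finset.Ico_insert_right hle, Finset.sum_insert Finset.right_notMem_Ico]
  set E1 := ∫ t in A..(d' * m0), f t with hE1def
  set E2 := ∫ t in (d' * m1)..B, f t with hE2def
  set K := ∫ t in Ioc (d' * m0) (d' * m1), f t with hKdef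
  have hii : ∀ x y : ℝ, A ≤ x → x ≤ y → y ≤ B → IntervalIntegrable f volume x y := by
    intro x y h1 h2 h3
    apply ContinuousOn.intervalIntegrable
    rw [uIcc_of_le h2]
    exact hfc.mono (Icc_subset_Icc h1 h3)
  have hJsplit : J = E1 + K + E2 := by
    have hK' : K = ∫ t in (d' * m0)..(d' * m1), f t := (intervalIntegral.integral_of_le hmm).symm
    have hJ' : J = ∫ t in A..B, f t := by
      rw [hJdef, MeasureTheory.integral_Icc_eq_integral_Ioc, intervalIntegral.integral_of_le hAB]
    have hadd1 : E1 + ∫ t in (d' * m0)..(d' * m1), f t = ∫ t in A..(d' * m1), f t :=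
      intervalIntegral.integral_add_adjacent_intervals (hii A (d'*m0) le_rfl hA0 (hmm.trans h1B))
        (hii (d'*m0) (d'*m1) hA0 hmm h1B)
    have hadd2 : (∫ t in A..(d' * m1), f t) + E2 = ∫ t in A..B, f t :=
      intervalIntegral.integral_add_adjacent_intervals (hii A (d'*m1) le_rfl (hA0.trans hmm) h1B)
        (hii (d'*m1) B (hA0.trans hmm) h1B le_rfl)
    rw [hJ', ← hadd2, ← hadd1, hK']
  set T := ∑ m ∈ Finset.Ico m0 m1, (f (d' * m) - (1/d') * I m) with hTdef
  have hT : T = (∑ m ∈ Finset.Ico m0 m1, f (d' * m)) - (1/d') * K := by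
    rw [hTdef, Finset.sum_sub_distrib, ← Finset.mul_sum, hpieces]
  have hdecomp : (f (d' * m1) + ∑ m ∈ Finset.Ico m0 m1, f (d' * m)) - 1/d' * J
      = T + f (d' * m1) - (1/d') * E1 - (1/d') * E2 := by
    rw [hT, hJsplit]; ring
  rw [hdecomp]
  -- bound each piece
  have hTbound : |T| ≤ V := by
    have hterm : ∀ m ∈ Finset.Ico m0 m1,
        |f (d' * m) - (1/d') * I m| ≤ ∫ t in Ioc (d' * m) (d' * m + d'), |f' t| := by
      intro m hm
      rw [Finset.mem_Ico] at hm
      have hx : d' * m ∈ Icc A B := hmemIcc m hm.1 (le_of_lt hm.2)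
      have hxh : d' * m + d' ∈ Icc A B := by
        have : d' * m + d' = d' * ((m : ℤ) + 1 : ℤ) := by push_cast; ring
        rw [this]
        exact hmemIcc (m+1) (by omega) (by omega)
      have hstep := step_bound A B f f' hd hc hd' hx hxh
      have : f (d' * m) - (1/d') * I m = (1/d') * (d' * f (d' * m) - I m) := by
        field_simp
      rw [this, abs_mul, abs_of_nonneg (by positivity : (0:ℝ) ≤ 1/d')]
      calc (1/d') * |d' * f (d' * m) - I m|
          ≤ (1/d') * (d' * ∫ t in Ioc (d' * m) (d' * m + d'), |f' t|) :=
            mul_le_mul_of_nonneg_left hstep (by positivity)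
        _ = ∫ t in Ioc (d' * m) (d' * m + d'), |f' t| := by field_simp
    calc |T| ≤ ∑ m ∈ Finset.Ico m0 m1, |f (d' * m) - (1/d') * I m| :=
          Finset.abs_sum_le_sum_abs _ _
      _ ≤ ∑ m ∈ Finset.Ico m0 m1, ∫ t in Ioc (d' * m) (d' * m + d'), |f' t| :=
          Finset.sum_le_sum hterm
      _ ≤ V := sum_pieces A B (fun t => |f' t|) (fun t => abs_nonneg _) hgint d' hd' m0 m1 hIoc_sub
  have hfm1 : |f (d' * m1)| ≤ M := hM _ (hmemIcc m1 hle le_rfl)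
  have hE1bound : |E1| ≤ M * d' := by
    have h := intervalIntegral.norm_integral_le_of_norm_le_const (C := M) (f := f)
      (a := A) (b := d' * m0) (by
        intro x hx
        rw [Set.uIoc_of_le hA0] at hx
        exact hM x ⟨hx.1.le, hx.2.trans (hmm.trans h1B)⟩)
    rw [Real.norm_eq_abs] at h
    refine h.trans ?_
    apply mul_le_mul_of_nonneg_left _ hM0
    rw [abs_of_nonneg (by linarith)]
    linarith
  have hE2bound : |E2| ≤ M * d' := by
    have h := intervalIntegral.norm_integral_le_of_norm_le_const (C := M) (f := f)
      (a := d' * m1) (b := B) (by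
        intro x hx
        rw [Set.uIoc_of_le h1B] at hx
        exact hM x ⟨(hA0.trans hmm).trans hx.1.le, hx.2⟩)
    rw [Real.norm_eq_abs] at h
    refine h.trans ?_
    apply mul_le_mul_of_nonneg_left _ hM0
    rw [abs_of_nonneg (by linarith)]
    linarith
  have h4 : |T + f (d' * m1) - (1/d') * E1 - (1/d') * E2|
      ≤ |T| + |f (d' * m1)| + |(1/d') * E1| + |(1/d') * E2| := by
    have t1 := abs_add_le (T + f (d' * m1) - (1/d') * E1) (-((1/d') * E2))
    have t2 := abs_add_le (T + f (d' * m1)) (-((1/d') * E1))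
    have t3 := abs_add_le T (f (d' * m1))
    simp only [← sub_eq_add_neg, abs_neg] at t1 t2
    linarith
  have hE1' : |(1/d') * E1| ≤ M := by
    rw [abs_mul, abs_of_nonneg (by positivity : (0:ℝ) ≤ 1/d')]
    calc (1/d') * |E1| ≤ (1/d') * (M * d') := mul_le_mul_of_nonneg_left hE1bound (by positivity)
      _ = M := by field_simp
  have hE2' : |(1/d') * E2| ≤ M := by
    rw [abs_mul, abs_of_nonneg (by positivity : (0:ℝ) ≤ 1/d')]
    calc (1/d') * |E2| ≤ (1/d') * (M * d') := mul_le_mul_of_nonneg_left hE2bound (by positivity)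
      _ = M := by field_simp
  linarith

open ArithmeticFunction
open scoped ArithmeticFunction.Moebius

lemma sqfree_powerset (a : ℕ) (ha : a ≠ 0) (g : ℕ → ℝ) :
    ∑ d ∈ a.divisors with Squarefree d, g d
      = ∑ t ∈ a.primeFactors.powerset, g (∏ p ∈ t, p) := by
  rw [Nat.sum_divisors_filter_squarefree ha]
  have h : (UniqueFactorizationMonoid.normalizedFactors a).toFinset = a.primeFactors := by
    rw [Nat.factors_eq]
    simp
  rw [h]
  exact Finset.sum_congr rfl fun t _ => by rw [t.prod_val]; rfl

lemma moebius_div_sum (a : ℕ) (ha : a ≠ 0) :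
    ∑ d ∈ a.divisors, (μ d : ℝ) / d = ∏ p ∈ a.primeFactors, (1 - 1/(p:ℝ)) := by
  have h1 : ∑ d ∈ a.divisors, (μ d : ℝ) / d
      = ∑ d ∈ a.divisors with Squarefree d, (μ d : ℝ) / d := by
    rw [Finset.sum_filter_of_ne]
    intro d _ hne
    by_contra hs
    rw [← moebius_ne_zero_iff_squarefree] at hs
    push_neg at hs
    simp [hs] at hne
  rw [h1, sqfree_powerset a ha]
  have h2 : ∀ t ∈ a.primeFactors.powerset, ((μ (∏ p ∈ t, p) : ℤ) : ℝ) / (∏ p ∈ t, p : ℕ)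
      = ∏ p ∈ t, (-(1/(p:ℝ))) := by
    intro t ht
    rw [Finset.mem_powerset] at ht
    rw [isMultiplicative_moebius.map_prod_of_subset_primeFactors a t ht]
    have : ∀ p ∈ t, (μ p : ℤ) = -1 := fun p hp =>
      moebius_apply_prime (Nat.prime_of_mem_primeFactors (ht hp))
    rw [Finset.prod_congr rfl this]
    push_cast
    rw [← Finset.prod_div_distrib]
    exact Finset.prod_congr rfl fun p hp => by ring
  rw [Finset.sum_congr rfl h2]
  have h3 := Finset.prod_add (fun p : ℕ => -(1/(p:ℝ))) (fun _ : ℕ => (1:ℝ)) a.primeFactors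
  simp only [Finset.prod_const_one, mul_one] at h3
  rw [← h3]
  exact Finset.prod_congr rfl fun p _ => by ring

lemma moebius_abs_sum (a : ℕ) (ha : a ≠ 0) :
    ∑ d ∈ a.divisors, |(μ d : ℝ)| = 2 ^ a.primeFactors.card := by
  have h1 : ∑ d ∈ a.divisors, |(μ d : ℝ)|
      = ∑ d ∈ a.divisors with Squarefree d, |(μ d : ℝ)| := by
    rw [Finset.sum_filter_of_ne]
    intro d _ hne
    by_contra hs
    rw [← moebius_ne_zero_iff_squarefree] at hs
    push_neg at hs
    simp [hs] at hne
  have h2 : ∑ d ∈ a.divisors with Squarefree d, |(μ d : ℝ)|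
      = ∑ d ∈ a.divisors with Squarefree d, (1:ℝ) := by
    apply Finset.sum_congr rfl
    intro d hd
    rw [Finset.mem_filter] at hd
    have := abs_moebius_eq_one_of_squarefree hd.2
    have : |(μ d : ℝ)| = ((|μ d| : ℤ) : ℝ) := by push_cast; rfl
    rw [this, abs_moebius_eq_one_of_squarefree hd.2]; norm_num
  rw [h1, h2, sqfree_powerset a ha (fun _ => (1:ℝ))]
  simp [Finset.card_powerset]

theorem stmt_9 :
    ∃ C : ℝ, ∀ (A B : ℝ) (a : ℕ), 1 ≤ a → ∀ (f f' : ℝ → ℝ),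
      (∀ t, 0 ≤ f t) →
      (∀ t ∈ Icc A B, HasDerivWithinAt f (f' t) (Icc A B) t) →
      ContinuousOn f' (Icc A B) →
      |(∑' n : {n : ℤ // (n : ℝ) ∈ Icc A B ∧ Nat.gcd n.natAbs a = 1}, f ((n.1 : ℝ)))
          - (∏ q ∈ a.primeFactors, (1 - 1 / (q : ℝ))) * ∫ t in Icc A B, f t|
        ≤ C * 2 ^ a.primeFactors.card *
            ((⨆ t ∈ Icc A B, |f t|) + ∫ t in Icc A B, |f' t|) := by
  use 3
  intro A B a ha f f' hf0 hd hc
  by_cases hAB : A ≤ B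
  swap
  · -- empty interval
    push_neg at hAB
    have hempty : Icc A B = (∅ : Set ℝ) := Icc_eq_empty (not_le.2 hAB)
    haveI : IsEmpty {n : ℤ // (n : ℝ) ∈ Icc A B ∧ Nat.gcd n.natAbs a = 1} := by
      constructor
      rintro ⟨n, hn, -⟩
      rw [hempty] at hn
      exact hn
    have h1 : (∑' n : {n : ℤ // (n : ℝ) ∈ Icc A B ∧ Nat.gcd n.natAbs a = 1}, f ((n.1 : ℝ))) = 0 := by
      rw [tsum_congr (fun n => isEmptyElim n : ∀ n : {n : ℤ // (n : ℝ) ∈ Icc A B ∧ Nat.gcd n.natAbs a = 1}, f ((n.1:ℝ)) = 0), tsum_zero]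
    have h2 : (∫ t in Icc A B, f t) = 0 := by rw [hempty]; simp
    have h3 : (∫ t in Icc A B, |f' t|) = 0 := by rw [hempty]; simp
    have h4 : (⨆ t ∈ Icc A B, |f t|) = 0 := by
      rw [hempty]
      simp [Real.iSup_of_isEmpty]
    rw [h1, h2, h3, h4]
    simp
  -- main case
  have ha0 : a ≠ 0 := by omega
  have hfc : ContinuousOn f (Icc A B) := fun t ht => (hd t ht).continuousWithinAt
  set M := ⨆ t ∈ Icc A B, |f t| with hMdef
  set V := ∫ t in Icc A B, |f' t| with hVdef
  have hbdd : BddAbove ((fun t => |f t|) '' Icc A B) :=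
    (isCompact_Icc.image_of_continuousOn hfc.abs).bddAbove
  have hM : ∀ t ∈ Icc A B, |f t| ≤ M := by
    obtain ⟨C, hC⟩ := hbdd
    intro t ht
    have h1 : (⨆ _ : t ∈ Icc A B, |f t|) = |f t| := ciSup_pos ht
    have h2 : BddAbove (Set.range fun t => ⨆ _ : t ∈ Icc A B, |f t|) := by
      refine ⟨max C 0, ?_⟩
      rintro y ⟨u, rfl⟩
      by_cases hu : u ∈ Icc A B
      · simp only [ciSup_pos hu]
        exact le_max_of_le_left (hC (Set.mem_image_of_mem _ hu))
      · haveI : IsEmpty (u ∈ Icc A B) := ⟨hu⟩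
        simp only [Real.iSup_of_isEmpty]
        exact le_max_right _ _
    calc |f t| = ⨆ _ : t ∈ Icc A B, |f t| := h1.symm
      _ ≤ M := le_ciSup h2 t
  have hM0 : 0 ≤ M := (abs_nonneg _).trans (hM A ⟨le_refl A, hAB⟩)
  have hV0 : 0 ≤ V := setIntegral_nonneg measurableSet_Icc (fun t _ => abs_nonneg _)
  set J := ∫ t in Icc A B, f t with hJdef
  set G := Finset.Icc ⌈A⌉ ⌊B⌋ with hGdef
  have hGmem : ∀ n : ℤ, n ∈ G ↔ (n:ℝ) ∈ Icc A B := by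
    intro n
    rw [hGdef, Finset.mem_Icc, Set.mem_Icc, Int.ceil_le, Int.le_floor]
  set F0 := G.filter (fun n => Nat.gcd n.natAbs a = 1) with hF0def
  -- step 1 : tsum = finite sum
  have htsum : (∑' n : {n : ℤ // (n : ℝ) ∈ Icc A B ∧ Nat.gcd n.natAbs a = 1}, f ((n.1 : ℝ)))
      = ∑ n ∈ F0, f ((n:ℤ) : ℝ) := by
    have h0 : (∑' n : {n : ℤ // (n : ℝ) ∈ Icc A B ∧ Nat.gcd n.natAbs a = 1}, f ((n.1 : ℝ)))
        = ∑' n : ℤ, Set.indicator {n : ℤ | (n : ℝ) ∈ Icc A B ∧ Nat.gcd n.natAbs a = 1}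
            (fun n : ℤ => f ((n:ℤ):ℝ)) n :=
      _root_.tsum_subtype {n : ℤ | (n : ℝ) ∈ Icc A B ∧ Nat.gcd n.natAbs a = 1}
        (fun n : ℤ => f ((n:ℤ):ℝ))
    rw [h0, tsum_eq_sum (s := F0) ?_]
    · apply Finset.sum_congr rfl
      intro n hn
      rw [hF0def, Finset.mem_filter, hGmem] at hn
      exact Set.indicator_of_mem (by exact ⟨hn.1, hn.2⟩) _
    · intro n hn
      apply Set.indicator_of_notMem
      intro hmem
      exact hn (by rw [hF0def, Finset.mem_filter, hGmem]; exact ⟨hmem.1, hmem.2⟩)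
  -- step 2 : Moebius expansion
  set T : ℕ → ℝ := fun e => ∑ n ∈ G with (e:ℤ) ∣ n, f ((n:ℤ):ℝ) with hTdef
  have hdivd : ∀ n : ℤ, (Nat.gcd n.natAbs a).divisors
      = a.divisors.filter (fun (e : ℕ) => (e:ℤ) ∣ n) := by
    intro n
    ext e
    simp only [Nat.mem_divisors, Finset.mem_filter, Nat.dvd_gcd_iff]
    constructor
    · rintro ⟨⟨h1, h2⟩, -⟩
      refine ⟨⟨h2, ha0⟩, ?_⟩
      rw [← Int.dvd_natAbs]
      exact_mod_cast h1
    · rintro ⟨⟨h2, -⟩, h1⟩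
      refine ⟨⟨?_, h2⟩, Nat.gcd_ne_zero_right ha0⟩
      rw [← Int.natCast_dvd_natCast, Int.dvd_natAbs]
      exact h1
  have hmoeb : ∑ n ∈ F0, f ((n:ℤ) : ℝ) = ∑ e ∈ a.divisors, (μ e : ℝ) * T e := by
    have h1 : ∑ n ∈ F0, f ((n:ℤ) : ℝ)
        = ∑ n ∈ G, (if Nat.gcd n.natAbs a = 1 then f ((n:ℤ):ℝ) else 0) := by
      rw [hF0def, Finset.sum_filter]
    have h2 : ∀ n ∈ G, (if Nat.gcd n.natAbs a = 1 then f ((n:ℤ):ℝ) else 0)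
        = ∑ e ∈ a.divisors, (if (e:ℤ) ∣ n then (μ e : ℝ) * f ((n:ℤ):ℝ) else 0) := by
      intro n _
      rw [← Finset.sum_filter, ← hdivd n]
      have hz : ∑ e ∈ (Nat.gcd n.natAbs a).divisors, (μ e : ℝ)
          = if Nat.gcd n.natAbs a = 1 then 1 else 0 := by
        have := coe_mul_zeta_apply (f := μ) (x := Nat.gcd n.natAbs a)
        rw [moebius_mul_coe_zeta] at this
        rw_mod_cast [← this, one_apply]
        split <;> norm_num
      rw [← Finset.sum_mul, hz]
      split <;> simp
    rw [h1, Finset.sum_congr rfl h2, Finset.sum_comm]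
    apply Finset.sum_congr rfl
    intro e _
    rw [hTdef, ← Finset.sum_filter, Finset.mul_sum]
  -- step 3 : main term
  have hprod : (∏ q ∈ a.primeFactors, (1 - 1 / (q : ℝ))) * J
      = ∑ e ∈ a.divisors, (μ e : ℝ) * ((1/(e:ℝ)) * J) := by
    rw [← moebius_div_sum a ha0, Finset.sum_mul]
    exact Finset.sum_congr rfl fun e _ => by ring
  -- assemble
  rw [htsum, hmoeb, hprod, ← Finset.sum_sub_distrib]
  have hterm : ∀ e ∈ a.divisors,
      |(μ e : ℝ) * T e - (μ e : ℝ) * ((1/(e:ℝ)) * J)| ≤ |(μ e : ℝ)| * (3 * M + V) := by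
    intro e he
    have he1 : 1 ≤ e := Nat.pos_of_mem_divisors he
    rw [← mul_sub, abs_mul]
    exact mul_le_mul_of_nonneg_left
      (core_bound A B hAB f f' hf0 hd hc M hM e he1) (abs_nonneg _)
  calc |∑ e ∈ a.divisors, ((μ e : ℝ) * T e - (μ e : ℝ) * ((1/(e:ℝ)) * J))|
      ≤ ∑ e ∈ a.divisors, |(μ e : ℝ) * T e - (μ e : ℝ) * ((1/(e:ℝ)) * J)| :=
        Finset.abs_sum_le_sum_abs _ _
    _ ≤ ∑ e ∈ a.divisors, |(μ e : ℝ)| * (3 * M + V) := Finset.sum_le_sum hterm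
    _ = (2 : ℝ) ^ a.primeFactors.card * (3 * M + V) := by
        rw [← Finset.sum_mul, moebius_abs_sum a ha0]
    _ ≤ 3 * 2 ^ a.primeFactors.card * (M + V) := by nlinarith [pow_pos (zero_lt_two (α := ℝ)) a.primeFactors.card]
end

section
/- Let a ∈ ℤ^3 be a primitive vector with a_1a_2a_3 ≠ 0, and let B_1, B_2, B_3 > 0. Then the number of primitive vectors x ∈ ℤ^3 satisfying a_1x_1 + a_2x_2 + a_3x_3 = 0 and |x_i| ≤ B_i for i = 1,2,3 is O( 1 + B_1B_2B_3 / max_{1≤i≤3}(|a_i|B_i) ), with an absolute implied constant. -/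
/-- integer cross product on `Fin 3 → ℤ`. -/
def crs (x y : Fin 3 → ℤ) : Fin 3 → ℤ :=
  ![x 1 * y 2 - x 2 * y 1, x 2 * y 0 - x 0 * y 2, x 0 * y 1 - x 1 * y 0]

lemma bezout3 (a : Fin 3 → ℤ) (h : Finset.gcd Finset.univ (fun i => (a i).natAbs) = 1) :
    ∃ u : Fin 3 → ℤ, u 0 * a 0 + u 1 * a 1 + u 2 * a 2 = 1 := by
  have huniv : (Finset.univ : Finset (Fin 3)) = {0, 1, 2} := rfl
  rw [huniv, Finset.gcd_insert, Finset.gcd_insert, Finset.gcd_singleton] at h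
  have h' : Nat.gcd (a 0).natAbs (Nat.gcd (a 1).natAbs ((a 2).natAbs)) = 1 := by rw [normalize_eq] at h; exact h
  set g2 : ℕ := Int.gcd (a 1) (a 2) with hg2
  have e2 : (g2 : ℤ) = a 1 * Int.gcdA (a 1) (a 2) + a 2 * Int.gcdB (a 1) (a 2) :=
    Int.gcd_eq_gcd_ab (a 1) (a 2)
  have hg1 : Int.gcd (a 0) (g2 : ℤ) = 1 := by
    simpa [Int.gcd, hg2] using h'
  have e1 : ((Int.gcd (a 0) (g2:ℤ) : ℕ) : ℤ)
      = a 0 * Int.gcdA (a 0) (g2:ℤ) + (g2:ℤ) * Int.gcdB (a 0) (g2:ℤ) :=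
    Int.gcd_eq_gcd_ab (a 0) (g2:ℤ)
  rw [hg1] at e1
  refine ⟨![Int.gcdA (a 0) (g2:ℤ), Int.gcdA (a 1) (a 2) * Int.gcdB (a 0) (g2:ℤ),
    Int.gcdB (a 1) (a 2) * Int.gcdB (a 0) (g2:ℤ)], ?_⟩
  simp only [Matrix.cons_val_zero, Matrix.cons_val_one, Matrix.head_cons,
    Matrix.cons_val_two, Matrix.tail_cons]
  linear_combination (-1 : ℤ) * e1 - Int.gcdB (a 0) (g2:ℤ) * e2

lemma crs_eq_mul (a x y u : Fin 3 → ℤ) (hu : u 0 * a 0 + u 1 * a 1 + u 2 * a 2 = 1)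
    (hx : a 0 * x 0 + a 1 * x 1 + a 2 * x 2 = 0)
    (hy : a 0 * y 0 + a 1 * y 1 + a 2 * y 2 = 0) :
    ∀ i, crs x y i = (u 0 * crs x y 0 + u 1 * crs x y 1 + u 2 * crs x y 2) * a i := by
  have h01 : a 0 * crs x y 1 = a 1 * crs x y 0 := by
    simp only [crs, Matrix.cons_val_zero, Matrix.cons_val_one, Matrix.head_cons]
    linear_combination x 2 * hy - y 2 * hx
  have h02 : a 0 * crs x y 2 = a 2 * crs x y 0 := by
    simp only [crs, Matrix.cons_val_zero, Matrix.cons_val_two, Matrix.tail_cons, Matrix.head_cons]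
    linear_combination y 1 * hx - x 1 * hy
  have h12 : a 1 * crs x y 2 = a 2 * crs x y 1 := by
    simp only [crs, Matrix.cons_val_zero, Matrix.cons_val_one, Matrix.cons_val_two, Matrix.tail_cons, Matrix.head_cons]
    linear_combination x 0 * hy - y 0 * hx
  intro i
  fin_cases i
  · show crs x y 0 = _ * a 0
    linear_combination (-(crs x y 0)) * hu - u 1 * h01 - u 2 * h02
  · show crs x y 1 = _ * a 1
    linear_combination (-(crs x y 1)) * hu + u 0 * h01 - u 2 * h12
  · show crs x y 2 = _ * a 2
    linear_combination (-(crs x y 2)) * hu + u 0 * h02 + u 1 * h12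

lemma para3 (x y u : Fin 3 → ℤ) (hu : u 0 * x 0 + u 1 * x 1 + u 2 * x 2 = 1)
    (hc : ∀ i, crs x y i = 0) : ∃ m : ℤ, ∀ i, y i = m * x i := by
  have c0 : x 1 * y 2 - x 2 * y 1 = 0 := hc 0
  have c1 : x 2 * y 0 - x 0 * y 2 = 0 := hc 1
  have c2 : x 0 * y 1 - x 1 * y 0 = 0 := hc 2
  refine ⟨u 0 * y 0 + u 1 * y 1 + u 2 * y 2, ?_⟩
  intro i
  fin_cases i
  · show y 0 = _ * x 0
    linear_combination (-(y 0)) * hu - u 1 * c2 + u 2 * c1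
  · show y 1 = _ * x 1
    linear_combination (-(y 1)) * hu + u 0 * c2 - u 2 * c0
  · show y 2 = _ * x 2
    linear_combination (-(y 2)) * hu - u 0 * c1 + u 1 * c0

lemma crs_sub (x y y' : Fin 3 → ℤ) :
    ∀ i, crs x (fun j => y j - y' j) i = crs x y i - crs x y' i := by
  intro i; fin_cases i <;> simp [crs] <;> ring

lemma prim_pm (x y : Fin 3 → ℤ) (m : ℤ)
    (hy : Finset.gcd Finset.univ (fun i => (y i).natAbs) = 1)
    (h : ∀ i, y i = m * x i) : m = 1 ∨ m = -1 := by
  have hdvd : m.natAbs ∣ Finset.gcd Finset.univ (fun i => (y i).natAbs) := by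
    refine Finset.dvd_gcd fun i _ => ?_
    rw [h i, Int.natAbs_mul]
    exact Dvd.intro _ rfl
  rw [hy, Nat.dvd_one] at hdvd
  rcases Int.natAbs_eq m with he | he <;> rw [hdvd] at he <;> [left; right] <;> omega

set_option maxHeartbeats 1000000 in
theorem stmt_10 :
    ∃ C : ℝ, ∀ (a : Fin 3 → ℤ),
      Finset.gcd Finset.univ (fun i => (a i).natAbs) = 1 →
      (∀ i, a i ≠ 0) →
      ∀ (B : Fin 3 → ℝ), (∀ i, 0 < B i) →
      (Nat.card {x : Fin 3 → ℤ //
          Finset.gcd Finset.univ (fun i => (x i).natAbs) = 1 ∧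
          (∑ i, a i * x i = 0) ∧ ∀ i, |(x i : ℝ)| ≤ B i} : ℝ)
        ≤ C * (1 + (B 0 * B 1 * B 2) / (⨆ i, |(a i : ℝ)| * B i)) := by
  refine ⟨20, ?_⟩
  intro a ha hane B hB
  set V : ℝ := B 0 * B 1 * B 2 with hVdef
  set Mx : ℝ := ⨆ i, |(a i : ℝ)| * B i with hMxdef
  have hV : 0 < V := by rw [hVdef]; exact mul_pos (mul_pos (hB 0) (hB 1)) (hB 2)
  -- the sup is attained
  obtain ⟨j, hj⟩ : ∃ j : Fin 3, ∀ i : Fin 3, |(a i : ℝ)| * B i ≤ |(a j : ℝ)| * B j :=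
    Finite.exists_max _
  have hMle : Mx ≤ |(a j : ℝ)| * B j := by rw [hMxdef]; exact ciSup_le hj
  have hMge : |(a 0 : ℝ)| * B 0 ≤ Mx := by
    rw [hMxdef]
    exact le_ciSup (f := fun i => |(a i : ℝ)| * B i) (Set.Finite.bddAbove (Set.finite_range _)) 0
  have hMpos : 0 < Mx := by
    refine lt_of_lt_of_le ?_ hMge
    have h' : (a 0 : ℝ) ≠ 0 := by exact_mod_cast hane 0
    exact mul_pos (abs_pos.mpr h') (hB 0)
  -- the finite set of solutions
  set Q : (Fin 3 → ℤ) → Prop := fun x =>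
    Finset.gcd Finset.univ (fun i => (x i).natAbs) = 1 ∧
      (∑ i, a i * x i = 0) ∧ ∀ i, |(x i : ℝ)| ≤ B i with hQdef
  have hfin : {x : Fin 3 → ℤ | Q x}.Finite := by
    refine Set.Finite.subset (Set.Finite.pi
      (fun i => Set.finite_Icc (-⌈B i⌉) ⌈B i⌉)) ?_
    intro x hx
    rw [Set.mem_pi]
    intro i _
    have h1 := (hx.2.2 i)
    rw [abs_le] at h1
    constructor
    · have : ((-⌈B i⌉ : ℤ) : ℝ) ≤ (x i : ℝ) := by
        push_cast
        calc (-(⌈B i⌉:ℝ)) ≤ -B i := by linarith [Int.le_ceil (B i)]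
          _ ≤ (x i : ℝ) := h1.1
      exact_mod_cast this
    · have : ((x i : ℤ) : ℝ) ≤ ((⌈B i⌉ : ℤ) : ℝ) := h1.2.trans (Int.le_ceil (B i))
      exact_mod_cast this
  set F : Finset (Fin 3 → ℤ) := hfin.toFinset with hFdef
  have hmemF : ∀ y, y ∈ F ↔ Q y := fun y => hfin.mem_toFinset
  have hcard : Nat.card {x : Fin 3 → ℤ // Q x} = F.card := by
    rw [Nat.card_congr (Equiv.subtypeEquivRight fun x => (hmemF x).symm)]
    exact Nat.card_eq_finsetCard F
  rw [show {x : Fin 3 → ℤ //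
      Finset.gcd Finset.univ (fun i => (x i).natAbs) = 1 ∧
      (∑ i, a i * x i = 0) ∧ ∀ i, |(x i : ℝ)| ≤ B i} = {x : Fin 3 → ℤ // Q x} from rfl, hcard]
  -- trivial case : no solutions
  rcases F.eq_empty_or_nonempty with hF | ⟨x₀, hx₀F⟩
  · rw [hF]
    simp only [Finset.card_empty, Nat.cast_zero]
    have : 0 ≤ V / Mx := div_nonneg hV.le hMpos.le
    nlinarith
  obtain ⟨hx₀prim, hx₀sum', hx₀box⟩ := (hmemF x₀).1 hx₀F
  have hx₀sum : a 0 * x₀ 0 + a 1 * x₀ 1 + a 2 * x₀ 2 = 0 := by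
    rwa [Fin.sum_univ_three] at hx₀sum'
  -- x₀ is nonzero
  have hx₀ne : ∃ i, x₀ i ≠ 0 := by
    by_contra hcon
    push_neg at hcon
    rw [show (fun i => (x₀ i).natAbs) = fun _ => 0 by funext i; rw [hcon i]; rfl,
      Finset.gcd_eq_zero_iff.mpr (fun i _ => rfl)] at hx₀prim
    exact absurd hx₀prim (by norm_num)
  -- the largest (relative) coordinate of x₀
  obtain ⟨i₀, hi₀⟩ : ∃ i₀ : Fin 3, ∀ i : Fin 3, |(x₀ i : ℝ)| / B i ≤ |(x₀ i₀ : ℝ)| / B i₀ :=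
    Finite.exists_max _
  set lam : ℝ := |(x₀ i₀ : ℝ)| / B i₀ with hlamdef
  have hx₀i₀ : x₀ i₀ ≠ 0 := by
    obtain ⟨i, hi⟩ := hx₀ne
    intro hcon
    have h1 := hi₀ i
    rw [hlamdef, hcon] at h1
    simp only [Int.cast_zero, abs_zero, zero_div] at h1
    have : (0:ℝ) < |(x₀ i : ℝ)| := by
      have : (x₀ i : ℝ) ≠ 0 := by exact_mod_cast hi
      exact abs_pos.mpr this
    have := div_pos this (hB i)
    linarith
  have habs₀ : (0:ℝ) < |(x₀ i₀ : ℝ)| := by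
    have : (x₀ i₀ : ℝ) ≠ 0 := by exact_mod_cast hx₀i₀
    exact abs_pos.mpr this
  have hlam_pos : 0 < lam := div_pos habs₀ (hB i₀)
  have hlam_le1 : lam ≤ 1 := by
    rw [hlamdef, div_le_one (hB i₀)]
    exact hx₀box i₀
  have hshort : ∀ i, |(x₀ i : ℝ)| ≤ lam * B i := by
    intro i
    have := hi₀ i
    rw [div_le_iff₀ (hB i)] at this
    linarith [this]
  -- Bezout vectors
  obtain ⟨u, hu⟩ := bezout3 a ha
  obtain ⟨w, hw⟩ := bezout3 x₀ hx₀prim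
  -- the quotient map g
  set g : (Fin 3 → ℤ) → ℤ :=
    fun y => u 0 * crs x₀ y 0 + u 1 * crs x₀ y 1 + u 2 * crs x₀ y 2 with hgdef
  have hg : ∀ y ∈ F, ∀ i, crs x₀ y i = g y * a i := by
    intro y hy i
    obtain ⟨-, hysum', -⟩ := (hmemF y).1 hy
    have hysum : a 0 * y 0 + a 1 * y 1 + a 2 * y 2 = 0 := by
      rwa [Fin.sum_univ_three] at hysum'
    exact crs_eq_mul a x₀ y u hu hx₀sum hysum i
  -- bound on |g y|
  have hgb : ∀ y ∈ F, |(g y : ℝ)| * Mx ≤ 2 * lam * V := by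
    intro y hy
    obtain ⟨-, -, hybox⟩ := (hmemF y).1 hy
    have hcb : |(crs x₀ y j : ℝ)| * B j ≤ 2 * lam * V := by
      have e0 : ∀ i j : Fin 3, |((x₀ i * y j - x₀ j * y i : ℤ) : ℝ)|
          ≤ lam * B i * B j + lam * B j * B i := by
        intro i j
        push_cast
        calc |(x₀ i : ℝ) * (y j : ℝ) - (x₀ j : ℝ) * (y i : ℝ)|
            ≤ |(x₀ i : ℝ) * (y j : ℝ)| + |(x₀ j : ℝ) * (y i : ℝ)| := abs_sub _ _
          _ ≤ lam * B i * B j + lam * B j * B i := by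
              rw [abs_mul, abs_mul]
              have h1 := hshort i; have h2 := hshort j
              have h3 := hybox i; have h4 := hybox j
              have := abs_nonneg ((x₀ i : ℝ)); have := abs_nonneg ((y j : ℝ))
              have := abs_nonneg ((x₀ j : ℝ)); have := abs_nonneg ((y i : ℝ))
              nlinarith [hB i, hB j, hlam_pos]
      fin_cases j
      · have := e0 1 2
        have hb : (0:ℝ) < B 0 := hB 0
        calc |(crs x₀ y 0 : ℝ)| * B 0
            = |((x₀ 1 * y 2 - x₀ 2 * y 1 : ℤ) : ℝ)| * B 0 := rfl
          _ ≤ (lam * B 1 * B 2 + lam * B 2 * B 1) * B 0 := by nlinarith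
          _ = 2 * lam * V := by rw [hVdef]; ring
      · have := e0 2 0
        have hb : (0:ℝ) < B 1 := hB 1
        calc |(crs x₀ y 1 : ℝ)| * B 1
            = |((x₀ 2 * y 0 - x₀ 0 * y 2 : ℤ) : ℝ)| * B 1 := rfl
          _ ≤ (lam * B 2 * B 0 + lam * B 0 * B 2) * B 1 := by nlinarith
          _ = 2 * lam * V := by rw [hVdef]; ring
      · have := e0 0 1
        have hb : (0:ℝ) < B 2 := hB 2
        calc |(crs x₀ y 2 : ℝ)| * B 2
            = |((x₀ 0 * y 1 - x₀ 1 * y 0 : ℤ) : ℝ)| * B 2 := rfl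
          _ ≤ (lam * B 0 * B 1 + lam * B 1 * B 0) * B 2 := by nlinarith
          _ = 2 * lam * V := by rw [hVdef]; ring
    have heq : |(g y : ℝ)| * |(a j : ℝ)| = |(crs x₀ y j : ℝ)| := by
      rw [← abs_mul]
      congr 1
      have := hg y hy j
      push_cast [this]
      ring
    calc |(g y : ℝ)| * Mx ≤ |(g y : ℝ)| * (|(a j : ℝ)| * B j) :=
          mul_le_mul_of_nonneg_left hMle (abs_nonneg _)
      _ = |(crs x₀ y j : ℝ)| * B j := by rw [← mul_assoc, heq]
      _ ≤ 2 * lam * V := hcb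
  -- the range of g
  set K : ℤ := ⌊2 * lam * V / Mx⌋ with hKdef
  have hK0 : 0 ≤ K := by
    rw [hKdef]
    refine Int.floor_nonneg.mpr (div_nonneg ?_ hMpos.le)
    nlinarith
  have hmemIcc : ∀ y ∈ F, g y ∈ Finset.Icc (-K) K := by
    intro y hy
    have h1 : |(g y : ℝ)| ≤ 2 * lam * V / Mx := by
      rw [le_div_iff₀ hMpos]
      exact hgb y hy
    rw [Finset.mem_Icc]
    constructor
    · rw [← neg_le]
      refine Int.le_floor.mpr ?_
      push_cast
      exact (neg_le_abs _).trans h1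
    · refine Int.le_floor.mpr ?_
      calc ((g y : ℤ) : ℝ) ≤ |(g y : ℝ)| := le_abs_self _
        _ ≤ 2 * lam * V / Mx := h1
  classical
  rw [Finset.card_eq_sum_card_fiberwise hmemIcc]
  -- the fiber over 0 has at most 2 elements
  have h0fib : (F.filter fun y => g y = 0).card ≤ 2 := by
    have hsub : (F.filter fun y => g y = 0) ⊆ {x₀, fun i => -x₀ i} := by
      intro y hy
      rw [Finset.mem_filter] at hy
      obtain ⟨hyF, hy0⟩ := hy
      have hc : ∀ i, crs x₀ y i = 0 := by
        intro i
        rw [hg y hyF i, hy0, zero_mul]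
      obtain ⟨m, hm⟩ := para3 x₀ y w hw hc
      obtain ⟨hyprim, -, -⟩ := (hmemF y).1 hyF
      rcases prim_pm x₀ y m hyprim hm with h1 | h1
      · rw [Finset.mem_insert]
        left
        funext i
        rw [hm i, h1, one_mul]
      · rw [Finset.mem_insert, Finset.mem_singleton]
        right
        funext i
        rw [hm i, h1]
        ring
    calc (F.filter fun y => g y = 0).card ≤ ({x₀, fun i => -x₀ i} : Finset _).card :=
        Finset.card_le_card hsub
      _ ≤ 2 := Finset.card_insert_le _ _ |>.trans (by simp)
  -- other fibers
  set mu : ℝ := 2 * B i₀ / |(x₀ i₀ : ℝ)| with hmudef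
  have hmu_pos : 0 < mu := by rw [hmudef]; exact div_pos (by linarith [hB i₀]) habs₀
  set Mb : ℤ := ⌊mu⌋ with hMbdef
  have hMb0 : 0 ≤ Mb := Int.floor_nonneg.mpr hmu_pos.le
  have hLfib : ∀ k : ℤ, k ≠ 0 → (F.filter fun y => g y = k).card ≤ (Finset.Icc (-Mb) Mb).card := by
    intro k _
    set fib := F.filter fun y => g y = k with hfibdef
    rcases fib.eq_empty_or_nonempty with hfe | ⟨y₀, hy₀⟩
    · rw [hfe, Finset.card_empty]; exact Nat.zero_le _
    have hy₀F : y₀ ∈ F := (Finset.mem_filter.1 hy₀).1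
    have hy₀g : g y₀ = k := (Finset.mem_filter.1 hy₀).2
    obtain ⟨-, -, hy₀box⟩ := (hmemF y₀).1 hy₀F
    have key : ∀ y ∈ fib, ∃ m : ℤ, (∀ i, y i = y₀ i + m * x₀ i) ∧
        ((y i₀ - y₀ i₀) / x₀ i₀ = m) ∧ m ∈ Finset.Icc (-Mb) Mb := by
      intro y hy
      have hyF : y ∈ F := (Finset.mem_filter.1 hy).1
      have hyg : g y = k := (Finset.mem_filter.1 hy).2
      obtain ⟨-, -, hybox⟩ := (hmemF y).1 hyF
      have hc : ∀ i, crs x₀ (fun j => y j - y₀ j) i = 0 := by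
        intro i
        rw [crs_sub, hg y hyF i, hg y₀ hy₀F i, hyg, hy₀g, sub_self]
      obtain ⟨m, hm'⟩ := para3 x₀ (fun j => y j - y₀ j) w hw hc
      have hm : ∀ i, y i - y₀ i = m * x₀ i := fun i => hm' i
      refine ⟨m, fun i => by linarith [hm i], ?_, ?_⟩
      · rw [hm i₀]
        exact Int.mul_ediv_cancel m hx₀i₀
      · have habs : |(m : ℝ)| * |(x₀ i₀ : ℝ)| ≤ 2 * B i₀ := by
          rw [← abs_mul]
          have : (m : ℝ) * (x₀ i₀ : ℝ) = (y i₀ : ℝ) - (y₀ i₀ : ℝ) := by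
            have h9 : ((y i₀ - y₀ i₀ : ℤ) : ℝ) = ((m * x₀ i₀ : ℤ) : ℝ) := by
              exact_mod_cast congrArg (fun t : ℤ => (t : ℝ)) (hm i₀)
            push_cast at h9
            linarith
          rw [this]
          calc |(y i₀ : ℝ) - (y₀ i₀ : ℝ)| ≤ |(y i₀ : ℝ)| + |(y₀ i₀ : ℝ)| := abs_sub _ _
            _ ≤ 2 * B i₀ := by linarith [hybox i₀, hy₀box i₀]
        have hmabs : |(m : ℝ)| ≤ mu := by
          rw [hmudef, le_div_iff₀ habs₀]
          exact habs
        rw [Finset.mem_Icc]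
        constructor
        · rw [← neg_le]
          refine Int.le_floor.mpr ?_
          push_cast
          exact (neg_le_abs _).trans hmabs
        · refine Int.le_floor.mpr ?_
          exact (le_abs_self ((m : ℤ) : ℝ)).trans hmabs
    refine Finset.card_le_card_of_injOn (fun y => (y i₀ - y₀ i₀) / x₀ i₀) ?_ ?_
    · intro y hy
      obtain ⟨m, -, hdiv, hmem⟩ := key y hy
      show (y i₀ - y₀ i₀) / x₀ i₀ ∈ Finset.Icc (-Mb) Mb
      rw [hdiv]; exact hmem
    · intro y hy y' hy' heq
      obtain ⟨m, hmy, hdiv, -⟩ := key y hy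
      obtain ⟨m', hmy', hdiv', -⟩ := key y' hy'
      have heq' : (y i₀ - y₀ i₀) / x₀ i₀ = (y' i₀ - y₀ i₀) / x₀ i₀ := heq
      rw [hdiv, hdiv'] at heq'
      funext i
      rw [hmy i, hmy' i, heq']
  -- sum the fiber bounds
  have h0Icc : (0 : ℤ) ∈ Finset.Icc (-K) K := by
    rw [Finset.mem_Icc]; omega
  have hsplit : ∑ k ∈ Finset.Icc (-K) K, (F.filter fun y => g y = k).card
      = (F.filter fun y => g y = 0).card +
        ∑ k ∈ (Finset.Icc (-K) K).erase 0, (F.filter fun y => g y = k).card :=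
    (Finset.add_sum_erase _ _ h0Icc).symm
  have hsum2 : ∑ k ∈ (Finset.Icc (-K) K).erase 0, (F.filter fun y => g y = k).card
      ≤ ((Finset.Icc (-K) K).erase 0).card * (Finset.Icc (-Mb) Mb).card := by
    calc ∑ k ∈ (Finset.Icc (-K) K).erase 0, (F.filter fun y => g y = k).card
        ≤ ∑ _k ∈ (Finset.Icc (-K) K).erase 0, (Finset.Icc (-Mb) Mb).card := by
          refine Finset.sum_le_sum fun k hk => hLfib k (Finset.ne_of_mem_erase hk)
      _ = ((Finset.Icc (-K) K).erase 0).card * (Finset.Icc (-Mb) Mb).card := by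
          rw [Finset.sum_const, smul_eq_mul]
  -- cardinalities of the index sets
  have hIccK : (((Finset.Icc (-K) K).erase 0).card : ℝ) = 2 * (K : ℝ) := by
    have h1 : ((Finset.Icc (-K) K).card : ℤ) = 2 * K + 1 := by
      rw [Int.card_Icc]; omega
    have h2 : ((Finset.Icc (-K) K).erase 0).card = (Finset.Icc (-K) K).card - 1 :=
      Finset.card_erase_of_mem h0Icc
    have h3 : 1 ≤ (Finset.Icc (-K) K).card := Finset.card_pos.mpr ⟨0, h0Icc⟩
    have h4 : (((Finset.Icc (-K) K).erase 0).card : ℤ) = 2 * K := by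
      rw [h2]
      push_cast [h3]
      omega
    exact_mod_cast h4
  have hIccM : ((Finset.Icc (-Mb) Mb).card : ℝ) = 2 * (Mb : ℝ) + 1 := by
    have h1 : ((Finset.Icc (-Mb) Mb).card : ℤ) = 2 * Mb + 1 := by
      rw [Int.card_Icc]; omega
    exact_mod_cast h1
  -- final arithmetic
  have hNat : (∑ k ∈ Finset.Icc (-K) K, (F.filter fun y => g y = k).card)
      ≤ 2 + ((Finset.Icc (-K) K).erase 0).card * (Finset.Icc (-Mb) Mb).card := by
    rw [hsplit]
    exact Nat.add_le_add h0fib hsum2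
  have hfinal : ((∑ k ∈ Finset.Icc (-K) K, (F.filter fun y => g y = k).card : ℕ) : ℝ)
      ≤ 2 + 2 * (K : ℝ) * (2 * (Mb : ℝ) + 1) := by
    calc ((∑ k ∈ Finset.Icc (-K) K, (F.filter fun y => g y = k).card : ℕ) : ℝ)
        ≤ ((2 + ((Finset.Icc (-K) K).erase 0).card * (Finset.Icc (-Mb) Mb).card : ℕ) : ℝ) := by
          exact_mod_cast hNat
      _ = 2 + (((Finset.Icc (-K) K).erase 0).card : ℝ) * ((Finset.Icc (-Mb) Mb).card : ℝ) := by
          push_cast; ring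
      _ = 2 + 2 * (K : ℝ) * (2 * (Mb : ℝ) + 1) := by rw [hIccK, hIccM]
  refine hfinal.trans ?_
  have hKb : (K : ℝ) ≤ 2 * lam * V / Mx := Int.floor_le _
  have hMub : (Mb : ℝ) ≤ mu := Int.floor_le _
  have hlammu : lam * mu = 2 := by
    rw [hlamdef, hmudef, div_mul_div_comm, div_eq_iff (ne_of_gt (mul_pos (hB i₀) habs₀))]
    ring
  have hVM : 0 ≤ V / Mx := div_nonneg hV.le hMpos.le
  have hKnn : (0:ℝ) ≤ (K : ℝ) := by exact_mod_cast hK0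
  have hMbnn : (0:ℝ) ≤ (Mb : ℝ) := by exact_mod_cast hMb0
  have step : 2 * (K : ℝ) * (2 * (Mb : ℝ) + 1) ≤ 2 * (2 * lam * V / Mx) * (2 * mu + 1) := by
    have h1 : 2 * (Mb : ℝ) + 1 ≤ 2 * mu + 1 := by linarith
    have h2 : (0:ℝ) ≤ 2 * (Mb : ℝ) + 1 := by linarith
    have h3 : (0:ℝ) ≤ 2 * lam * V / Mx := div_nonneg (by nlinarith) hMpos.le
    have hA : (K : ℝ) * (2 * (Mb : ℝ) + 1) ≤ (2 * lam * V / Mx) * (2 * mu + 1) :=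
      mul_le_mul hKb h1 h2 h3
    linarith
  have expand : 2 * (2 * lam * V / Mx) * (2 * mu + 1) = 8 * (lam * mu) * (V / Mx) + 4 * lam * (V / Mx) := by
    field_simp
    ring
  rw [expand, hlammu] at step
  have : 4 * lam * (V / Mx) ≤ 4 * (V / Mx) := by nlinarith
  nlinarith
end

section
/- Let N_U(B) denote half the number of primitive vectors x ∈ ℤ^7 with max_{1≤i≤7}|x_i| ≤ B satisfying x_1^2 − x_2x_4 = x_1x_5 − x_3x_4 = x_1x_3 − x_2x_5 = x_1x_6 − x_3x_5 = x_2x_6 − x_3^2 = x_4x_6 − x_5^2 = x_1^2 + x_1x_4 + x_5x_7 = x_1x_2 + x_1^2 + x_3x_7 = x_1x_3 + x_1x_5 + x_6x_7 = 0 and not lying on any of the three lines {x_1 = x_2 = x_3 = x_5 = x_6 = 0}, {x_1 = x_3 = x_4 = x_5 = x_6 = 0}, {x_3 = x_5 = x_6 = x_1+x_4 = x_1+x_2 = 0}. Let M(B) be the number of x ∈ ℤ^7 with gcd(x_1,…,x_7) = 1 satisfying x_1^2 − x_2x_4 = x_1x_5 − x_3x_4 = x_1x_3 − x_2x_5 =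 x_1x_6 − x_3x_5 = x_2x_6 − x_3^2 = x_4x_6 − x_5^2 = x_1^2 − x_1x_4 + x_5x_7 = x_1^2 − x_1x_2 − x_3x_7 = x_1x_3 − x_1x_5 + x_6x_7 = 0, with x_1 ≠ 0, x_5 ≠ 0, x_2 > 0, x_3 > 0, x_4 > 0, x_6 > 0, |x_1|, x_2, x_3, x_4, |x_5|, x_6 ≤ B and |x_7| ≤ B. Then N_U(B) = 2·M(B) + O(B). -/
namespace S17


abbrev V := Fin 7 → ℤ

def Prim (x : V) : Prop := Finset.gcd Finset.univ (fun i => (x i).natAbs) = 1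
def Ht (B : ℝ) (x : V) : Prop := ∀ i, |(x i : ℝ)| ≤ B

def MQ (x : V) : Prop :=
  x 0 ^ 2 - x 1 * x 3 = 0 ∧
  x 0 * x 4 - x 2 * x 3 = 0 ∧
  x 0 * x 2 - x 1 * x 4 = 0 ∧
  x 0 * x 5 - x 2 * x 4 = 0 ∧
  x 1 * x 5 - x 2 ^ 2 = 0 ∧
  x 3 * x 5 - x 4 ^ 2 = 0 ∧
  x 0 ^ 2 - x 0 * x 3 + x 4 * x 6 = 0 ∧
  x 0 ^ 2 - x 0 * x 1 - x 2 * x 6 = 0 ∧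
  x 0 * x 2 - x 0 * x 4 + x 5 * x 6 = 0

def OffL (x : V) : Prop :=
  ¬(x 0 = 0 ∧ x 1 = 0 ∧ x 2 = 0 ∧ x 4 = 0 ∧ x 5 = 0) ∧
  ¬(x 0 = 0 ∧ x 2 = 0 ∧ x 3 = 0 ∧ x 4 = 0 ∧ x 5 = 0) ∧
  ¬(x 2 = 0 ∧ x 4 = 0 ∧ x 5 = 0 ∧ x 3 - x 0 = 0 ∧ x 1 - x 0 = 0)

def PA' (B : ℝ) (x : V) : Prop := Prim x ∧ Ht B x ∧ MQ x ∧ OffL x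
def PG (B : ℝ) (x : V) : Prop := PA' B x ∧ x 0 ≠ 0 ∧ x 4 ≠ 0
def PD (B : ℝ) (x : V) : Prop := PA' B x ∧ (x 0 = 0 ∨ x 4 = 0)

def PA (B : ℝ) (x : V) : Prop :=
  Finset.gcd Finset.univ (fun i => (x i).natAbs) = 1 ∧
  (∀ i, |(x i : ℝ)| ≤ B) ∧
  x 0 ^ 2 - x 1 * x 3 = 0 ∧
  x 0 * x 4 - x 2 * x 3 = 0 ∧
  x 0 * x 2 - x 1 * x 4 = 0 ∧
  x 0 * x 5 - x 2 * x 4 = 0 ∧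
  x 1 * x 5 - x 2 ^ 2 = 0 ∧
  x 3 * x 5 - x 4 ^ 2 = 0 ∧
  x 0 ^ 2 + x 0 * x 3 + x 4 * x 6 = 0 ∧
  x 0 * x 1 + x 0 ^ 2 + x 2 * x 6 = 0 ∧
  x 0 * x 2 + x 0 * x 4 + x 5 * x 6 = 0 ∧
  ¬ (x 0 = 0 ∧ x 1 = 0 ∧ x 2 = 0 ∧ x 4 = 0 ∧ x 5 = 0) ∧
  ¬ (x 0 = 0 ∧ x 2 = 0 ∧ x 3 = 0 ∧ x 4 = 0 ∧ x 5 = 0) ∧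
  ¬ (x 2 = 0 ∧ x 4 = 0 ∧ x 5 = 0 ∧ x 0 + x 3 = 0 ∧ x 0 + x 1 = 0)

def PM (B : ℝ) (x : V) : Prop :=
  Finset.gcd Finset.univ (fun i => (x i).natAbs) = 1 ∧
  x 0 ^ 2 - x 1 * x 3 = 0 ∧
  x 0 * x 4 - x 2 * x 3 = 0 ∧
  x 0 * x 2 - x 1 * x 4 = 0 ∧
  x 0 * x 5 - x 2 * x 4 = 0 ∧
  x 1 * x 5 - x 2 ^ 2 = 0 ∧
  x 3 * x 5 - x 4 ^ 2 = 0 ∧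
  x 0 ^ 2 - x 0 * x 3 + x 4 * x 6 = 0 ∧
  x 0 ^ 2 - x 0 * x 1 - x 2 * x 6 = 0 ∧
  x 0 * x 2 - x 0 * x 4 + x 5 * x 6 = 0 ∧
  x 0 ≠ 0 ∧ x 4 ≠ 0 ∧ 0 < x 1 ∧ 0 < x 2 ∧ 0 < x 3 ∧ 0 < x 5 ∧
  (∀ i, |(x i : ℝ)| ≤ B)

/-- the sign flip relating the two systems -/
def sg (x : V) : V := ![-x 0, x 1, x 2, x 3, -x 4, x 5, -x 6]

lemma sg0 (x : V) : sg x 0 = -x 0 := rfl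
lemma sg1 (x : V) : sg x 1 = x 1 := rfl
lemma sg2 (x : V) : sg x 2 = x 2 := rfl
lemma sg3 (x : V) : sg x 3 = x 3 := rfl
lemma sg4 (x : V) : sg x 4 = -x 4 := rfl
lemma sg5 (x : V) : sg x 5 = x 5 := rfl
lemma sg6 (x : V) : sg x 6 = -x 6 := rfl

lemma sg_sg (x : V) : sg (sg x) = x := by
  funext i; fin_cases i <;> simp [sg0, sg1, sg2, sg3, sg4, sg5, sg6]

def sgEquiv : V ≃ V := ⟨sg, sg, sg_sg, sg_sg⟩

lemma prim_sg (x : V) : Prim (sg x) ↔ Prim x := by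
  unfold Prim
  have : (fun i => ((sg x) i).natAbs) = fun i => (x i).natAbs := by
    funext i; fin_cases i <;> simp [sg0, sg1, sg2, sg3, sg4, sg5, sg6]
  rw [this]

lemma ht_sg (B : ℝ) (x : V) : Ht B (sg x) ↔ Ht B x := by
  unfold Ht
  have key : ∀ i, |((sg x i : ℤ) : ℝ)| = |((x i : ℤ) : ℝ)| := by
    intro i; fin_cases i <;> simp [sg0, sg1, sg2, sg3, sg4, sg5, sg6]
  exact forall_congr' fun i => by rw [key i]

lemma pa_iff (B : ℝ) (x : V) : PA B x ↔ PA' B (sgEquiv x) := by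
  show PA B x ↔ PA' B (sg x)
  unfold PA PA' MQ OffL
  rw [prim_sg, ht_sg]
  simp only [sg0, sg1, sg2, sg3, sg4, sg5, sg6, neg_eq_zero, sub_neg_eq_add]
  constructor
  · rintro ⟨hg, hh, q1, q2, q3, q4, q5, q6, q7, q8, q9, l1, l2, l3⟩
    refine ⟨hg, hh, ⟨?_, ?_, ?_, ?_, ?_, ?_, ?_, ?_, ?_⟩,
      ?_, ?_, ?_⟩
    · linear_combination q1
    · linear_combination q2
    · linear_combination -q3
    · linear_combination -q4
    · linear_combination q5
    · linear_combination q6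
    · linear_combination q7
    · linear_combination q8
    · linear_combination -q9
    · exact fun ⟨a, b, c, d, e⟩ => l1 ⟨a, b, c, d, e⟩
    · exact fun ⟨a, b, c, d, e⟩ => l2 ⟨a, b, c, d, e⟩
    · exact fun ⟨a, b, c, d, e⟩ => l3 ⟨a, b, c, by omega, by omega⟩
  · rintro ⟨hg, hh, ⟨q1, q2, q3, q4, q5, q6, q7, q8, q9⟩, l1, l2, l3⟩
    refine ⟨hg, hh, ?_, ?_, ?_, ?_, ?_, ?_, ?_, ?_, ?_, ?_, ?_, ?_⟩
    · linear_combination q1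
    · linear_combination q2
    · linear_combination -q3
    · linear_combination -q4
    · linear_combination q5
    · linear_combination q6
    · linear_combination q7
    · linear_combination q8
    · linear_combination -q9
    · exact fun ⟨a, b, c, d, e⟩ => l1 ⟨a, b, c, d, e⟩
    · exact fun ⟨a, b, c, d, e⟩ => l2 ⟨a, b, c, d, e⟩
    · exact fun ⟨a, b, c, d, e⟩ => l3 ⟨a, b, c, by omega, by omega⟩

lemma cardA_eq (B : ℝ) : Nat.card {x : V // PA B x} = Nat.card {x : V // PA' B x} :=
  Nat.card_congr (Equiv.subtypeEquiv sgEquiv (pa_iff B))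

lemma finite_of_ht {B : ℝ} {P : V → Prop} (h : ∀ x, P x → Ht B x) :
    Finite {x : V // P x} := by
  let n : ℤ := ⌈B⌉
  have : ∀ (y : {x : V // P x}) (i : Fin 7), y.1 i ∈ Set.Icc (-n) n := by
    intro y i
    have h1 : |(y.1 i : ℝ)| ≤ B := h y.1 y.2 i
    have h2 : |y.1 i| ≤ n := by
      have : (|y.1 i| : ℝ) ≤ (n : ℝ) := by
        exact h1.trans (Int.le_ceil B)
      exact_mod_cast this
    exact Set.mem_Icc.mpr (abs_le.mp h2)
  apply Finite.of_injective (fun y : {x : V // P x} =>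
    (fun i => (⟨y.1 i, this y i⟩ : Set.Icc (-n) n)))
  intro a b hab
  apply Subtype.ext; funext i
  exact congrArg Subtype.val (congrFun hab i)

def splitEquiv (Q : V → Prop) :
    {x : V // Q x} ≃ {x : V // Q x ∧ (x 0 ≠ 0 ∧ x 4 ≠ 0)} ⊕ {x : V // Q x ∧ (x 0 = 0 ∨ x 4 = 0)} where
  toFun y := if h : y.1 0 = 0 ∨ y.1 4 = 0 then .inr ⟨y.1, y.2, h⟩
    else .inl ⟨y.1, y.2, (not_or.mp h).1, (not_or.mp h).2⟩
  invFun z := z.elim (fun y => ⟨y.1, y.2.1⟩) (fun y => ⟨y.1, y.2.1⟩)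
  left_inv y := by dsimp; split_ifs <;> rfl
  right_inv z := by
    rcases z with y | y
    · dsimp; rw [dif_neg (not_or.mpr ⟨y.2.2.1, y.2.2.2⟩)]
    · dsimp; rw [dif_pos y.2.2]
def sn (b : Bool) : ℤ := if b then -1 else 1

lemma sn_mul_sn (b : Bool) : sn b * sn b = 1 := by cases b <;> simp [sn]
lemma sn_ne (b : Bool) : sn b ≠ 0 := by cases b <;> simp [sn]

def act (b c : Bool) (x : V) : V :=
  ![sn b * x 0, sn b * x 1, sn b * sn c * x 2, sn b * x 3,
    sn b * sn c * x 4, sn b * x 5, sn b * sn c * x 6]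

lemma act0 (b c x) : act b c x 0 = sn b * x 0 := rfl
lemma act1 (b c x) : act b c x 1 = sn b * x 1 := rfl
lemma act2 (b c x) : act b c x 2 = sn b * sn c * x 2 := rfl
lemma act3 (b c x) : act b c x 3 = sn b * x 3 := rfl
lemma act4 (b c x) : act b c x 4 = sn b * sn c * x 4 := rfl
lemma act5 (b c x) : act b c x 5 = sn b * x 5 := rfl
lemma act6 (b c x) : act b c x 6 = sn b * sn c * x 6 := rfl

lemma act_act (b c : Bool) (x : V) : act b c (act b c x) = x := by
  have hb := sn_mul_sn b
  have hc := sn_mul_sn c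
  funext i
  fin_cases i
  · show sn b * (sn b * x 0) = x 0; linear_combination x 0 * hb
  · show sn b * (sn b * x 1) = x 1; linear_combination x 1 * hb
  · show sn b * sn c * (sn b * sn c * x 2) = x 2
    linear_combination (sn c * sn c * x 2) * hb + x 2 * hc
  · show sn b * (sn b * x 3) = x 3; linear_combination x 3 * hb
  · show sn b * sn c * (sn b * sn c * x 4) = x 4
    linear_combination (sn c * sn c * x 4) * hb + x 4 * hc
  · show sn b * (sn b * x 5) = x 5; linear_combination x 5 * hb
  · show sn b * sn c * (sn b * sn c * x 6) = x 6
    linear_combination (sn c * sn c * x 6) * hb + x 6 * hc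

lemma MQ_act {b c : Bool} {x : V} (h : MQ x) : MQ (act b c x) := by
  obtain ⟨q1, q2, q3, q4, q5, q6, q7, q8, q9⟩ := h
  have hb := sn_mul_sn b
  have hc := sn_mul_sn c
  refine ⟨?_, ?_, ?_, ?_, ?_, ?_, ?_, ?_, ?_⟩ <;>
    simp only [act0, act1, act2, act3, act4, act5, act6]
  · linear_combination (sn b * sn b) * q1
  · linear_combination (sn b * sn b * sn c) * q2
  · linear_combination (sn b * sn b * sn c) * q3
  · linear_combination (sn b * sn b) * q4 - (sn b * sn b * x 2 * x 4) * hc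
  · linear_combination (sn b * sn b) * q5 - (sn b * sn b * x 2 ^ 2) * hc
  · linear_combination (sn b * sn b) * q6 - (sn b * sn b * x 4 ^ 2) * hc
  · linear_combination (sn b * sn b) * q7 + (sn b * sn b * x 4 * x 6) * hc
  · linear_combination (sn b * sn b) * q8 - (sn b * sn b * x 2 * x 6) * hc
  · linear_combination (sn b * sn b * sn c) * q9
-- some coefficients may need fixing; will iterate

lemma natAbs_act (b c : Bool) (x : V) (i : Fin 7) :
    ((act b c x) i).natAbs = (x i).natAbs := by
  fin_cases i <;> cases b <;> cases c <;>
    simp [act0, act1, act2, act3, act4, act5, act6, sn, Int.natAbs_mul]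

lemma prim_act {b c : Bool} {x : V} (h : Prim x) : Prim (act b c x) := by
  unfold Prim at *
  have : (fun i => ((act b c x) i).natAbs) = fun i => (x i).natAbs := by
    funext i; exact natAbs_act b c x i
  rw [this]; exact h

lemma abs_cast_eq {z w : ℤ} (h : z.natAbs = w.natAbs) : |(z : ℝ)| = |(w : ℝ)| := by
  rw [← Int.cast_abs, ← Int.cast_abs, Int.abs_eq_natAbs, Int.abs_eq_natAbs, h]

lemma ht_act {B : ℝ} {b c : Bool} {x : V} (h : Ht B x) : Ht B (act b c x) := by
  intro i
  rw [abs_cast_eq (natAbs_act b c x i)]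
  exact h i

lemma offL_of_x2 {x : V} (h : x 2 ≠ 0) : OffL x :=
  ⟨fun ⟨_, _, h2, _, _⟩ => h h2, fun ⟨_, h2, _, _, _⟩ => h h2,
   fun ⟨h2, _, _, _, _⟩ => h h2⟩

lemma sn_mul_ne {b : Bool} {z : ℤ} (h : z ≠ 0) : sn b * z ≠ 0 :=
  mul_ne_zero (sn_ne b) h

/-- The 4-to-1 map. -/
def gmap (B : ℝ) (p : (Bool × Bool) × {x : V // PM B x}) :
    {x : V // PA' B x ∧ (x 0 ≠ 0 ∧ x 4 ≠ 0)} := by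
  obtain ⟨⟨b, c⟩, ⟨m, hgcd, q1, q2, q3, q4, q5, q6, q7, q8, q9, h0, h4, p1, p2, p3, p5, hht⟩⟩ := p
  refine ⟨act b c m, ⟨prim_act hgcd, ht_act hht,
    MQ_act ⟨q1, q2, q3, q4, q5, q6, q7, q8, q9⟩,
    offL_of_x2 (by rw [act2]; exact mul_ne_zero (mul_ne_zero (sn_ne b) (sn_ne c)) (ne_of_gt p2))⟩,
    by rw [act0]; exact sn_mul_ne h0,
    by rw [act4]; exact mul_ne_zero (mul_ne_zero (sn_ne b) (sn_ne c)) h4⟩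

lemma gmap_val (B : ℝ) (p) : (gmap B p).1 = act p.1.1 p.1.2 p.2.1 := by
  rcases p with ⟨⟨b, c⟩, ⟨m, hgcd, q1, q2, q3, q4, q5, q6, q7, q8, q9, h0, h4, p1, p2, p3, p5, hht⟩⟩
  rfl

lemma sn_decide (P : Prop) [Decidable P] : sn (decide P) = if P then -1 else 1 := by
  simp [sn]

lemma pos_pos {a b : ℤ} (h : 0 < a * b) (ha : 0 < a) : 0 < b := by
  rcases lt_trichotomy b 0 with hb | hb | hb
  · exfalso; nlinarith
  · exfalso; rw [hb, mul_zero] at h; exact lt_irrefl 0 h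
  · exact hb

lemma neg_neg'' {a b : ℤ} (h : 0 < a * b) (ha : a < 0) : b < 0 := by
  have : 0 < -a * -b := by nlinarith
  have := pos_pos this (by linarith)
  linarith

lemma gmap_bij (B : ℝ) : Function.Bijective (gmap B) := by
  constructor
  · rintro ⟨⟨b1, c1⟩, m1, hm1⟩ ⟨⟨b2, c2⟩, m2, hm2⟩ h
    have hv : act b1 c1 m1 = act b2 c2 m2 := by
      have := congrArg Subtype.val h
      rwa [gmap_val, gmap_val] at this
    obtain ⟨-, -, -, -, -, -, -, -, -, -, -, -, p11, p12, -, -, -⟩ := hm1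
    obtain ⟨-, -, -, -, -, -, -, -, -, -, -, -, p21, p22, -, -, -⟩ := hm2
    have h1 := congrFun hv 1
    rw [act1, act1] at h1
    have hb : b1 = b2 := by
      cases b1 <;> cases b2 <;> first | rfl | (exfalso; simp [sn] at h1; omega)
    subst hb
    have h2 := congrFun hv 2
    rw [act2, act2] at h2
    have hc : c1 = c2 := by
      cases c1 <;> cases c2 <;>
        first | rfl | (exfalso; cases b1 <;> simp [sn] at h2 <;> omega)
    subst hc
    have hm : m1 = m2 := by
      have := congrArg (act b1 c1) hv
      rwa [act_act, act_act] at this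
    subst hm
    rfl
  · rintro ⟨g, ⟨hprim, hht, ⟨q1, q2, q3, q4, q5, q6, q7, q8, q9⟩, hoff⟩, h0, h4⟩
    have h13 : 0 < g 1 * g 3 := by
      have e0 : 0 < g 0 ^ 2 := (sq_nonneg _).lt_of_ne' (pow_ne_zero 2 h0)
      nlinarith [q1]
    have h35 : 0 < g 3 * g 5 := by
      have e0 : 0 < g 4 ^ 2 := (sq_nonneg _).lt_of_ne' (pow_ne_zero 2 h4)
      nlinarith [q6]
    have h1 : g 1 ≠ 0 := fun h => by rw [h] at h13; simp at h13
    have h3 : g 3 ≠ 0 := fun h => by rw [h] at h13; simp at h13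
    have h5 : g 5 ≠ 0 := fun h => by rw [h] at h35; simp at h35
    have h2 : g 2 ≠ 0 := by
      intro h
      have : g 0 * g 5 = 0 := by linear_combination q4 + g 4 * h
      exact mul_ne_zero h0 h5 this
    have h15 : 0 < g 1 * g 5 := by
      have hp := mul_pos h13 h35
      by_contra hle
      push_neg at hle
      nlinarith [sq_nonneg (g 3)]
    set b : Bool := decide (g 1 < 0) with hbdef
    set c : Bool := decide (g 1 * g 2 < 0) with hcdef
    have hMQ : MQ (act b c g) := MQ_act ⟨q1, q2, q3, q4, q5, q6, q7, q8, q9⟩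
    have m1pos : 0 < act b c g 1 := by
      rw [act1, hbdef, sn_decide]
      split_ifs with hx
      · linarith
      · push_neg at hx
        have : 0 < g 1 := lt_of_le_of_ne hx (Ne.symm h1)
        linarith
    have m2pos : 0 < act b c g 2 := by
      rw [act2, hbdef, hcdef, sn_decide, sn_decide]
      split_ifs with hx hy hy
      · have h' : 0 < -g 1 * g 2 := by linarith [neg_pos.mpr hy]
        have := pos_pos h' (by linarith)
        linarith
      · push_neg at hy
        have hy' : 0 < g 1 * g 2 := lt_of_le_of_ne hy (Ne.symm (mul_ne_zero h1 h2))
        have := neg_neg'' hy' hx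
        linarith
      · push_neg at hx
        have hx' : 0 < g 1 := lt_of_le_of_ne hx (Ne.symm h1)
        have h' : 0 < g 1 * -g 2 := by linarith [neg_pos.mpr hy]
        have := pos_pos h' hx'
        linarith
      · push_neg at hx hy
        have hx' : 0 < g 1 := lt_of_le_of_ne hx (Ne.symm h1)
        have hy' : 0 < g 1 * g 2 := lt_of_le_of_ne hy (Ne.symm (mul_ne_zero h1 h2))
        have := pos_pos hy' hx'
        linarith
    have m3pos : 0 < act b c g 3 := by
      rw [act3, hbdef, sn_decide]
      split_ifs with hx
      · have := neg_neg'' h13 hx; linarith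
      · push_neg at hx
        have hx' : 0 < g 1 := lt_of_le_of_ne hx (Ne.symm h1)
        have := pos_pos h13 hx'; linarith
    have m5pos : 0 < act b c g 5 := by
      rw [act5, hbdef, sn_decide]
      split_ifs with hx
      · have := neg_neg'' h15 hx; linarith
      · push_neg at hx
        have hx' : 0 < g 1 := lt_of_le_of_ne hx (Ne.symm h1)
        have := pos_pos h15 hx'; linarith
    refine ⟨⟨(b, c), ⟨act b c g, prim_act hprim, hMQ.1, hMQ.2.1, hMQ.2.2.1, hMQ.2.2.2.1,
      hMQ.2.2.2.2.1, hMQ.2.2.2.2.2.1, hMQ.2.2.2.2.2.2.1, hMQ.2.2.2.2.2.2.2.1,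
      hMQ.2.2.2.2.2.2.2.2, ?_, ?_, m1pos, m2pos, m3pos, m5pos, ht_act hht⟩⟩, ?_⟩
    · rw [act0]; exact sn_mul_ne h0
    · rw [act4]; exact mul_ne_zero (mul_ne_zero (sn_ne b) (sn_ne c)) h4
    · apply Subtype.ext
      rw [gmap_val]
      exact act_act b c g

lemma cardG (B : ℝ) :
    Nat.card {x : V // PA' B x ∧ (x 0 ≠ 0 ∧ x 4 ≠ 0)} = 4 * Nat.card {x : V // PM B x} := by
  haveI : Finite {x : V // PM B x} :=
    finite_of_ht (fun x hx => hx.2.2.2.2.2.2.2.2.2.2.2.2.2.2.2.2)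
  rw [← Nat.card_eq_of_bijective _ (gmap_bij B), Nat.card_prod, Nat.card_prod,
    Nat.card_eq_fintype_card (α := Bool), Fintype.card_bool]


lemma D_facts {B : ℝ} {x : V} (hx : PA' B x ∧ (x 0 = 0 ∨ x 4 = 0)) :
    x 0 = 0 ∧ x 6 = 0 ∧ (x 1 = 0 → x 2 = 0) ∧ (x 1 ≠ 0 → x 3 = 0 ∧ x 4 = 0) ∧
      (x 1 + x 3) * x 5 = (x 2 + x 4) ^ 2 := by
  obtain ⟨⟨hprim, hht, ⟨q1, q2, q3, q4, q5, q6, q7, q8, q9⟩, l1, l2, l3⟩, hcase⟩ := hx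
  have hx0 : x 0 = 0 := by
    by_contra h0
    have h4 : x 4 = 0 := by
      rcases hcase with h | h
      · exact absurd h h0
      · exact h
    have h2 : x 2 = 0 := by
      have e : x 0 * x 2 = 0 := by linear_combination q3 + x 1 * h4
      exact (mul_eq_zero.mp e).resolve_left h0
    have h5 : x 5 = 0 := by
      have e : x 0 * x 5 = 0 := by linear_combination q4 + x 2 * h4
      exact (mul_eq_zero.mp e).resolve_left h0
    have h3 : x 3 - x 0 = 0 := by
      have e : x 0 * (x 0 - x 3) = 0 := by linear_combination q7 - x 6 * h4
      have := (mul_eq_zero.mp e).resolve_left h0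
      linarith
    have h1 : x 1 - x 0 = 0 := by
      have e : x 0 * (x 0 - x 1) = 0 := by linear_combination q8 + x 6 * h2
      have := (mul_eq_zero.mp e).resolve_left h0
      linarith
    exact l3 ⟨h2, h4, h5, h3, h1⟩
  have imp1 : x 1 = 0 → x 2 = 0 := fun h => by
    have e : x 2 ^ 2 = 0 := by linear_combination -q5 + x 5 * h
    exact pow_eq_zero_iff two_ne_zero |>.mp e
  have imp2 : x 1 ≠ 0 → x 3 = 0 ∧ x 4 = 0 := fun h => by
    have e13 : x 1 * x 3 = 0 := by linear_combination -q1 + x 0 * hx0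
    have h3 : x 3 = 0 := (mul_eq_zero.mp e13).resolve_left h
    have e4 : x 4 ^ 2 = 0 := by linear_combination -q6 + x 5 * h3
    exact ⟨h3, pow_eq_zero_iff two_ne_zero |>.mp e4⟩
  have hx6 : x 6 = 0 := by
    by_contra h6
    have e13 : x 1 * x 3 = 0 := by linear_combination -q1 + x 0 * hx0
    rcases mul_eq_zero.mp e13 with h1 | h3
    · have h2 := imp1 h1
      have h4 : x 4 = 0 := by
        have e : x 4 * x 6 = 0 := by linear_combination q7 + (x 3 - x 0) * hx0
        exact (mul_eq_zero.mp e).resolve_right h6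
      have h5 : x 5 = 0 := by
        have e : x 5 * x 6 = 0 := by linear_combination q9 + (x 4 - x 2) * hx0
        exact (mul_eq_zero.mp e).resolve_right h6
      exact l1 ⟨hx0, h1, h2, h4, h5⟩
    · have h4 : x 4 = 0 := by
        have e : x 4 ^ 2 = 0 := by linear_combination -q6 + x 5 * h3
        exact pow_eq_zero_iff two_ne_zero |>.mp e
      have h2 : x 2 = 0 := by
        have e : x 2 * x 6 = 0 := by linear_combination -q8 + (x 0 - x 1) * hx0
        exact (mul_eq_zero.mp e).resolve_right h6
      have h5 : x 5 = 0 := by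
        have e : x 5 * x 6 = 0 := by linear_combination q9 + (x 4 - x 2) * hx0
        exact (mul_eq_zero.mp e).resolve_right h6
      exact l2 ⟨hx0, h2, h3, h4, h5⟩
  have huvw : (x 1 + x 3) * x 5 = (x 2 + x 4) ^ 2 := by
    by_cases h1 : x 1 = 0
    · have h2 := imp1 h1
      linear_combination q6 + x 5 * h1 - (x 2 + 2 * x 4) * h2
    · obtain ⟨h3, h4⟩ := imp2 h1
      linear_combination q5 + x 5 * h3 - (2 * x 2 + x 4) * h4
  exact ⟨hx0, hx6, imp1, imp2, huvw⟩

lemma D_gcd {B : ℝ} {x : V} (hx : PA' B x ∧ (x 0 = 0 ∨ x 4 = 0)) :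
    Nat.gcd (x 1 + x 3).natAbs (Nat.gcd (x 2 + x 4).natAbs (x 5).natAbs) = 1 := by
  obtain ⟨hx0, hx6, imp1, imp2, -⟩ := D_facts hx
  have hprim : Prim x := hx.1.1
  set g := Nat.gcd (x 1 + x 3).natAbs (Nat.gcd (x 2 + x 4).natAbs (x 5).natAbs) with hg
  have hu : g ∣ (x 1 + x 3).natAbs := Nat.gcd_dvd_left _ _
  have hv : g ∣ (x 2 + x 4).natAbs :=
    (Nat.gcd_dvd_right _ _).trans (Nat.gcd_dvd_left _ _)
  have hw : g ∣ (x 5).natAbs :=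
    (Nat.gcd_dvd_right _ _).trans (Nat.gcd_dvd_right _ _)
  have hall : ∀ i : Fin 7, g ∣ (x i).natAbs := by
    intro i
    by_cases h1 : x 1 = 0
    · have h2 := imp1 h1
      have e3 : x 1 + x 3 = x 3 := by rw [h1, zero_add]
      have e4 : x 2 + x 4 = x 4 := by rw [h2, zero_add]
      fin_cases i
      · show g ∣ (x 0).natAbs; rw [hx0]; simp
      · show g ∣ (x 1).natAbs; rw [h1]; simp
      · show g ∣ (x 2).natAbs; rw [h2]; simp
      · show g ∣ (x 3).natAbs; rw [← e3]; exact hu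
      · show g ∣ (x 4).natAbs; rw [← e4]; exact hv
      · show g ∣ (x 5).natAbs; exact hw
      · show g ∣ (x 6).natAbs; rw [hx6]; simp
    · obtain ⟨h3, h4⟩ := imp2 h1
      have e1 : x 1 + x 3 = x 1 := by rw [h3, add_zero]
      have e2 : x 2 + x 4 = x 2 := by rw [h4, add_zero]
      fin_cases i
      · show g ∣ (x 0).natAbs; rw [hx0]; simp
      · show g ∣ (x 1).natAbs; rw [← e1]; exact hu
      · show g ∣ (x 2).natAbs; rw [← e2]; exact hv
      · show g ∣ (x 3).natAbs; rw [h3]; simp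
      · show g ∣ (x 4).natAbs; rw [h4]; simp
      · show g ∣ (x 5).natAbs; exact hw
      · show g ∣ (x 6).natAbs; rw [hx6]; simp
  have hdvd : g ∣ Finset.gcd Finset.univ (fun i => (x i).natAbs) :=
    Finset.dvd_gcd (fun i _ => hall i)
  rw [hprim] at hdvd
  exact Nat.dvd_one.mp hdvd

lemma sq_abs_of {u v w : ℤ} (h : u * w = v ^ 2)
    (hg : Nat.gcd u.natAbs (Nat.gcd v.natAbs w.natAbs) = 1) :
    (Nat.sqrt u.natAbs) ^ 2 = u.natAbs ∧ (Nat.sqrt w.natAbs) ^ 2 = w.natAbs ∧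
      v.natAbs = Nat.sqrt u.natAbs * Nat.sqrt w.natAbs := by
  have hab : u.natAbs * w.natAbs = v.natAbs ^ 2 := by
    rw [← Int.natAbs_mul, h, Int.natAbs_pow]
  have hgd : Nat.gcd u.natAbs w.natAbs ∣ v.natAbs := by
    rw [← Nat.pow_dvd_pow_iff two_ne_zero, ← hab]
    calc Nat.gcd u.natAbs w.natAbs ^ 2
        = Nat.gcd u.natAbs w.natAbs * Nat.gcd u.natAbs w.natAbs := sq _
      _ ∣ u.natAbs * w.natAbs := mul_dvd_mul (Nat.gcd_dvd_left _ _) (Nat.gcd_dvd_right _ _)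
  have hcop : Int.gcd u w = 1 := by
    have h1 : Nat.gcd u.natAbs w.natAbs ∣ 1 := by
      rw [← hg]
      exact Nat.dvd_gcd (Nat.gcd_dvd_left _ _) (Nat.dvd_gcd hgd (Nat.gcd_dvd_right _ _))
    exact Nat.dvd_one.mp h1
  obtain ⟨a0, ha⟩ := Int.sq_of_gcd_eq_one hcop h
  obtain ⟨b0, hb⟩ := Int.sq_of_gcd_eq_one (by rwa [Int.gcd_comm]) (by rwa [mul_comm])
  have hu : u.natAbs = a0.natAbs ^ 2 := by
    rcases ha with ha | ha <;> rw [ha] <;> simp [Int.natAbs_pow]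
  have hwn : w.natAbs = b0.natAbs ^ 2 := by
    rcases hb with hb | hb <;> rw [hb] <;> simp [Int.natAbs_pow]
  have su : Nat.sqrt u.natAbs ^ 2 = u.natAbs := by rw [hu, Nat.sqrt_eq']
  have sw : Nat.sqrt w.natAbs ^ 2 = w.natAbs := by rw [hwn, Nat.sqrt_eq']
  refine ⟨su, sw, ?_⟩
  have hv2 : v.natAbs ^ 2 = (Nat.sqrt u.natAbs * Nat.sqrt w.natAbs) ^ 2 := by
    rw [← hab, mul_pow, su, sw]
  exact Nat.pow_left_injective (by norm_num) hv2

noncomputable def K (B : ℝ) : ℕ := Nat.sqrt ⌊B⌋₊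

lemma natAbs_le_floor {B : ℝ} {z : ℤ} (h : |(z : ℝ)| ≤ B) : z.natAbs ≤ ⌊B⌋₊ := by
  apply Nat.le_floor
  calc (z.natAbs : ℝ) = |(z : ℝ)| := by rw [Nat.cast_natAbs, Int.cast_abs]
    _ ≤ B := h

lemma D_u_le {B : ℝ} {x : V} (hx : PA' B x ∧ (x 0 = 0 ∨ x 4 = 0)) :
    (x 1 + x 3).natAbs ≤ ⌊B⌋₊ ∧ (x 5).natAbs ≤ ⌊B⌋₊ := by
  obtain ⟨-, -, imp1, imp2, -⟩ := D_facts hx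
  have hht : Ht B x := hx.1.2.1
  constructor
  · by_cases h1 : x 1 = 0
    · have : x 1 + x 3 = x 3 := by rw [h1, zero_add]
      rw [this]; exact natAbs_le_floor (hht 3)
    · have : x 1 + x 3 = x 1 := by rw [(imp2 h1).1, add_zero]
      rw [this]; exact natAbs_le_floor (hht 1)
  · exact natAbs_le_floor (hht 5)

noncomputable def dmap (B : ℝ) (y : {x : V // PA' B x ∧ (x 0 = 0 ∨ x 4 = 0)}) :
    Bool × Bool × Bool × Bool × Fin (K B + 1) × Fin (K B + 1) :=
  (decide (y.1 1 = 0), decide (0 < y.1 1 + y.1 3), decide (0 < y.1 2 + y.1 4),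
   decide (0 < y.1 5),
   ⟨Nat.sqrt (y.1 1 + y.1 3).natAbs,
     Nat.lt_succ_of_le (Nat.sqrt_le_sqrt (D_u_le y.2).1)⟩,
   ⟨Nat.sqrt (y.1 5).natAbs,
     Nat.lt_succ_of_le (Nat.sqrt_le_sqrt (D_u_le y.2).2)⟩)

lemma recover_int {z1 z2 : ℤ} (e1 : z1.natAbs = z2.natAbs) (hp : 0 < z1 ↔ 0 < z2) :
    z1 = z2 := by omega

lemma dmap_inj (B : ℝ) : Function.Injective (dmap B) := by
  rintro ⟨x, hx⟩ ⟨y, hy⟩ h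
  obtain ⟨hx0, hx6, impx1, impx2, huvwx⟩ := D_facts hx
  obtain ⟨hy0, hy6, impy1, impy2, huvwy⟩ := D_facts hy
  obtain ⟨sux, swx, svx⟩ := sq_abs_of huvwx (D_gcd hx)
  obtain ⟨suy, swy, svy⟩ := sq_abs_of huvwy (D_gcd hy)
  simp only [dmap, Prod.mk.injEq, Fin.mk.injEq, decide_eq_decide] at h
  obtain ⟨htag, hpu, hpv, hpw, hru, hrw⟩ := h
  have eu : (x 1 + x 3).natAbs = (y 1 + y 3).natAbs := by
    rw [← sux, ← suy, hru]
  have ew : (x 5).natAbs = (y 5).natAbs := by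
    rw [← swx, ← swy, hrw]
  have ev : (x 2 + x 4).natAbs = (y 2 + y 4).natAbs := by
    rw [svx, svy, hru, hrw]
  have equ : x 1 + x 3 = y 1 + y 3 := recover_int eu hpu
  have eqv : x 2 + x 4 = y 2 + y 4 := recover_int ev hpv
  have eqw : x 5 = y 5 := recover_int ew hpw
  apply Subtype.ext
  funext i
  by_cases h1 : x 1 = 0
  · have h1y : y 1 = 0 := htag.mp h1
    have h2 := impx1 h1
    have h2y := impy1 h1y
    fin_cases i
    · show x 0 = y 0; omega
    · show x 1 = y 1; omega
    · show x 2 = y 2; omega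
    · show x 3 = y 3; omega
    · show x 4 = y 4; omega
    · show x 5 = y 5; omega
    · show x 6 = y 6; omega
  · have h1y : y 1 ≠ 0 := fun hz => h1 (htag.mpr hz)
    obtain ⟨h3, h4⟩ := impx2 h1
    obtain ⟨h3y, h4y⟩ := impy2 h1y
    fin_cases i
    · show x 0 = y 0; omega
    · show x 1 = y 1; omega
    · show x 2 = y 2; omega
    · show x 3 = y 3; omega
    · show x 4 = y 4; omega
    · show x 5 = y 5; omega
    · show x 6 = y 6; omega

lemma cardD_le (B : ℝ) (hB : 1 ≤ B) :
    (Nat.card {x : V // PA' B x ∧ (x 0 = 0 ∨ x 4 = 0)} : ℝ) ≤ 64 * B := by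
  have hcard : Nat.card {x : V // PA' B x ∧ (x 0 = 0 ∨ x 4 = 0)} ≤
      Nat.card (Bool × Bool × Bool × Bool × Fin (K B + 1) × Fin (K B + 1)) :=
    Nat.card_le_card_of_injective _ (dmap_inj B)
  have hT : Nat.card (Bool × Bool × Bool × Bool × Fin (K B + 1) × Fin (K B + 1)) =
      16 * ((K B + 1) * (K B + 1)) := by
    simp only [Nat.card_eq_fintype_card, Fintype.card_prod, Fintype.card_bool,
      Fintype.card_fin]
    ring
  have hn1 : 1 ≤ ⌊B⌋₊ := Nat.le_floor (by exact_mod_cast hB)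
  have hKB : ((K B : ℝ) + 1) * ((K B : ℝ) + 1) ≤ 4 * B := by
    have a1 : ((K B : ℝ)) ^ 2 ≤ (⌊B⌋₊ : ℝ) := by exact_mod_cast Nat.sqrt_le' ⌊B⌋₊
    have a2 : (K B : ℝ) ≤ (⌊B⌋₊ : ℝ) := by exact_mod_cast Nat.sqrt_le_self ⌊B⌋₊
    have a3 : (⌊B⌋₊ : ℝ) ≤ B := Nat.floor_le (by linarith)
    have a4 : (1 : ℝ) ≤ (⌊B⌋₊ : ℝ) := by exact_mod_cast hn1
    nlinarith
  have hc2 : (Nat.card {x : V // PA' B x ∧ (x 0 = 0 ∨ x 4 = 0)} : ℝ) ≤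
      16 * (((K B : ℝ) + 1) * ((K B : ℝ) + 1)) := by
    rw [hT] at hcard
    exact_mod_cast hcard
  nlinarith

end S17

theorem stmt_17 :
    ∃ C : ℝ, ∀ B : ℝ, 1 ≤ B →
      |(1 / 2 : ℝ) * (Nat.card {x : Fin 7 → ℤ //
            Finset.gcd Finset.univ (fun i => (x i).natAbs) = 1 ∧
            (∀ i, |(x i : ℝ)| ≤ B) ∧
            x 0 ^ 2 - x 1 * x 3 = 0 ∧
            x 0 * x 4 - x 2 * x 3 = 0 ∧
            x 0 * x 2 - x 1 * x 4 = 0 ∧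
            x 0 * x 5 - x 2 * x 4 = 0 ∧
            x 1 * x 5 - x 2 ^ 2 = 0 ∧
            x 3 * x 5 - x 4 ^ 2 = 0 ∧
            x 0 ^ 2 + x 0 * x 3 + x 4 * x 6 = 0 ∧
            x 0 * x 1 + x 0 ^ 2 + x 2 * x 6 = 0 ∧
            x 0 * x 2 + x 0 * x 4 + x 5 * x 6 = 0 ∧
            ¬ (x 0 = 0 ∧ x 1 = 0 ∧ x 2 = 0 ∧ x 4 = 0 ∧ x 5 = 0) ∧
            ¬ (x 0 = 0 ∧ x 2 = 0 ∧ x 3 = 0 ∧ x 4 = 0 ∧ x 5 = 0) ∧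
            ¬ (x 2 = 0 ∧ x 4 = 0 ∧ x 5 = 0 ∧ x 0 + x 3 = 0 ∧ x 0 + x 1 = 0)} : ℝ)
          - 2 * (Nat.card {x : Fin 7 → ℤ //
            Finset.gcd Finset.univ (fun i => (x i).natAbs) = 1 ∧
            x 0 ^ 2 - x 1 * x 3 = 0 ∧
            x 0 * x 4 - x 2 * x 3 = 0 ∧
            x 0 * x 2 - x 1 * x 4 = 0 ∧
            x 0 * x 5 - x 2 * x 4 = 0 ∧
            x 1 * x 5 - x 2 ^ 2 = 0 ∧
            x 3 * x 5 - x 4 ^ 2 = 0 ∧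
            x 0 ^ 2 - x 0 * x 3 + x 4 * x 6 = 0 ∧
            x 0 ^ 2 - x 0 * x 1 - x 2 * x 6 = 0 ∧
            x 0 * x 2 - x 0 * x 4 + x 5 * x 6 = 0 ∧
            x 0 ≠ 0 ∧ x 4 ≠ 0 ∧ 0 < x 1 ∧ 0 < x 2 ∧ 0 < x 3 ∧ 0 < x 5 ∧
            (∀ i, |(x i : ℝ)| ≤ B)} : ℝ)|
        ≤ C * B := by
  refine ⟨32, fun B hB => ?_⟩
  haveI hA'fin : Finite {x : S17.V // S17.PA' B x} :=
    S17.finite_of_ht (fun x hx => hx.2.1)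
  haveI hGfin : Finite {x : S17.V // S17.PA' B x ∧ (x 0 ≠ 0 ∧ x 4 ≠ 0)} :=
    S17.finite_of_ht (fun x hx => hx.1.2.1)
  haveI hDfin : Finite {x : S17.V // S17.PA' B x ∧ (x 0 = 0 ∨ x 4 = 0)} :=
    S17.finite_of_ht (fun x hx => hx.1.2.1)
  have hsplit : Nat.card {x : S17.V // S17.PA' B x} =
      Nat.card {x : S17.V // S17.PA' B x ∧ (x 0 ≠ 0 ∧ x 4 ≠ 0)} +
      Nat.card {x : S17.V // S17.PA' B x ∧ (x 0 = 0 ∨ x 4 = 0)} := by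
    rw [Nat.card_congr (S17.splitEquiv (S17.PA' B)), Nat.card_sum]
  have hA := S17.cardA_eq B
  have hG := S17.cardG B
  have hD := S17.cardD_le B hB
  show |(1 / 2 : ℝ) * (Nat.card {x : S17.V // S17.PA B x} : ℝ) -
      2 * (Nat.card {x : S17.V // S17.PM B x} : ℝ)| ≤ 32 * B
  have key : (Nat.card {x : S17.V // S17.PA B x} : ℝ) =
      4 * (Nat.card {x : S17.V // S17.PM B x} : ℝ) +
      (Nat.card {x : S17.V // S17.PA' B x ∧ (x 0 = 0 ∨ x 4 = 0)} : ℝ) := by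
    rw [hA, hsplit, hG]
    push_cast
    ring
  rw [key, show (1 / 2 : ℝ) *
      (4 * (Nat.card {x : S17.V // S17.PM B x} : ℝ) +
        (Nat.card {x : S17.V // S17.PA' B x ∧ (x 0 = 0 ∨ x 4 = 0)} : ℝ)) -
      2 * (Nat.card {x : S17.V // S17.PM B x} : ℝ) =
      (Nat.card {x : S17.V // S17.PA' B x ∧ (x 0 = 0 ∨ x 4 = 0)} : ℝ) / 2 from by ring,
    abs_of_nonneg (by positivity)]
  linarith
end
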